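/- arXiv:1806.10424 — 5 statements merged into one kernel-verified Lean document; each statement's English description precedes it below -/
import Mathlib

section
/- Let G be a connected (finite simple) graph of order n and independence number α with α < n. If some vertex u of G is contained in no maximum independent set of G, then ♯α(G) ≤ f(n,α), with equality if and only if G belongs to ℱ(n,α). -/
open Finset

/-- A finset of vertices is independent in `G`: pairwise non-adjacent. -/
def IsIndepFinset {V : Type*} (G : SimpleGraph V) (s : Finset V) : Prop :=
  ∀ ⦃u⦄, u ∈ s → ∀ ⦃v⦄, v ∈ s → u ≠ v → ¬ G.Adj u v

/-- The independence number of a finite graph. -/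
noncomputable def indepNumber {V : Type*} [Fintype V] (G : SimpleGraph V) : ℕ :=
  sSup {k | ∃ s : Finset V, IsIndepFinset G s ∧ s.card = k}

/-- The number `♯α(G)` of maximum independent sets of `G`. -/
noncomputable def numMaxIndep {V : Type*} [Fintype V] (G : SimpleGraph V) : ℕ :=
  Set.ncard {s : Finset V | IsIndepFinset G s ∧ s.card = indepNumber G}

/-- The number `♯α(G,u)` of maximum independent sets of `G` containing `u`. -/
noncomputable def numMaxIndepOn {V : Type*} [Fintype V] (G : SimpleGraph V) (u : V) : ℕ :=
  Set.ncard {s : Finset V | IsIndepFinset G s ∧ s.card = indepNumber G ∧ u ∈ s}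

/-- `g(n,α) = ⌊n/α⌋^(α − n mod α) ⌈n/α⌉^(n mod α)`. -/
def gFun (n a : ℕ) : ℕ := (n / a) ^ (a - n % a) * ((n + a - 1) / a) ^ (n % a)

/-- `t(n,α) = ∏_{i=1}^{α−1} (|C_i| − 1)`, where `|C_i| = ⌊n/α⌋ + 1` for `i < n mod α`
and `|C_i| = ⌊n/α⌋` otherwise. -/
def tFun (n a : ℕ) : ℕ := ∏ i ∈ Finset.Ico 1 a, (n / a + (if i < n % a then 1 else 0) - 1)

/-- `f(n,α) = g(n−1,α) + t(n,α)`. -/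
def fFun (n a : ℕ) : ℕ := gFun (n - 1) a + tFun n a

/-- `G(n,α)`: complement of the Turán graph, i.e. the disjoint union of `α` cliques
(the residue classes mod `α`), each of order `⌈n/α⌉` or `⌊n/α⌋`. -/
def Ggraph (n a : ℕ) : SimpleGraph (Fin n) where
  Adj v w := v ≠ w ∧ v.val % a = w.val % a
  symm := by constructor; intro v w h; exact ⟨h.1.symm, h.2.symm⟩
  loopless := by constructor; intro v h; exact h.1 rfl

/-- `F(n,α)`: `G(n,α)` plus the edges `x₀x₁, …, x₀x_{α−1}`, where `x_i` is the vertex `i`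
of the clique `C_i` (the residue class of `i` mod `α`); `x₀ = 0` is the special cutvertex,
lying in the clique `C₀` of order `⌈n/α⌉`. -/
def Fgraph (n a : ℕ) : SimpleGraph (Fin n) where
  Adj v w := v ≠ w ∧
    (v.val % a = w.val % a ∨ (v.val = 0 ∧ w.val < a) ∨ (w.val = 0 ∧ v.val < a))
  symm := by constructor; intro v w h; exact ⟨h.1.symm, by tauto⟩
  loopless := by constructor; intro v h; exact h.1 rfl

/-- The family `ℱ(n,α)`, up to isomorphism: for `n ≥ 2α` it consists of `F(n,α)`,
together with the 5-cycle when `(n,α) = (5,2)`; for `n < 2α` it consists of all connected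
graphs `G` of order `n` and independence number `α` having a vertex `x₀` with
`G − x₀ ≅ G(n−1,α)`. -/
def memFamilyF {V : Type*} [Fintype V] (G : SimpleGraph V) (n a : ℕ) : Prop :=
  if 2 * a ≤ n then
    Nonempty (G ≃g Fgraph n a) ∨
      (n = 5 ∧ a = 2 ∧ Nonempty (G ≃g SimpleGraph.cycleGraph 5))
  else
    G.Connected ∧ Fintype.card V = n ∧ indepNumber G = a ∧
      ∃ x₀ : V, Nonempty ((G.induce ({x₀}ᶜ : Set V)) ≃g Ggraph (n - 1) a)


lemma pack_div {a q r : ℕ} (ha : 0 < a) (hr : r < a) : (a * q + r) / a = q := by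
  rw [Nat.mul_add_div ha, Nat.div_eq_of_lt hr, add_zero]

lemma pack_mod {a q r : ℕ} (hr : r < a) : (a * q + r) % a = r := by
  rw [Nat.mul_add_mod, Nat.mod_eq_of_lt hr]

lemma exists_qr {a : ℕ} (ha : 0 < a) (n : ℕ) : ∃ q r, r < a ∧ n = a * q + r :=
  ⟨n / a, n % a, Nat.mod_lt _ ha, (Nat.div_add_mod n a).symm⟩

lemma gFun_pack {a q r : ℕ} (ha : 0 < a) (hr : r < a) :
    gFun (a * q + r) a = q ^ (a - r) * (q + 1) ^ r := by
  rcases Nat.eq_zero_or_pos r with h | h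
  · subst h
    rw [gFun, pack_div ha hr, pack_mod hr]
    simp
  · have hceil : (a * q + r + a - 1) / a = q + 1 := by
      have : a * q + r + a - 1 = a * (q + 1) + (r - 1) := by ring_nf; omega
      rw [this, pack_div ha (by omega)]
    rw [gFun, pack_div ha hr, pack_mod hr, hceil]

lemma gFun_zero_right (n : ℕ) : gFun n 0 = if n = 0 then 1 else 0 := by
  rcases n with _ | n <;> simp [gFun]

lemma gFun_one (n : ℕ) : gFun n 1 = n := by
  simp [gFun, Nat.mod_one]

lemma gFun_self (a : ℕ) : gFun a a = 1 := by
  rcases Nat.eq_zero_or_pos a with h | h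
  · simp [h, gFun]
  · simp [gFun, Nat.div_self h, Nat.mod_self]

lemma gFun_of_lt {n a : ℕ} (h : n < a) : gFun n a = 0 := by
  have ha : 0 < a := by omega
  have : n = a * 0 + n := by omega
  rw [this, gFun_pack ha h]
  have : a - n ≠ 0 := by omega
  simp [this]

lemma gFun_le_one_of_zero (n : ℕ) : gFun n 0 ≤ 1 := by
  rw [gFun_zero_right]; split <;> simp

lemma gFun_mono {a : ℕ} (ha : 0 < a) {n m : ℕ} (hnm : n ≤ m) : gFun n a ≤ gFun m a := by
  induction m with
  | zero => simp_all
  | succ m ih =>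
    rcases Nat.lt_or_ge n (m+1) with h | h
    · refine le_trans (ih (by omega)) ?_
      obtain ⟨q, r, hr, hm⟩ := exists_qr ha m
      subst hm
      rcases Nat.lt_or_ge (r+1) a with h2 | h2
      · have : a * q + r + 1 = a * q + (r+1) := by ring
        rw [this, gFun_pack ha hr, gFun_pack ha h2]
        calc q ^ (a - r) * (q+1) ^ r
            = q * (q ^ (a - (r + 1)) * (q+1) ^ r) := by
              rw [← mul_assoc, ← pow_succ']
              congr 2
              omega
          _ ≤ (q+1) * (q ^ (a - (r + 1)) * (q+1) ^ r) := Nat.mul_le_mul_right _ (by omega)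
          _ = q ^ (a - (r+1)) * (q+1) ^ (r + 1) := by ring
      · have hr' : r = a - 1 := by omega
        have : a * q + r + 1 = a * (q+1) + 0 := by ring_nf; omega
        rw [this, gFun_pack ha hr, gFun_pack ha ha]
        simp only [pow_zero, mul_one]
        have h1 : a - r = 1 := by omega
        rw [h1, pow_one]
        calc q * (q+1)^r ≤ (q+1) * (q+1)^r := Nat.mul_le_mul_right _ (by omega)
          _ = (q+1)^(a - 0) := by rw [← pow_succ']; congr 1; omega
    · have : n = m + 1 := by omega
      subst this; rfl

lemma mul_split {a q : ℕ} (ha : 0 < a) : a * q = (a-1) * q + q := by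
  rw [Nat.sub_one_mul]
  have := Nat.le_mul_of_pos_left q ha
  omega

lemma mul_split' {a q : ℕ} (hq : 0 < q) : a * q = a * (q-1) + a := by
  cases q with
  | zero => omega
  | succ q => simp [Nat.mul_succ]

lemma ceil_pack0 {a q : ℕ} (ha : 0 < a) : (a * q + a - 1) / a = q := by
  have h2 : a * q + a - 1 = a * q + (a - 1) := by omega
  rw [h2, pack_div ha (by omega)]

lemma ceil_pack1 {a q r : ℕ} (h1 : 0 < r) (hr : r < a) :
    (a * q + r + a - 1) / a = q + 1 := by
  have ha : 0 < a := by omega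
  have h2 : a * q + r + a - 1 = a * (q + 1) + (r - 1) := by
    have : a * (q+1) = a * q + a := by simp [Nat.mul_succ]
    omega
  rw [h2, pack_div ha (by omega)]

/-- Key identity: g(n,a) = ⌈n/a⌉ · g(n − ⌈n/a⌉, a−1). -/
lemma gFun_rec {n a : ℕ} (ha : 1 ≤ a) (han : a ≤ n) :
    gFun n a = ((n + a - 1) / a) * gFun (n - (n + a - 1) / a) (a - 1) := by
  rcases Nat.lt_or_ge a 2 with ha2 | ha2
  · have : a = 1 := by omega
    subst this
    simp only [Nat.add_sub_cancel, Nat.div_one, gFun_one, Nat.sub_self]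
    rw [gFun_zero_right]
    simp
  · have ha0 : 0 < a := by omega
    have hb : 0 < a - 1 := by omega
    obtain ⟨q, r, hr, hn⟩ := exists_qr ha0 n
    subst hn
    have hsplit := mul_split (q := q) ha0
    rcases Nat.eq_zero_or_pos r with h | h
    · subst h
      have hq : 1 ≤ q := by
        rcases Nat.eq_zero_or_pos q with h | h
        · subst h; omega
        · exact h
      have hc : (a * q + 0 + a - 1) / a = q := by
        rw [show a * q + 0 + a - 1 = a * q + a - 1 by omega, ceil_pack0 ha0]
      rw [hc, gFun_pack ha0 ha0]
      have h3 : a * q + 0 - q = (a-1) * q + 0 := by omega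
      rw [h3, gFun_pack hb hb]
      simp only [Nat.sub_zero, pow_zero, mul_one]
      rw [← pow_succ']
      congr 1
      omega
    · have hc : (a * q + r + a - 1) / a = q + 1 := ceil_pack1 h hr
      rw [hc, gFun_pack ha0 hr]
      have h3 : a * q + r - (q + 1) = (a-1) * q + (r - 1) := by omega
      rw [h3, gFun_pack hb (by omega)]
      have e1 : a - 1 - (r - 1) = a - r := by omega
      rw [e1]
      rw [show (q+1) * (q ^ (a-r) * (q+1) ^ (r-1)) = q ^ (a-r) * ((q+1) ^ (r-1) * (q+1)) by ring,
        ← pow_succ]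
      congr 2
      omega

/-- Key identity: g(n−1,a) = (⌈n/a⌉ − 1) · g(n − ⌈n/a⌉, a−1). -/
lemma gFun_rec' {n a : ℕ} (ha : 1 ≤ a) (han : a ≤ n) :
    gFun (n - 1) a = ((n + a - 1) / a - 1) * gFun (n - (n + a - 1) / a) (a - 1) := by
  rcases Nat.lt_or_ge a 2 with ha2 | ha2
  · have : a = 1 := by omega
    subst this
    simp only [Nat.add_sub_cancel, Nat.div_one, gFun_one, Nat.sub_self]
    rw [gFun_zero_right]
    simp
  · have ha0 : 0 < a := by omega
    have hb : 0 < a - 1 := by omega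
    obtain ⟨q, r, hr, hn⟩ := exists_qr ha0 n
    subst hn
    have hsplit := mul_split (q := q) ha0
    rcases Nat.eq_zero_or_pos r with h | h
    · subst h
      have hq : 1 ≤ q := by
        rcases Nat.eq_zero_or_pos q with h | h
        · subst h; omega
        · exact h
      have hsplit' := mul_split' (a := a) hq
      have hc : (a * q + 0 + a - 1) / a = q := by
        rw [show a * q + 0 + a - 1 = a * q + a - 1 by omega, ceil_pack0 ha0]
      rw [hc]
      have h2 : a * q + 0 - 1 = a * (q - 1) + (a - 1) := by omega
      rw [h2, gFun_pack ha0 (by omega)]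
      have h3 : a * q + 0 - q = (a-1) * q + 0 := by omega
      rw [h3, gFun_pack hb hb]
      simp only [Nat.sub_zero, pow_zero, mul_one]
      have e1 : a - (a-1) = 1 := by omega
      have e2 : q - 1 + 1 = q := by omega
      rw [e1, pow_one, e2]
    · have hc : (a * q + r + a - 1) / a = q + 1 := ceil_pack1 h hr
      rw [hc]
      have h2 : a * q + r - 1 = a * q + (r - 1) := by omega
      rw [h2, gFun_pack ha0 (by omega)]
      have h3 : a * q + r - (q + 1) = (a-1) * q + (r - 1) := by omega
      rw [h3, gFun_pack hb (by omega)]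
      have e1 : a - 1 - (r - 1) = a - r := by omega
      have e2 : a - (r - 1) = (a - r) + 1 := by omega
      rw [e1, e2, Nat.add_sub_cancel, pow_succ]
      ring

/-- single-step ratio identity -/
lemma gFun_step {b : ℕ} (hb : 0 < b) (m : ℕ) :
    gFun (m+1) b * (m / b) = gFun m b * (m / b + 1) := by
  obtain ⟨q, r, hr, hm⟩ := exists_qr hb m
  subst hm
  rw [pack_div hb hr]
  rcases Nat.lt_or_ge (r+1) b with h2 | h2
  · have : b * q + r + 1 = b * q + (r + 1) := by omega
    rw [this, gFun_pack hb h2, gFun_pack hb hr]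
    have e1 : b - r = (b - (r+1)) + 1 := by omega
    rw [e1, pow_succ]
    ring
  · have hr' : r = b - 1 := by omega
    have : b * q + r + 1 = b * (q+1) + 0 := by
      have : b * (q+1) = b * q + b := by simp [Nat.mul_succ]
      omega
    rw [this, gFun_pack hb hb, gFun_pack hb hr]
    simp only [Nat.sub_zero, pow_zero, mul_one]
    have e1 : b - r = 1 := by omega
    have e2 : r + 1 = b := by omega
    rw [e1, pow_one, ← e2]
    ring

/-- iterated growth bound: g(m+i, b) ≤ (i+1)·g(m, b) for i ≤ m/b. -/
lemma gFun_growth {b : ℕ} (hb : 0 < b) (m : ℕ) :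
    ∀ i, i ≤ m / b → gFun (m + i) b ≤ (i + 1) * gFun m b := by
  intro i
  induction i with
  | zero => simp
  | succ i ih =>
    intro hi
    have hih := ih (by omega)
    have hq0 : 0 < m / b := by omega
    have hqi : m / b ≤ (m + i) / b := Nat.div_le_div_right (by omega)
    have hstep := gFun_step hb (m + i)
    -- gFun (m+i+1) b * ((m+i)/b) = gFun (m+i) b * ((m+i)/b + 1)
    have key : gFun (m + (i+1)) b * ((m+i)/b) ≤ ((i+2) * gFun m b) * ((m+i)/b) := by
      rw [show m + (i+1) = (m + i) + 1 by omega, hstep]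
      calc gFun (m+i) b * ((m+i)/b + 1) ≤ ((i+1) * gFun m b) * ((m+i)/b + 1) :=
            Nat.mul_le_mul_right _ hih
        _ ≤ ((i+2) * gFun m b) * ((m+i)/b) := by
            have h5 : (i+1) * ((m+i)/b + 1) ≤ (i+2) * ((m+i)/b) := by
              have : i + 1 ≤ (m+i)/b := by omega
              nlinarith
            calc (i+1) * gFun m b * ((m+i)/b + 1)
                = gFun m b * ((i+1) * ((m+i)/b + 1)) := by ring
              _ ≤ gFun m b * ((i+2) * ((m+i)/b)) := Nat.mul_le_mul_left _ h5
              _ = (i+2) * gFun m b * ((m+i)/b) := by ring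
    have hpos : 0 < (m+i)/b := by omega
    exact Nat.le_of_mul_le_mul_right key hpos

/-- L2 : g(n−1, a−1) ≤ g(n, a). -/
lemma gFun_pred_le {n a : ℕ} (ha : 1 ≤ a) (han : a ≤ n) :
    gFun (n-1) (a-1) ≤ gFun n a := by
  rcases Nat.lt_or_ge a 2 with ha2 | ha2
  · have : a = 1 := by omega
    subst this
    simp only [Nat.sub_self]
    rw [gFun_one]
    rcases Nat.eq_zero_or_pos (n-1) with h | h
    · rw [h, gFun_zero_right]; simp; omega
    · rw [gFun_zero_right]
      have : ¬ (n - 1 = 0) := by omega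
      simp [this]
  · rcases Nat.eq_or_lt_of_le han with h | h
    · subst h
      rw [gFun_self, gFun_self]
    · -- a ≥ 2, n ≥ a+1
      have ha0 : 0 < a := by omega
      have hb : 0 < a - 1 := by omega
      set c := (n + a - 1) / a with hc
      have hcle : a * c ≤ n + a - 1 := by
        rw [hc, mul_comm]; exact Nat.div_mul_le_self _ _
      have hc2 : 2 ≤ c := by
        rw [hc]
        have : (a + (a + 1) - 1) / a ≤ (n + a - 1)/a := Nat.div_le_div_right (by omega)
        have h2 : (a + (a+1) - 1) / a = 2 := by
          rw [show a + (a+1) - 1 = a * 2 + 0 by omega, pack_div ha0 ha0]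
        omega
      have hclen : a * (c-1) ≤ n - 1 := by
        have := Nat.mul_div_le (n + a - 1) a
        have h3 : a * (c-1) = a * c - a := by
          rcases Nat.eq_zero_or_pos c with h | h
          · omega
          · exact (mul_split' h) ▸ (by omega)
        omega
      -- q₀ := (n-c)/(a-1) ≥ c-1
      have h4 : (a-1) * (c-1) = a * (c-1) - (c-1) := by
        rw [Nat.sub_one_mul]
      have h5 : c - 1 ≤ a * (c - 1) := Nat.le_mul_of_pos_left _ ha0
      have h6 : c ≤ n := by omega
      have hq0 : c - 1 ≤ (n - c) / (a-1) := by
        apply Nat.le_div_iff_mul_le hb |>.mpr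
        rw [mul_comm]
        omega
      have hn1 : n - 1 = (n - c) + (c - 1) := by omega
      calc gFun (n-1) (a-1) = gFun ((n-c) + (c-1)) (a-1) := by rw [hn1]
        _ ≤ ((c-1) + 1) * gFun (n-c) (a-1) := gFun_growth hb _ _ hq0
        _ = c * gFun (n-c) (a-1) := by congr 1; omega
        _ = gFun n a := (gFun_rec ha (by omega)).symm

/-- L3 : g(n−1,a) + g(n−c, a−1) = g(n,a), c = ⌈n/a⌉. -/
lemma gFun_sum {n a : ℕ} (ha : 1 ≤ a) (han : a ≤ n) :
    gFun (n-1) a + gFun (n - (n + a - 1) / a) (a-1) = gFun n a := by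
  rw [gFun_rec ha han, gFun_rec' ha han]
  have hc : 1 ≤ (n + a - 1) / a := by
    have : a * 1 + 0 ≤ n + a - 1 := by omega
    calc 1 = (a * 1 + 0) / a := by rw [pack_div (by omega) (by omega)]
      _ ≤ (n + a - 1) / a := Nat.div_le_div_right (by omega)
  set c := (n + a - 1) / a
  rw [Nat.sub_one_mul]
  have : gFun (n - c) (a-1) ≤ c * gFun (n - c) (a-1) := Nat.le_mul_of_pos_left _ (by omega)
  omega

/-- glue : g(w, a−1) ≤ g(n, a) when w ≤ n−1. -/
lemma gFun_glue {w n a : ℕ} (ha : 1 ≤ a) (han : a ≤ n) (hw : w ≤ n - 1) :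
    gFun w (a-1) ≤ gFun n a := by
  rcases Nat.lt_or_ge a 2 with ha2 | ha2
  · have : a = 1 := by omega
    subst this
    simp only [Nat.sub_self]
    rw [gFun_one]
    calc gFun w 0 ≤ 1 := gFun_le_one_of_zero w
      _ ≤ n := by omega
  · calc gFun w (a-1) ≤ gFun (n-1) (a-1) := gFun_mono (by omega) hw
      _ ≤ gFun n a := gFun_pred_le ha han

/-- value in the 2-power range. -/
lemma gFun_two_pow {m a : ℕ} (h1 : a ≤ m) (h2 : m ≤ 2 * a) : gFun m a = 2 ^ (m - a) := by
  rcases Nat.eq_zero_or_pos a with h | h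
  · subst h
    have : m = 0 := by omega
    subst this
    simp [gFun]
  · rcases Nat.eq_or_lt_of_le h2 with h3 | h3
    · subst h3
      rw [show 2 * a = a * 2 + 0 by ring, gFun_pack h h]
      simp
      congr 1
      omega
    · rw [show m = a * 1 + (m - a) by omega, gFun_pack h (by omega)]
      simp only [one_pow, one_mul]
      congr 1
      omega

/-- g(2a−1, a−1) = 3·2^(a−2) for a ≥ 2. -/
lemma gFun_special {a : ℕ} (ha : 2 ≤ a) : gFun (2*a - 1) (a - 1) = 3 * 2 ^ (a - 2) := by
  rcases Nat.eq_or_lt_of_le ha with h | h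
  · subst h
    rfl
  · have hb : 0 < a - 1 := by omega
    have : 2*a - 1 = (a-1) * 2 + 1 := by omega
    rw [this, gFun_pack hb (by omega)]
    have e1 : a - 1 - 1 = a - 2 := by omega
    rw [e1, pow_one]
    ring

/-- ⌈m/a⌉ = 2 in the middle range. -/
lemma ceil_eq_two {m a : ℕ} (h1 : a < m) (h2 : m ≤ 2 * a) : (m + a - 1) / a = 2 := by
  have ha : 0 < a := by omega
  rw [show m + a - 1 = a * 2 + (m - a - 1) by omega, pack_div ha (by omega)]

lemma tFun_pos {n a : ℕ} (ha : 1 ≤ a) (h : 2 * a ≤ n) : 1 ≤ tFun n a := by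
  apply Finset.one_le_prod'
  intro i _
  have h2 : 2 ≤ n / a := (Nat.le_div_iff_mul_le (by omega)).mpr (by omega)
  split <;> omega

lemma tFun_eq_zero {n a : ℕ} (ha : 2 ≤ a) (h1 : a < n) (h2 : n < 2 * a) : tFun n a = 0 := by
  apply Finset.prod_eq_zero (i := a - 1) (by simp [Finset.mem_Ico]; omega)
  have hd : n / a = 1 := by
    rw [show n = a * 1 + (n - a) by omega, pack_div (by omega) (by omega)]
  have hm : n % a = n - a := by
    conv_lhs => rw [show n = a * 1 + (n - a) by omega]
    rw [pack_mod (by omega)]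
  rw [hd, hm, if_neg (by omega)]
  rfl


lemma fFun_eq_of_lt {n a : ℕ} (ha : 2 ≤ a) (h1 : a < n) (h2 : n < 2 * a) :
    fFun n a = 2 ^ (n - 1 - a) := by
  rw [fFun, tFun_eq_zero ha h1 h2, add_zero, gFun_two_pow (by omega) (by omega)]

section Counting

variable {V : Type*} [Fintype V] (G : SimpleGraph V)

open Classical in
/-- neighbours of `v` inside `W` -/
noncomputable def nbr (W : Finset V) (v : V) : Finset V := W.filter (G.Adj v)

open Classical in
/-- maximum size of an independent set inside `W` -/
noncomputable def mCard (W : Finset V) : ℕ :=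
  (W.powerset.filter (fun s => IsIndepFinset G s)).sup Finset.card

open Classical in
/-- the family of maximum independent sets inside `W` -/
noncomputable def mFam (W : Finset V) : Finset (Finset V) :=
  W.powerset.filter (fun s => IsIndepFinset G s ∧ s.card = mCard G W)

/-- the number of maximum independent sets inside `W` -/
noncomputable def mCount (W : Finset V) : ℕ := (mFam G W).card

variable {G}

lemma mem_mFam {W s : Finset V} :
    s ∈ mFam G W ↔ s ⊆ W ∧ IsIndepFinset G s ∧ s.card = mCard G W := by
  simp [mFam, Finset.mem_filter, Finset.mem_powerset, and_assoc]

lemma indep_subset {s t : Finset V} (hst : s ⊆ t) (ht : IsIndepFinset G t) :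
    IsIndepFinset G s := fun _ hu _ hv hne => ht (hst hu) (hst hv) hne

lemma indep_empty : IsIndepFinset G (∅ : Finset V) := by
  intro u hu
  simp at hu

lemma indep_singleton (v : V) : IsIndepFinset G ({v} : Finset V) := by
  intro u hu w hw hne
  simp only [Finset.mem_singleton] at hu hw
  subst hu; subst hw
  exact absurd rfl hne

lemma card_le_mCard {W s : Finset V} (hsW : s ⊆ W) (hs : IsIndepFinset G s) :
    s.card ≤ mCard G W := by
  classical
  apply Finset.le_sup
  simp only [Finset.mem_filter, Finset.mem_powerset]
  exact ⟨hsW, by convert hs⟩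

lemma exists_mFam (G : SimpleGraph V) (W : Finset V) : ∃ D, D ∈ mFam G W := by
  classical
  have hne : (W.powerset.filter (fun s => IsIndepFinset G s)).Nonempty :=
    ⟨∅, by simp [Finset.mem_filter, indep_empty]⟩
  obtain ⟨D, hD, hDs⟩ := Finset.exists_mem_eq_sup _ hne Finset.card
  simp only [Finset.mem_filter, Finset.mem_powerset] at hD
  refine ⟨D, mem_mFam.mpr ⟨hD.1, hD.2, ?_⟩⟩
  rw [mCard]
  convert hDs.symm using 2
lemma mCard_le_card (G : SimpleGraph V) (W : Finset V) : mCard G W ≤ W.card := by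
  obtain ⟨D, hD⟩ := exists_mFam G W
  rw [mem_mFam] at hD
  rw [← hD.2.2]
  exact Finset.card_le_card hD.1

lemma mCard_mono {W₁ W₂ : Finset V} (h : W₁ ⊆ W₂) : mCard G W₁ ≤ mCard G W₂ := by
  obtain ⟨D, hD⟩ := exists_mFam G W₁
  rw [mem_mFam] at hD
  rw [← hD.2.2]
  exact card_le_mCard (hD.1.trans h) hD.2.1

lemma mCard_pos {W : Finset V} (h : W.Nonempty) : 1 ≤ mCard G W := by
  obtain ⟨v, hv⟩ := h
  have := card_le_mCard (G := G) (Finset.singleton_subset_iff.mpr hv) (indep_singleton v)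
  simpa using this

end Counting

section CountingOps

open Classical

variable {V : Type*} [Fintype V] {G : SimpleGraph V} {W : Finset V} {u : V}

/-- `W` minus the closed neighbourhood of `u`. -/
noncomputable def avoid (G : SimpleGraph V) (W : Finset V) (u : V) : Finset V :=
  (W.erase u).filter (fun w => ¬ G.Adj u w)

lemma mem_avoid {w : V} : w ∈ avoid G W u ↔ w ∈ W ∧ w ≠ u ∧ ¬ G.Adj u w := by
  simp only [avoid, Finset.mem_filter, Finset.mem_erase]
  tauto

lemma avoid_subset_erase : avoid G W u ⊆ W.erase u := by
  intro w hw
  rw [mem_avoid] at hw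
  exact Finset.mem_erase.mpr ⟨hw.2.1, hw.1⟩

lemma avoid_card (hu : u ∈ W) :
    (avoid G W u).card = W.card - 1 - (nbr G W u).card := by
  classical
  have h1 : avoid G W u = (W.erase u) \ (nbr G W u) := by
    ext w
    simp only [mem_avoid, Finset.mem_sdiff, Finset.mem_erase, nbr, Finset.mem_filter]
    tauto
  have h2 : nbr G W u ⊆ W.erase u := by
    intro w hw
    simp only [nbr, Finset.mem_filter] at hw
    exact Finset.mem_erase.mpr ⟨fun h => G.loopless.irrefl u (h ▸ hw.2), hw.1⟩
  rw [h1, Finset.card_sdiff_of_subset h2, Finset.card_erase_of_mem hu]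

lemma insert_indep {s : Finset V} (h : ∀ w ∈ s, ¬ G.Adj u w)
    (hs : IsIndepFinset G s) : IsIndepFinset G (insert u s) := by
  intro x hx y hy hne
  rcases Finset.mem_insert.mp hx with rfl | hx'
  · rcases Finset.mem_insert.mp hy with rfl | hy'
    · exact absurd rfl hne
    · exact h y hy'
  · rcases Finset.mem_insert.mp hy with rfl | hy'
    · exact fun hadj => h x hx' (G.adj_symm hadj)
    · exact hs hx' hy' hne

lemma mCard_erase_of_avoid {D : Finset V} (hD : D ∈ mFam G W) (hDu : u ∉ D) :
    mCard G (W.erase u) = mCard G W := by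
  rw [mem_mFam] at hD
  refine le_antisymm (mCard_mono (Finset.erase_subset _ _)) ?_
  rw [← hD.2.2]
  exact card_le_mCard (Finset.subset_erase.mpr ⟨hD.1, hDu⟩) hD.2.1

lemma filter_not_mem_eq (h : mCard G (W.erase u) = mCard G W) :
    (mFam G W).filter (fun s => u ∉ s) = mFam G (W.erase u) := by
  ext s
  simp only [Finset.mem_filter, mem_mFam, Finset.subset_erase, h]
  tauto

lemma count_split (G : SimpleGraph V) (W : Finset V) (u : V) :
    mCount G W = ((mFam G W).filter (fun s => u ∉ s)).card +
      ((mFam G W).filter (fun s => u ∈ s)).card := by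
  classical
  rw [mCount, ← Finset.card_filter_add_card_filter_not (s := mFam G W)
    (p := fun s => u ∉ s)]
  congr 1
  · congr 1
    apply Finset.filter_congr
    intro s _
    simp

lemma mCard_avoid (hu : u ∈ W) {D : Finset V} (hD : D ∈ mFam G W) (hDu : u ∈ D) :
    mCard G (avoid G W u) = mCard G W - 1 := by
  rw [mem_mFam] at hD
  have hge : mCard G W - 1 ≤ mCard G (avoid G W u) := by
    have hsub : D.erase u ⊆ avoid G W u := by
      intro w hw
      obtain ⟨hwne, hwD⟩ := Finset.mem_erase.mp hw
      exact mem_avoid.mpr ⟨hD.1 hwD, hwne, hD.2.1 hDu hwD (fun h => hwne h.symm)⟩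
    have := card_le_mCard hsub (indep_subset (Finset.erase_subset _ _) hD.2.1)
    rw [Finset.card_erase_of_mem hDu, hD.2.2] at this
    exact this
  have hle : mCard G (avoid G W u) ≤ mCard G W - 1 := by
    obtain ⟨T, hT⟩ := exists_mFam G (avoid G W u)
    rw [mem_mFam] at hT
    have huT : u ∉ T := fun h => (Finset.mem_erase.mp (avoid_subset_erase (hT.1 h))).1 rfl
    have hins : IsIndepFinset G (insert u T) :=
      insert_indep (fun w hw => (mem_avoid.mp (hT.1 hw)).2.2) hT.2.1
    have hsub : insert u T ⊆ W :=
      Finset.insert_subset hu (hT.1.trans ((avoid_subset_erase).trans (Finset.erase_subset _ _)))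
    have := card_le_mCard hsub hins
    rw [Finset.card_insert_of_notMem huT] at this
    omega
  omega

lemma count_mem_eq (hu : u ∈ W) {D : Finset V} (hD : D ∈ mFam G W) (hDu : u ∈ D) :
    ((mFam G W).filter (fun s => u ∈ s)).card = mCount G (avoid G W u) := by
  classical
  have hα := mCard_avoid hu hD hDu
  have hα1 : 1 ≤ mCard G W := mCard_pos ⟨u, hu⟩
  rw [mCount]
  apply Finset.card_bij (fun s _ => s.erase u)
  · intro s hs
    rw [Finset.mem_filter, mem_mFam] at hs
    obtain ⟨⟨hsW, hind, hcard⟩, hus⟩ := hs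
    rw [mem_mFam]
    refine ⟨?_, indep_subset (Finset.erase_subset _ _) hind, ?_⟩
    · intro w hw
      obtain ⟨hwne, hwD⟩ := Finset.mem_erase.mp hw
      exact mem_avoid.mpr ⟨hsW hwD, hwne, hind hus hwD (fun h => hwne h.symm)⟩
    · rw [Finset.card_erase_of_mem hus, hcard, hα]
  · intro s hs t ht hst
    rw [Finset.mem_filter] at hs ht
    ext x
    by_cases hx : x = u
    · subst hx; simp [hs.2, ht.2]
    · constructor
      · intro h
        have : x ∈ s.erase u := Finset.mem_erase.mpr ⟨hx, h⟩
        rw [hst] at this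
        exact (Finset.mem_erase.mp this).2
      · intro h
        have : x ∈ t.erase u := Finset.mem_erase.mpr ⟨hx, h⟩
        rw [← hst] at this
        exact (Finset.mem_erase.mp this).2
  · intro t ht
    rw [mem_mFam] at ht
    have hut : u ∉ t := fun h => (Finset.mem_erase.mp (avoid_subset_erase (ht.1 h))).1 rfl
    refine ⟨insert u t, ?_, ?_⟩
    · rw [Finset.mem_filter, mem_mFam]
      refine ⟨⟨Finset.insert_subset hu
        (ht.1.trans ((avoid_subset_erase).trans (Finset.erase_subset _ _))),
        insert_indep (fun w hw => (mem_avoid.mp (ht.1 hw)).2.2) ht.2.1, ?_⟩,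
        Finset.mem_insert_self _ _⟩
      rw [Finset.card_insert_of_notMem hut, ht.2.2, hα]
      omega
    · rw [Finset.erase_insert hut]

lemma exists_max_deg (hW : W.Nonempty) (G : SimpleGraph V) :
    ∃ v ∈ W, ∀ w ∈ W, (nbr G W w).card ≤ (nbr G W v).card := by
  obtain ⟨v, hv, hmax⟩ := Finset.exists_max_image W (fun v => (nbr G W v).card) hW
  exact ⟨v, hv, hmax⟩

lemma degree_sum_bound {D : Finset V} (hD : D ∈ mFam G W) {d : ℕ}
    (hd : ∀ w ∈ W, (nbr G W w).card ≤ d) :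
    W.card ≤ mCard G W * (d + 1) := by
  classical
  rw [mem_mFam] at hD
  have hdom : W ⊆ D.biUnion (fun v => insert v (nbr G W v)) := by
    intro w hw
    rw [Finset.mem_biUnion]
    by_cases hwD : w ∈ D
    · exact ⟨w, hwD, Finset.mem_insert_self _ _⟩
    · by_contra hcon
      push_neg at hcon
      have hnadj : ∀ v ∈ D, ¬ G.Adj w v := by
        intro v hv hadj
        exact hcon v hv (Finset.mem_insert.mpr (Or.inr (by
          simp only [nbr, Finset.mem_filter]
          exact ⟨hw, G.adj_symm hadj⟩)))
      have hind : IsIndepFinset G (insert w D) := insert_indep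
        (fun v hv hadj => hnadj v hv hadj) hD.2.1
      have := card_le_mCard (Finset.insert_subset hw hD.1) hind
      rw [Finset.card_insert_of_notMem hwD, hD.2.2] at this
      omega
  calc W.card ≤ (D.biUnion (fun v => insert v (nbr G W v))).card := Finset.card_le_card hdom
    _ ≤ ∑ v ∈ D, (insert v (nbr G W v)).card := Finset.card_biUnion_le
    _ ≤ ∑ v ∈ D, (d + 1) := by
        apply Finset.sum_le_sum
        intro v hv
        calc (insert v (nbr G W v)).card ≤ (nbr G W v).card + 1 := Finset.card_insert_le _ _
          _ ≤ d + 1 := by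
              have := hd v (hD.1 hv)
              omega
    _ = mCard G W * (d + 1) := by rw [Finset.sum_const, hD.2.2, smul_eq_mul]

end CountingOps

section MainInduction

open Classical

variable {V : Type*} [Fintype V]

lemma nbr_erase {G : SimpleGraph V} {W : Finset V} {u v : V} :
    nbr G (W.erase u) v = (nbr G W v).erase u := by
  ext w
  simp only [nbr, Finset.mem_filter, Finset.mem_erase]
  tauto

lemma nbr_subset_erase {G : SimpleGraph V} {W : Finset V} {v : V} :
    nbr G W v ⊆ W.erase v := by
  intro w hw
  simp only [nbr, Finset.mem_filter] at hw
  exact Finset.mem_erase.mpr ⟨fun h => G.loopless.irrefl v (h ▸ hw.2), hw.1⟩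

theorem auxMain (G : SimpleGraph V) :
    ∀ m : ℕ, ∀ W : Finset V, W.card = m →
      mCount G W ≤ gFun m (mCard G W) ∧
      (m ≤ 2 * mCard G W → mCount G W = gFun m (mCard G W) →
        ∀ v ∈ W, (nbr G W v).card ≤ 1) := by
  intro m
  induction m using Nat.strong_induction_on with
  | _ m ih =>
  intro W hW
  rcases Finset.eq_empty_or_nonempty W with rfl | hWne
  · simp only [Finset.card_empty] at hW
    subst hW
    have hα : mCard G (∅ : Finset V) = 0 := Nat.le_zero.mp (mCard_le_card G ∅)
    have hfam : mFam G (∅ : Finset V) = {∅} := by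
      ext s
      simp only [mem_mFam, Finset.subset_empty, Finset.mem_singleton, hα,
        Finset.card_eq_zero]
      constructor
      · tauto
      · rintro rfl
        exact ⟨rfl, indep_empty, rfl⟩
    rw [mCount, hfam, hα]
    constructor
    · simp [gFun]
    · intro _ _ v hv
      simp at hv
  · -- W nonempty
    obtain ⟨D, hD⟩ := exists_mFam G W
    have hDm := mem_mFam.mp hD
    set α := mCard G W with hαdef
    have hα1 : 1 ≤ α := mCard_pos hWne
    have hαm : α ≤ m := hW ▸ mCard_le_card G W
    have hm1 : 1 ≤ m := by
      obtain ⟨v, hv⟩ := hWne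
      have := Finset.card_pos.mpr ⟨v, hv⟩
      omega
    by_cases h1 : ∃ u ∈ W, ∀ s ∈ mFam G W, u ∉ s
    · -- Case 1 : a vertex in no maximum independent set
      obtain ⟨u, huW, hall⟩ := h1
      have hDu : u ∉ D := hall D hD
      have hce : mCard G (W.erase u) = α := mCard_erase_of_avoid hD hDu
      have hfe := filter_not_mem_eq (G := G) (W := W) (u := u) hce
      have hmem0 : (mFam G W).filter (fun s => u ∈ s) = ∅ := by
        apply Finset.filter_eq_empty_iff.mpr
        intro s hs
        exact hall s hs
      have hcnt : mCount G W = mCount G (W.erase u) := by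
        rw [count_split G W u, hmem0, hfe, mCount]
        simp
      have hcard' : (W.erase u).card = m - 1 := by
        rw [Finset.card_erase_of_mem huW, hW]
      have hIH := (ih (m-1) (by omega) (W.erase u) hcard').1
      rw [hce] at hIH
      have hαm1 : α ≤ m - 1 := by
        have : D ⊆ W.erase u := Finset.subset_erase.mpr ⟨hDm.1, hDu⟩
        have := Finset.card_le_card this
        rw [hDm.2.2, hcard'] at this
        exact this
      constructor
      · calc mCount G W = mCount G (W.erase u) := hcnt
          _ ≤ gFun (m-1) α := hIH
          _ ≤ gFun m α := gFun_mono (by omega) (by omega)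
      · intro h2a heq
        exfalso
        have e1 : gFun (m-1) α = 2 ^ (m - 1 - α) := gFun_two_pow hαm1 (by omega)
        have e2 : gFun m α = 2 ^ (m - α) := gFun_two_pow hαm h2a
        have hlt : (2:ℕ) ^ (m - 1 - α) < 2 ^ (m - α) :=
          Nat.pow_lt_pow_right (by norm_num) (by omega)
        have hup : mCount G W ≤ 2 ^ (m - 1 - α) := by
          rw [hcnt, ← e1]
          exact hIH
        have hdn : mCount G W = 2 ^ (m - α) := by rw [heq, e2]
        rw [hdn] at hup
        exact Nat.lt_irrefl _ (lt_of_le_of_lt hup hlt)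
    · push_neg at h1
      by_cases h2 : ∃ u ∈ W, ∀ s ∈ mFam G W, u ∈ s
      · -- Case 2 : a vertex in every maximum independent set
        obtain ⟨u, huW, hall⟩ := h2
        have hDu : u ∈ D := hall D hD
        set d := (nbr G W u).card with hddef
        have hmem0 : (mFam G W).filter (fun s => u ∉ s) = ∅ := by
          apply Finset.filter_eq_empty_iff.mpr
          intro s hs h
          exact h (hall s hs)
        have hcnt : mCount G W = mCount G (avoid G W u) := by
          rw [count_split G W u, hmem0, count_mem_eq huW hD hDu]
          simp
        have hαa : mCard G (avoid G W u) = α - 1 := mCard_avoid huW hD hDu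
        have hacard : (avoid G W u).card = m - 1 - d := by
          rw [avoid_card huW, hW]
        have hIH := (ih (m-1-d) (by omega) (avoid G W u) hacard).1
        rw [hαa] at hIH
        have hαa_le : α - 1 ≤ m - 1 - d := by
          have := mCard_le_card G (avoid G W u)
          rw [hαa, hacard] at this
          exact this
        have hdm : d ≤ m - 1 := by
          have h0 := Finset.card_le_card (nbr_subset_erase (G := G) (W := W) (v := u))
          rw [Finset.card_erase_of_mem huW, hW] at h0
          exact h0
        constructor
        · calc mCount G W = mCount G (avoid G W u) := hcnt
            _ ≤ gFun (m-1-d) (α-1) := hIH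
            _ ≤ gFun m α := gFun_glue hα1 hαm (by omega)
        · intro h2a heq
          have e2 : gFun m α = 2 ^ (m - α) := gFun_two_pow hαm h2a
          have hdn : mCount G W = 2 ^ (m - α) := by rw [heq, e2]
          -- first, d = 0
          have hd0 : d = 0 := by
            by_contra hd
            have hrange : m - 1 - d ≤ 2 * (α - 1) := by omega
            have e1 : gFun (m-1-d) (α-1) = 2 ^ (m - 1 - d - (α-1)) :=
              gFun_two_pow hαa_le hrange
            have hlt : (2:ℕ) ^ (m - 1 - d - (α-1)) < 2 ^ (m - α) :=
              Nat.pow_lt_pow_right (by norm_num) (by omega)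
            have hup : mCount G W ≤ 2 ^ (m - 1 - d - (α-1)) := by
              rw [hcnt, ← e1]
              exact hIH
            rw [hdn] at hup
            exact Nat.lt_irrefl _ (lt_of_le_of_lt hup hlt)
          have hnone : nbr G W u = ∅ := by
            rw [← Finset.card_eq_zero, ← hddef, hd0]
          have havoid_eq : avoid G W u = W.erase u := by
            apply Finset.Subset.antisymm avoid_subset_erase
            intro w hw
            rw [Finset.mem_erase] at hw
            refine mem_avoid.mpr ⟨hw.2, hw.1, fun hadj => ?_⟩
            have : w ∈ nbr G W u := by
              simp only [nbr, Finset.mem_filter]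
              exact ⟨hw.2, hadj⟩
            rw [hnone] at this
            simp at this
          have hpos : 0 < mCount G W := by
            have : (0:ℕ) < 2 ^ (m - α) := Nat.pow_pos (by norm_num)
            omega
          -- next, m ≤ 2α - 1
          have hm2a : m ≤ 2 * α - 1 := by
            by_contra hm2
            have hmeq : m = 2 * α := by omega
            have hup : mCount G W ≤ gFun (m-1-d) (α-1) := hcnt ▸ hIH
            rcases Nat.lt_or_ge α 2 with hα2 | hα2
            · -- α = 1, m = 2
              have hz : gFun (m-1-d) (α-1) = 0 := by
                have hα1' : α - 1 = 0 := by omega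
                rw [hd0, hα1', gFun_zero_right]
                rw [if_neg (by omega)]
              rw [hz] at hup
              omega
            · have e1 : gFun (m-1-d) (α-1) = 3 * 2 ^ (α - 2) := by
                rw [hd0, Nat.sub_zero, hmeq]
                exact gFun_special hα2
              have hlt : 3 * 2 ^ (α - 2) < 2 ^ (m - α) := by
                have h8 : (0:ℕ) < 2 ^ (α - 2) := Nat.pow_pos (by norm_num)
                have h10 : (2:ℕ) ^ (m - α) = 2 ^ (α - 2) * 4 := by
                  rw [show m - α = (α - 2) + 2 by omega, pow_add]
                  norm_num
                omega
              rw [e1] at hup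
              rw [hdn] at hup
              exact Nat.lt_irrefl _ (lt_of_le_of_lt hup hlt)
          -- apply the equality part of IH to W.erase u
          have hcard' : (W.erase u).card = m - 1 := by
            rw [Finset.card_erase_of_mem huW, hW]
          rw [havoid_eq] at hαa hcnt
          have heq' : mCount G (W.erase u) = gFun (m-1) (α-1) := by
            have er : gFun (m-1) (α-1) = 2 ^ ((m-1) - (α-1)) :=
              gFun_two_pow (by omega) (by omega)
            rw [er, ← hcnt, hdn]
            congr 1
            omega
          have hIH2 := (ih (m-1) (by omega) (W.erase u) hcard').2
          rw [hαa] at hIH2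
          have hdeg := hIH2 (by omega) heq'
          intro v hv
          by_cases hvu : v = u
          · subst hvu
            rw [← hddef, hd0]
            omega
          · have hv' : v ∈ W.erase u := Finset.mem_erase.mpr ⟨hvu, hv⟩
            have hle := hdeg v hv'
            rw [nbr_erase] at hle
            have hune : u ∉ nbr G W v := by
              intro hmem
              simp only [nbr, Finset.mem_filter] at hmem
              have : v ∈ nbr G W u := by
                simp only [nbr, Finset.mem_filter]
                exact ⟨hv, G.adj_symm hmem.2⟩
              rw [hnone] at this
              simp at this
            rwa [Finset.erase_eq_of_notMem hune] at hle
      · -- Case 3 : every vertex in some but not all maximum independent sets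
        push_neg at h2
        obtain ⟨v, hvW, hvmax⟩ := exists_max_deg hWne G
        set d := (nbr G W v).card with hddef
        have hdb : m ≤ α * (d + 1) := hW ▸ degree_sum_bound hD hvmax
        set c := (m + α - 1) / α with hcdef
        have hcd : c ≤ d + 1 := by
          rw [hcdef]
          rw [Nat.div_le_iff_le_mul_add_pred (by omega)]
          omega
        -- the split
        have hsplit := count_split G W v
        -- A-part
        obtain ⟨S, hS, hvS⟩ := h2 v hvW
        have hce : mCard G (W.erase v) = α := mCard_erase_of_avoid hS hvS
        have hfe := filter_not_mem_eq (G := G) (W := W) (u := v) hce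
        have hcard' : (W.erase v).card = m - 1 := by
          rw [Finset.card_erase_of_mem hvW, hW]
        have hIHA := (ih (m-1) (by omega) (W.erase v) hcard').1
        rw [hce] at hIHA
        have hA : ((mFam G W).filter (fun s => v ∉ s)).card ≤ gFun (m-1) α := by
          rw [hfe, ← mCount]
          exact hIHA
        -- B-part
        obtain ⟨S', hS', hvS'⟩ := h1 v hvW
        have hBeq := count_mem_eq hvW hS' hvS'
        have hαa : mCard G (avoid G W v) = α - 1 := mCard_avoid hvW hS' hvS'
        have hacard : (avoid G W v).card = m - 1 - d := by
          rw [avoid_card hvW, hW]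
        have hIHB := (ih (m-1-d) (by omega) (avoid G W v) hacard).1
        rw [hαa] at hIHB
        have hαa_le : α - 1 ≤ m - 1 - d := by
          have := mCard_le_card G (avoid G W v)
          rw [hαa, hacard] at this
          exact this
        have hdm : d ≤ m - 1 := by
          have h0 := Finset.card_le_card (nbr_subset_erase (G := G) (W := W) (v := v))
          rw [Finset.card_erase_of_mem hvW, hW] at h0
          exact h0
        have hB : ((mFam G W).filter (fun s => v ∈ s)).card ≤ gFun (m-1-d) (α-1) := by
          rw [hBeq]
          exact hIHB
        -- total bound
        have htotal : mCount G W ≤ gFun (m-1) α + gFun (m-1-d) (α-1) := by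
          rw [hsplit]
          exact Nat.add_le_add hA hB
        have hbound : mCount G W ≤ gFun m α := by
          rcases Nat.lt_or_ge α 2 with hα2 | hα2
          · -- α = 1
            have hα1' : α = 1 := by omega
            have h5 : gFun (m-1) α = m - 1 := by rw [hα1', gFun_one]
            have h6 : gFun (m-1-d) (α-1) ≤ 1 := by
              rw [hα1']
              exact gFun_le_one_of_zero _
            have h7 : gFun m α = m := by rw [hα1', gFun_one]
            omega
          · have h6 : gFun (m-1-d) (α-1) ≤ gFun (m-c) (α-1) :=
              gFun_mono (by omega) (by omega)
            have h8 := gFun_sum (n := m) (a := α) (by omega) hαm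
            rw [← hcdef] at h8
            omega
        refine ⟨hbound, ?_⟩
        intro h2a heq
        -- α < m
        have hαltm : α < m := by
          rcases Nat.eq_or_lt_of_le hαm with hmα | h
          · exfalso
            have hDW : D = W := Finset.eq_of_subset_of_card_le hDm.1 (by omega)
            obtain ⟨S0, hS0, hvS0⟩ := h2 v hvW
            have hS0m := mem_mFam.mp hS0
            have : S0 = W := Finset.eq_of_subset_of_card_le hS0m.1 (by
              rw [hS0m.2.2, hW, ← hmα])
            subst this
            exact hvS0 hvW
          · exact h
        have hc2 : c = 2 := by rw [hcdef]; exact ceil_eq_two hαltm h2a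
        have hd1 : 1 ≤ d := by omega
        -- show d ≤ 1
        have hdle : d ≤ 1 := by
          by_contra hd2
          have e2 : gFun m α = 2 ^ (m - α) := gFun_two_pow hαm h2a
          have eA : gFun (m-1) α = 2 ^ (m - 1 - α) := gFun_two_pow (by omega) (by omega)
          have eB : gFun (m-1-d) (α-1) = 2 ^ (m - 1 - d - (α-1)) :=
            gFun_two_pow hαa_le (by omega)
          have hup : mCount G W ≤ 2 ^ (m - 1 - α) + 2 ^ (m - 1 - d - (α - 1)) := by
            rw [eA] at hA
            rw [eB] at hB
            rw [hsplit]
            exact Nat.add_le_add hA hB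
          have hdn : mCount G W = 2 ^ (m - α) := by rw [heq, e2]
          rw [hdn] at hup
          have h9 : (2:ℕ) ^ (m - 1 - d - (α - 1)) ≤ 2 ^ (m - α - 2) :=
            Nat.pow_le_pow_right (by norm_num) (by omega)
          have h10 : (2:ℕ) ^ (m - α) = 2 ^ (m - α - 1) + 2 ^ (m - α - 1) := by
            rw [← two_mul, ← pow_succ']
            congr 1
            omega
          have h11 : (2:ℕ) ^ (m - 1 - α) ≤ 2 ^ (m - α - 1) :=
            Nat.pow_le_pow_right (by norm_num) (by omega)
          have h12 : (2:ℕ) ^ (m - α - 2) < 2 ^ (m - α - 1) :=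
            Nat.pow_lt_pow_right (by norm_num) (by omega)
          omega
        intro w hw
        calc (nbr G W w).card ≤ (nbr G W v).card := hvmax w hw
          _ ≤ 1 := hdle

end MainInduction

section MatchingCount

open Classical

variable {V : Type*} [Fintype V]

lemma nbr_mono {G : SimpleGraph V} {W' W : Finset V} (h : W' ⊆ W) (v : V) :
    nbr G W' v ⊆ nbr G W v := by
  intro w hw
  simp only [nbr, Finset.mem_filter] at hw ⊢
  exact ⟨h hw.1, hw.2⟩

lemma mem_nbr {G : SimpleGraph V} {W : Finset V} {v w : V} :
    w ∈ nbr G W v ↔ w ∈ W ∧ G.Adj v w := by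
  simp [nbr, Finset.mem_filter]

lemma nbr_eq_singleton {G : SimpleGraph V} {W : Finset V} {v z : V}
    (hdeg : (nbr G W v).card ≤ 1) (hz : z ∈ nbr G W v) : nbr G W v = {z} :=
  Finset.eq_singleton_iff_unique_mem.mpr
    ⟨hz, fun w hw => Finset.card_le_one.mp hdeg w hw z hz⟩

lemma matching_mem {G : SimpleGraph V} {W : Finset V} {v z : V}
    (hnb : nbr G W v = {z}) (hvW : v ∈ W) :
    ∃ s ∈ mFam G W, v ∈ s := by
  obtain ⟨D, hD⟩ := exists_mFam G W
  have hDm := mem_mFam.mp hD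
  have hadj : G.Adj v z := by
    have : z ∈ nbr G W v := by rw [hnb]; exact Finset.mem_singleton_self z
    exact (mem_nbr.mp this).2
  have hvz : v ≠ z := fun h => G.loopless.irrefl v (h ▸ hadj)
  by_cases hvD : v ∈ D
  · exact ⟨D, hD, hvD⟩
  · have hzD : z ∈ D := by
      by_contra hzD
      have hind : IsIndepFinset G (insert v D) := by
        apply insert_indep _ hDm.2.1
        intro w hw hadj'
        have : w ∈ nbr G W v := mem_nbr.mpr ⟨hDm.1 hw, hadj'⟩
        rw [hnb, Finset.mem_singleton] at this
        exact hzD (this ▸ hw)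
      have := card_le_mCard (Finset.insert_subset hvW hDm.1) hind
      rw [Finset.card_insert_of_notMem hvD, hDm.2.2] at this
      omega
    refine ⟨insert v (D.erase z), mem_mFam.mpr ⟨?_, ?_, ?_⟩, Finset.mem_insert_self _ _⟩
    · exact Finset.insert_subset hvW ((Finset.erase_subset _ _).trans hDm.1)
    · apply insert_indep _ (indep_subset (Finset.erase_subset _ _) hDm.2.1)
      intro w hw hadj'
      obtain ⟨hwz, hwD⟩ := Finset.mem_erase.mp hw
      have : w ∈ nbr G W v := mem_nbr.mpr ⟨hDm.1 hwD, hadj'⟩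
      rw [hnb, Finset.mem_singleton] at this
      exact hwz this
    · rw [Finset.card_insert_of_notMem
        (fun h => hvD (Finset.erase_subset _ _ h)),
        Finset.card_erase_of_mem hzD, hDm.2.2]
      have : 1 ≤ mCard G W := mCard_pos ⟨v, hvW⟩
      omega

/-- counting maximum independent sets in a graph of maximum degree at most one -/
theorem count_matching {G : SimpleGraph V} :
    ∀ m : ℕ, ∀ W : Finset V, W.card = m → (∀ w ∈ W, (nbr G W w).card ≤ 1) →
      mCount G W = 2 ^ (m - mCard G W) := by
  intro m
  induction m using Nat.strong_induction_on with
  | _ m ih =>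
  intro W hW hdeg
  by_cases hE : ∃ v ∈ W, ∃ z ∈ W, G.Adj v z
  · obtain ⟨v, hvW, z, hzW, hadj⟩ := hE
    have hm2 : 2 ≤ m := by
      have hsub : {v, z} ⊆ W := by
        intro x hx
        rcases Finset.mem_insert.mp hx with rfl | hx
        · exact hvW
        · rw [Finset.mem_singleton] at hx
          subst hx
          exact hzW
      have hvz : v ≠ z := fun h => G.loopless.irrefl v (h ▸ hadj)
      have := Finset.card_le_card hsub
      rw [Finset.card_insert_of_notMem (by simp [hvz]), Finset.card_singleton] at this
      omega
    have hnbv : nbr G W v = {z} := nbr_eq_singleton (hdeg v hvW) (mem_nbr.mpr ⟨hzW, hadj⟩)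
    have hnbz : nbr G W z = {v} := nbr_eq_singleton (hdeg z hzW) (mem_nbr.mpr ⟨hvW, G.adj_symm hadj⟩)
    set α := mCard G W with hαdef
    -- a MIS containing v, a MIS containing z (hence avoiding v)
    obtain ⟨s₁, hs₁, hvs₁⟩ := matching_mem hnbv hvW
    obtain ⟨s₂, hs₂, hzs₂⟩ := matching_mem hnbz hzW
    have hvs₂ : v ∉ s₂ := fun h =>
      (mem_mFam.mp hs₂).2.1 h hzs₂ (fun hh => G.loopless.irrefl v (hh ▸ hadj)) hadj
    -- split
    have hsplit := count_split G W v
    have hce : mCard G (W.erase v) = α := mCard_erase_of_avoid hs₂ hvs₂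
    have hfe := filter_not_mem_eq (G := G) (W := W) (u := v) hce
    have hαa : mCard G (avoid G W v) = α - 1 := mCard_avoid hvW hs₁ hvs₁
    have hBeq := count_mem_eq hvW hs₁ hvs₁
    have hd1 : (nbr G W v).card = 1 := by rw [hnbv]; simp
    have hacard : (avoid G W v).card = m - 2 := by
      rw [avoid_card hvW, hW, hd1]
      omega
    have hecard : (W.erase v).card = m - 1 := by
      rw [Finset.card_erase_of_mem hvW, hW]
    have hαle : α ≤ m - 1 := hce ▸ hecard ▸ mCard_le_card G (W.erase v)
    have hα1 : 1 ≤ α := mCard_pos ⟨v, hvW⟩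
    have hαle2 : α - 1 ≤ m - 2 := hαa ▸ hacard ▸ mCard_le_card G (avoid G W v)
    -- IH applications
    have hIHA := ih (m-1) (by omega) (W.erase v) hecard (by
      intro w hw
      calc (nbr G (W.erase v) w).card ≤ (nbr G W w).card :=
            Finset.card_le_card (nbr_mono (Finset.erase_subset _ _) w)
        _ ≤ 1 := hdeg w (Finset.erase_subset _ _ hw))
    have hIHB := ih (m-2) (by omega) (avoid G W v) hacard (by
      intro w hw
      calc (nbr G (avoid G W v) w).card ≤ (nbr G W w).card :=
            Finset.card_le_card (nbr_mono
              ((avoid_subset_erase).trans (Finset.erase_subset _ _)) w)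
        _ ≤ 1 := hdeg w ((avoid_subset_erase.trans (Finset.erase_subset _ _)) hw))
    rw [hce] at hIHA
    rw [hαa] at hIHB
    rw [hsplit, hfe, ← mCount, hIHA, hBeq, hIHB]
    have e1 : m - 1 - α = m - α - 1 := by omega
    have e2 : m - 2 - (α - 1) = m - α - 1 := by omega
    rw [e1, e2, ← two_mul, ← pow_succ']
    congr 1
    omega
  · -- no edges inside W : W is independent
    push_neg at hE
    have hind : IsIndepFinset G W := fun x hx y hy _ => hE x hx y hy
    have hα : mCard G W = W.card :=
      le_antisymm (mCard_le_card G W) (card_le_mCard Finset.Subset.rfl hind)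
    have hfam : mFam G W = {W} := by
      ext s
      simp only [mem_mFam, Finset.mem_singleton, hα]
      constructor
      · rintro ⟨hsub, _, hcard⟩
        exact Finset.eq_of_subset_of_card_le hsub (by omega)
      · rintro rfl
        exact ⟨Finset.Subset.rfl, hind, rfl⟩
    rw [mCount, hfam, hα, hW]
    simp

end MatchingCount

section Bridge

open Classical

variable {V : Type*} [Fintype V] {G : SimpleGraph V}

lemma indepSet_bdd (G : SimpleGraph V) :
    BddAbove {k | ∃ s : Finset V, IsIndepFinset G s ∧ s.card = k} := by
  refine ⟨Fintype.card V, ?_⟩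
  rintro k ⟨s, _, rfl⟩
  exact Finset.card_le_univ s

lemma exists_indep_card (G : SimpleGraph V) :
    ∃ s : Finset V, IsIndepFinset G s ∧ s.card = indepNumber G := by
  have := Nat.sSup_mem (s := {k | ∃ s : Finset V, IsIndepFinset G s ∧ s.card = k})
    ⟨0, ∅, indep_empty, rfl⟩ (indepSet_bdd G)
  obtain ⟨s, hs, hc⟩ := this
  exact ⟨s, hs, hc⟩

lemma card_le_indepNumber {s : Finset V} (hs : IsIndepFinset G s) :
    s.card ≤ indepNumber G :=
  le_csSup (indepSet_bdd G) ⟨s, hs, rfl⟩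

/-- bridge under an uncovered vertex `u` -/
lemma mCard_erase_univ {u : V}
    (hu : ∀ s : Finset V, IsIndepFinset G s → s.card = indepNumber G → u ∉ s) :
    mCard G (Finset.univ.erase u) = indepNumber G := by
  obtain ⟨D, hD, hDc⟩ := exists_indep_card G
  refine le_antisymm ?_ ?_
  · obtain ⟨T, hT⟩ := exists_mFam G (Finset.univ.erase u)
    have hTm := mem_mFam.mp hT
    rw [← hTm.2.2]
    exact card_le_indepNumber hTm.2.1
  · rw [← hDc]
    exact card_le_mCard (Finset.subset_erase.mpr ⟨Finset.subset_univ D, hu D hD hDc⟩) hD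

lemma numMaxIndep_eq_mCount {u : V}
    (hu : ∀ s : Finset V, IsIndepFinset G s → s.card = indepNumber G → u ∉ s) :
    numMaxIndep G = mCount G (Finset.univ.erase u) := by
  have hα := mCard_erase_univ hu
  rw [numMaxIndep]
  have hset : {s : Finset V | IsIndepFinset G s ∧ s.card = indepNumber G} =
      ↑(mFam G (Finset.univ.erase u)) := by
    ext s
    simp only [Set.mem_setOf_eq, Finset.coe_mem, Finset.mem_coe, mem_mFam, hα]
    constructor
    · rintro ⟨hind, hcard⟩
      exact ⟨Finset.subset_erase.mpr ⟨Finset.subset_univ s, hu s hind hcard⟩, hind, hcard⟩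
    · rintro ⟨_, hind, hcard⟩
      exact ⟨hind, hcard⟩
  rw [hset, Set.ncard_coe_finset, mCount]

end Bridge

section Transfer

open Classical

variable {V : Type*} [Fintype V] {U : Type*} [Fintype U]

lemma induce_adj_iff {G : SimpleGraph V} {S : Set V} {a b : S} :
    (G.induce S).Adj a b ↔ G.Adj ↑a ↑b := Iff.rfl

/-- transfer of `mCard` and `mCount` across an isomorphism of the induced graph
with a graph on a full vertex set. -/
lemma transfer_iso {G : SimpleGraph V} {W : Finset V} {H : SimpleGraph U}
    (φ : (G.induce (↑W : Set V)) ≃g H) :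
    mCard G W = mCard H Finset.univ ∧ mCount G W = mCount H Finset.univ := by
  classical
  set p : V → Prop := fun x => x ∈ (↑W : Set V) with hp
  -- forward map on independent sets
  set F : Finset V → Finset U := fun s => (s.subtype p).image (fun x => φ x) with hF
  set B : Finset U → Finset V :=
    fun t => (t.image (fun y => φ.symm y)).map (Function.Embedding.subtype p) with hB
  have hmemF : ∀ (s : Finset V) (y : U), y ∈ F s ↔ ↑(φ.symm y) ∈ s := by
    intro s y
    simp only [hF, Finset.mem_image, Finset.mem_subtype]
    constructor
    · rintro ⟨x, hx, rfl⟩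
      simpa using hx
    · intro h
      exact ⟨φ.symm y, h, by simp⟩
  have hmemB : ∀ (t : Finset U) (x : V), x ∈ B t ↔ ∃ hx : p x, φ ⟨x, hx⟩ ∈ t := by
    intro t x
    simp only [hB, Finset.mem_map, Finset.mem_image, Function.Embedding.coe_subtype]
    constructor
    · rintro ⟨a, ⟨y, hy, rfl⟩, rfl⟩
      exact ⟨(φ.symm y).2, by simpa using hy⟩
    · rintro ⟨hx, h⟩
      exact ⟨⟨x, hx⟩, ⟨φ ⟨x, hx⟩, h, by simp⟩, rfl⟩
  have hcardF : ∀ s : Finset V, s ⊆ W → (F s).card = s.card := by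
    intro s hs
    rw [hF]
    simp only
    rw [Finset.card_image_of_injective _ (fun a b hab => by
      have := φ.toEquiv.injective hab
      exact this)]
    have := Finset.subtype_map (s := s) (p := p)
    have h2 : s.filter p = s := by
      apply Finset.filter_true_of_mem
      intro x hx
      simpa [hp] using hs hx
    calc (s.subtype p).card = ((s.subtype p).map (Function.Embedding.subtype p)).card :=
          (Finset.card_map _).symm
      _ = (s.filter p).card := by rw [Finset.subtype_map]
      _ = s.card := by rw [h2]
  have hindF : ∀ s : Finset V, s ⊆ W → IsIndepFinset G s → IsIndepFinset H (F s) := by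
    intro s hs hind y₁ hy₁ y₂ hy₂ hne hadj
    rw [hmemF] at hy₁ hy₂
    have hne' : (↑(φ.symm y₁) : V) ≠ ↑(φ.symm y₂) := by
      intro h
      apply hne
      have : φ.symm y₁ = φ.symm y₂ := Subtype.ext h
      have := congrArg φ this
      simpa using this
    apply hind hy₁ hy₂ hne'
    have : (G.induce (↑W : Set V)).Adj (φ.symm y₁) (φ.symm y₂) := by
      rw [φ.symm.map_adj_iff]    -- ?
      exact hadj
    exact this
  have hindB : ∀ t : Finset U, IsIndepFinset H t → IsIndepFinset G (B t) := by
    intro t hind x₁ hx₁ x₂ hx₂ hne hadj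
    rw [hmemB] at hx₁ hx₂
    obtain ⟨h₁, hm₁⟩ := hx₁
    obtain ⟨h₂, hm₂⟩ := hx₂
    have hne' : φ ⟨x₁, h₁⟩ ≠ φ ⟨x₂, h₂⟩ := by
      intro h
      exact hne (congrArg Subtype.val (φ.toEquiv.injective h))
    apply hind hm₁ hm₂ hne'
    rw [φ.map_adj_iff]
    exact hadj
  have hsubB : ∀ t : Finset U, B t ⊆ W := by
    intro t x hx
    rw [hmemB] at hx
    obtain ⟨hx, _⟩ := hx
    simpa [hp] using hx
  have hcardB : ∀ t : Finset U, (B t).card = t.card := by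
    intro t
    rw [hB]
    simp only
    rw [Finset.card_map, Finset.card_image_of_injective _
      (fun a b hab => φ.symm.injective hab)]
  have hmcard : mCard G W = mCard H Finset.univ := by
    apply le_antisymm
    · obtain ⟨D, hD⟩ := exists_mFam G W
      have hDm := mem_mFam.mp hD
      rw [← hDm.2.2, ← hcardF D hDm.1]
      exact card_le_mCard (Finset.subset_univ _) (hindF D hDm.1 hDm.2.1)
    · obtain ⟨T, hT⟩ := exists_mFam H Finset.univ
      have hTm := mem_mFam.mp hT
      rw [← hTm.2.2, ← hcardB T]
      exact card_le_mCard (hsubB T) (hindB T hTm.2.1)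
  refine ⟨hmcard, ?_⟩
  rw [mCount, mCount]
  apply Finset.card_bij (fun s _ => F s)
  · intro s hs
    have hsm := mem_mFam.mp hs
    exact mem_mFam.mpr ⟨Finset.subset_univ _, hindF s hsm.1 hsm.2.1,
      by rw [hcardF s hsm.1, hsm.2.2, hmcard]⟩
  · intro s hs s' hs' h
    have hsm := mem_mFam.mp hs
    have hsm' := mem_mFam.mp hs'
    ext x
    constructor
    · intro hx
      have hxW : p x := by simpa [hp] using hsm.1 hx
      have : φ ⟨x, hxW⟩ ∈ F s := by
        rw [hmemF]
        simpa using hx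
      rw [h, hmemF] at this
      simpa using this
    · intro hx
      have hxW : p x := by simpa [hp] using hsm'.1 hx
      have : φ ⟨x, hxW⟩ ∈ F s' := by
        rw [hmemF]
        simpa using hx
      rw [← h, hmemF] at this
      simpa using this
  · intro t ht
    have htm := mem_mFam.mp ht
    refine ⟨B t, mem_mFam.mpr ⟨hsubB t, hindB t htm.2.1,
      by rw [hcardB t, htm.2.2, hmcard]⟩, ?_⟩
    ext y
    rw [hmemF, hmemB]
    constructor
    · rintro ⟨hx, h⟩
      simpa using h
    · intro hy
      exact ⟨(φ.symm y).2, by simpa using hy⟩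

end Transfer

section GgraphFacts

open Classical

lemma mod_cases_lt {a x : ℕ} (hx : x < 2*a) : x = x % a ∨ x = a + x % a := by
  rcases Nat.lt_or_ge x a with h | h
  · left
    rw [Nat.mod_eq_of_lt h]
  · right
    have h3 : x % a = (x - a) % a := Nat.mod_eq_sub_mod h
    rw [h3, Nat.mod_eq_of_lt (by omega)]
    omega

lemma mCard_Ggraph {m a : ℕ} (ha : 0 < a) (ham : a ≤ m) :
    mCard (Ggraph m a) Finset.univ = a := by
  apply le_antisymm
  · obtain ⟨D, hD⟩ := exists_mFam (Ggraph m a) Finset.univ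
    have hDm := mem_mFam.mp hD
    rw [← hDm.2.2]
    have : D.card ≤ (Finset.range a).card := by
      apply Finset.card_le_card_of_injOn (fun v => v.val % a)
      · intro v _
        simp [Nat.mod_lt _ ha]
      · intro v hv w hw hmod
        by_contra hne
        exact hDm.2.1 hv hw hne ⟨hne, hmod⟩
    simpa using this
  · have hmem : ∀ x ∈ Finset.range a, x < m := fun x hx => by
      have := Finset.mem_range.mp hx
      omega
    have hcard : ((Finset.range a).attachFin hmem).card = a := by
      rw [Finset.card_attachFin, Finset.card_range]
    have hind : IsIndepFinset (Ggraph m a) ((Finset.range a).attachFin hmem) := by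
      intro u hu v hv hne hadj
      rw [Finset.mem_attachFin, Finset.mem_range] at hu hv
      obtain ⟨_, hmod⟩ := hadj
      rw [Nat.mod_eq_of_lt hu, Nat.mod_eq_of_lt hv] at hmod
      exact hne (Fin.ext hmod)
    have := card_le_mCard (Finset.subset_univ _) hind
    rw [hcard] at this
    exact this

lemma deg_Ggraph {m a : ℕ} (hm : m < 2*a) (v : Fin m) :
    (nbr (Ggraph m a) Finset.univ v).card ≤ 1 := by
  apply Finset.card_le_one.mpr
  intro w₁ h₁ w₂ h₂
  rw [mem_nbr] at h₁ h₂
  obtain ⟨_, hne₁, hmod₁⟩ := h₁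
  obtain ⟨_, hne₂, hmod₂⟩ := h₂
  have hv := v.isLt
  have hw₁ := w₁.isLt
  have hw₂ := w₂.isLt
  have hne₁' : v.val ≠ w₁.val := fun h => hne₁ (Fin.ext h)
  have hne₂' : v.val ≠ w₂.val := fun h => hne₂ (Fin.ext h)
  have c₀ := mod_cases_lt (a := a) (x := v.val) (by omega)
  have c₁ := mod_cases_lt (a := a) (x := w₁.val) (by omega)
  have c₂ := mod_cases_lt (a := a) (x := w₂.val) (by omega)
  apply Fin.ext
  omega

lemma mCount_Ggraph {m a : ℕ} (ha : 0 < a) (ham : a ≤ m) (hm : m < 2*a) :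
    mCount (Ggraph m a) Finset.univ = 2 ^ (m - a) := by
  have hcard : (Finset.univ : Finset (Fin m)).card = m := by simp
  rw [count_matching m Finset.univ hcard (fun w _ => deg_Ggraph hm w),
    mCard_Ggraph ha ham]

end GgraphFacts

section Special

open Classical

variable {V : Type*} [Fintype V] {U : Type*} [Fintype U]

lemma indep_image_iso {G : SimpleGraph V} {H : SimpleGraph U} (ψ : G ≃g H)
    {s : Finset U} (hs : IsIndepFinset H s) :
    IsIndepFinset G (s.image (fun y => ψ.symm y)) := by
  intro x hx y hy hne hadj
  rw [Finset.mem_image] at hx hy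
  obtain ⟨x', hx', rfl⟩ := hx
  obtain ⟨y', hy', rfl⟩ := hy
  have hne' : x' ≠ y' := fun h => hne (by rw [h])
  apply hs hx' hy' hne'
  rw [← ψ.symm.map_adj_iff]
  exact hadj

/-- in `F(n,a)` with `n ≥ 2a`, every vertex lies in an independent set of size `a`. -/
lemma Fgraph_indep_through {n a : ℕ} (ha : 0 < a) (h2a : 2*a ≤ n) (w : Fin n) :
    ∃ s : Finset (Fin n), IsIndepFinset (Fgraph n a) s ∧ s.card = a ∧ w ∈ s := by
  have hmem : ∀ x ∈ ((Finset.range a).erase (w.val % a)).image (fun j => j + a), x < n := by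
    intro x hx
    rw [Finset.mem_image] at hx
    obtain ⟨j, hj, rfl⟩ := hx
    have := Finset.mem_range.mp (Finset.erase_subset _ _ hj)
    omega
  set T : Finset (Fin n) := (((Finset.range a).erase (w.val % a)).image (fun j => j + a)).attachFin hmem with hT
  have hmemT : ∀ z : Fin n, z ∈ T ↔ ∃ j < a, j ≠ w.val % a ∧ z.val = j + a := by
    intro z
    rw [hT, Finset.mem_attachFin, Finset.mem_image]
    constructor
    · rintro ⟨j, hj, hz⟩
      rw [Finset.mem_erase, Finset.mem_range] at hj
      exact ⟨j, hj.2, hj.1, hz.symm⟩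
    · rintro ⟨j, hj1, hj2, hj3⟩
      exact ⟨j, Finset.mem_erase.mpr ⟨hj2, Finset.mem_range.mpr hj1⟩, hj3.symm⟩
  have hwT : w ∉ T := by
    rw [hmemT]
    rintro ⟨j, hj1, hj2, hj3⟩
    apply hj2
    rw [hj3, Nat.add_mod_right, Nat.mod_eq_of_lt hj1]
  have hTcard : T.card = a - 1 := by
    rw [hT, Finset.card_attachFin, Finset.card_image_of_injective _ (add_left_injective a),
      Finset.card_erase_of_mem (Finset.mem_range.mpr (Nat.mod_lt _ ha)), Finset.card_range]
  refine ⟨insert w T, ?_, ?_, Finset.mem_insert_self _ _⟩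
  · have hnadj : ∀ z ∈ T, ¬ (Fgraph n a).Adj w z := by
      intro z hz hadj
      rw [hmemT] at hz
      obtain ⟨j, hj1, hj2, hj3⟩ := hz
      obtain ⟨hne, hc⟩ := hadj
      rcases hc with hmod | ⟨h0, hlt⟩ | ⟨h0, hlt⟩
      · apply hj2
        rw [hj3, Nat.add_mod_right, Nat.mod_eq_of_lt hj1] at hmod
        exact hmod.symm
      · omega
      · omega
    intro x hx y hy hne hadj
    rcases Finset.mem_insert.mp hx with rfl | hx'
    · rcases Finset.mem_insert.mp hy with rfl | hy'
      · exact hne rfl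
      · exact hnadj y hy' hadj
    · rcases Finset.mem_insert.mp hy with rfl | hy'
      · exact hnadj x hx' ((Fgraph n a).adj_symm hadj)
      · rw [hmemT] at hx' hy'
        obtain ⟨j, hj1, hj2, hj3⟩ := hx'
        obtain ⟨k, hk1, hk2, hk3⟩ := hy'
        obtain ⟨hne', hc⟩ := hadj
        rcases hc with hmod | ⟨h0, hlt⟩ | ⟨h0, hlt⟩
        · rw [hj3, hk3, Nat.add_mod_right, Nat.add_mod_right,
            Nat.mod_eq_of_lt hj1, Nat.mod_eq_of_lt hk1] at hmod
          exact hne' (Fin.ext (by omega))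
        · omega
        · omega
  · rw [Finset.card_insert_of_notMem hwT, hTcard]
    omega

open Fin.CommRing in
/-- in `C₅`, every vertex lies in an independent set of size 2. -/
lemma C5_indep_through (w : Fin 5) :
    ∃ s : Finset (Fin 5), IsIndepFinset (SimpleGraph.cycleGraph 5) s ∧ s.card = 2 ∧ w ∈ s := by
  have hne2 : ∀ x : Fin 5, x ≠ x + 2 := by
    intro x h
    have h2 : (0 : Fin 5) = 2 := by
      calc (0:Fin 5) = x - x := by ring
        _ = (x + 2) - x := by rw [← h]
        _ = 2 := by ring
    exact absurd h2 (by decide)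
  have hnadj : ∀ x : Fin 5, ¬ (SimpleGraph.cycleGraph 5).Adj x (x+2) := by
    intro x hadj
    rw [SimpleGraph.cycleGraph_adj'] at hadj
    have h1 : x - (x + 2) = (3 : Fin 5) := by
      have : (-2 : Fin 5) = 3 := by decide
      rw [← this]
      ring
    have h2 : (x + 2) - x = (2 : Fin 5) := by ring
    rw [h1, h2] at hadj
    rcases hadj with h | h <;> exact absurd h (by decide)
  refine ⟨{w, w + 2}, ?_, ?_, Finset.mem_insert_self _ _⟩
  · intro x hx y hy hne hadj
    simp only [Finset.mem_insert, Finset.mem_singleton] at hx hy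
    rcases hx with rfl | rfl <;> rcases hy with rfl | rfl
    · exact hne rfl
    · exact hnadj x hadj
    · exact hnadj y ((SimpleGraph.cycleGraph 5).adj_symm hadj)
    · exact hne rfl
  · rw [Finset.card_insert_of_notMem (by simpa using hne2 w), Finset.card_singleton]

end Special

section IsoConstruction

variable {V : Type*} [Fintype V]

theorem iso_construction {G : SimpleGraph V} {W : Finset V} {m a : ℕ}
    (hca : mCard G W = a) (hcm : W.card = m) (ha : 0 < a) (ham : a ≤ m) (hm : m < 2*a)
    (hdeg : ∀ v ∈ W, (nbr G W v).card ≤ 1) :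
    Nonempty ((G.induce (↑W : Set V)) ≃g Ggraph m a) := by
  classical
  set e := Fintype.equivFin V with he
  -- the partner function
  set z : V → V := fun v =>
    if h : (nbr G W v).card = 1 then (Finset.card_eq_one.mp h).choose else v with hz
  have hz_spec : ∀ v, (nbr G W v).card = 1 → nbr G W v = {z v} := by
    intro v hv
    rw [hz]
    simp only [dif_pos hv]
    exact (Finset.card_eq_one.mp hv).choose_spec
  set Md := W.filter (fun v => (nbr G W v).card = 1) with hMd
  have hMd_mem : ∀ v, v ∈ Md ↔ v ∈ W ∧ (nbr G W v).card = 1 := by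
    intro v
    rw [hMd, Finset.mem_filter]
  have hMdW : Md ⊆ W := fun v hv => ((hMd_mem v).mp hv).1
  have hzadj : ∀ v ∈ Md, G.Adj v (z v) ∧ z v ∈ W := by
    intro v hv
    rw [hMd_mem] at hv
    have hspec := hz_spec v hv.2
    have hzin : z v ∈ nbr G W v := by
      rw [hspec]
      exact Finset.mem_singleton_self _
    rw [mem_nbr] at hzin
    exact ⟨hzin.2, hzin.1⟩
  have hzMd : ∀ v ∈ Md, z v ∈ Md ∧ z (z v) = v := by
    intro v hv
    have h1 := hzadj v hv
    have hvW : v ∈ W := hMdW hv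
    have hvmem : v ∈ nbr G W (z v) := mem_nbr.mpr ⟨hvW, G.adj_symm h1.1⟩
    have hc : (nbr G W (z v)).card = 1 := by
      have hle := hdeg (z v) h1.2
      have hpos : 0 < (nbr G W (z v)).card := Finset.card_pos.mpr ⟨v, hvmem⟩
      omega
    have hspec := hz_spec (z v) hc
    have hvz : v ∈ ({z (z v)} : Finset V) := hspec ▸ hvmem
    rw [Finset.mem_singleton] at hvz
    exact ⟨(hMd_mem _).mpr ⟨h1.2, hc⟩, hvz.symm⟩
  have hzne : ∀ v ∈ Md, z v ≠ v := by
    intro v hv h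
    have h2 := (hzadj v hv).1
    rw [h] at h2
    exact G.loopless.irrefl v h2
  -- adjacency characterisation inside W
  have hadj_iff : ∀ x ∈ W, ∀ y ∈ W, (G.Adj x y ↔ (x ∈ Md ∧ y = z x)) := by
    intro x hx y hy
    constructor
    · intro h
      have hym : y ∈ nbr G W x := mem_nbr.mpr ⟨hy, h⟩
      have hc : (nbr G W x).card = 1 := by
        have := hdeg x hx
        have hpos : 0 < (nbr G W x).card := Finset.card_pos.mpr ⟨y, hym⟩
        omega
      have hspec := hz_spec x hc
      rw [hspec, Finset.mem_singleton] at hym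
      exact ⟨(hMd_mem x).mpr ⟨hx, hc⟩, hym⟩
    · rintro ⟨hxm, rfl⟩
      exact (hzadj x hxm).1
  -- lows, highs, singles
  set Lows := Md.filter (fun v => e v < e (z v)) with hLdef
  set Highs := Md.filter (fun v => e (z v) < e v) with hHdef
  set Sing := W \ Md with hSdef
  have hLMd : Lows ⊆ Md := Finset.filter_subset _ _
  have hHMd : Highs ⊆ Md := Finset.filter_subset _ _
  have hLH_disj : ∀ v, v ∈ Lows → v ∈ Highs → False := by
    intro v h1 h2
    rw [hLdef, Finset.mem_filter] at h1
    rw [hHdef, Finset.mem_filter] at h2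
    exact absurd h1.2 (not_lt.mpr (le_of_lt h2.2))
  have hLH_cover : ∀ v ∈ Md, v ∈ Lows ∨ v ∈ Highs := by
    intro v hv
    have hne : e (z v) ≠ e v := fun h => hzne v hv (e.injective h)
    rcases lt_or_gt_of_ne hne with h | h
    · right
      rw [hHdef, Finset.mem_filter]
      exact ⟨hv, h⟩
    · left
      rw [hLdef, Finset.mem_filter]
      exact ⟨hv, h⟩
  have hz_LH : ∀ v ∈ Lows, z v ∈ Highs := by
    intro v hv
    have hvm : v ∈ Md := hLMd hv
    rw [hHdef, Finset.mem_filter]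
    refine ⟨(hzMd v hvm).1, ?_⟩
    rw [(hzMd v hvm).2]
    rw [hLdef, Finset.mem_filter] at hv
    exact hv.2
  have hz_HL : ∀ v ∈ Highs, z v ∈ Lows := by
    intro v hv
    have hvm : v ∈ Md := hHMd hv
    rw [hLdef, Finset.mem_filter]
    refine ⟨(hzMd v hvm).1, ?_⟩
    rw [(hzMd v hvm).2]
    rw [hHdef, Finset.mem_filter] at hv
    exact hv.2
  have hSing_mem : ∀ v, v ∈ Sing ↔ v ∈ W ∧ v ∉ Md := by
    intro v
    rw [hSdef, Finset.mem_sdiff]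
  -- cardinalities
  set kk := Lows.card with hkk
  set ss := Sing.card with hss
  have hcardLH : Lows.card = Highs.card := by
    apply Finset.card_bij (fun v _ => z v)
    · exact fun v hv => hz_LH v hv
    · intro v₁ h₁ v₂ h₂ hzz
      have := congrArg z hzz
      rwa [(hzMd v₁ (hLMd h₁)).2, (hzMd v₂ (hLMd h₂)).2] at this
    · intro w hw
      exact ⟨z w, hz_HL w hw, (hzMd w (hHMd hw)).2⟩
  have hMd_card : Md.card = kk + kk := by
    have hdisj : Disjoint Lows Highs := by
      rw [Finset.disjoint_left]
      intro v h1 h2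
      exact hLH_disj v h1 h2
    have hunion : Md = Lows ∪ Highs := by
      apply Finset.Subset.antisymm
      · intro v hv
        rcases hLH_cover v hv with h | h
        · exact Finset.mem_union_left _ h
        · exact Finset.mem_union_right _ h
      · intro v hv
        rcases Finset.mem_union.mp hv with h | h
        · exact hLMd h
        · exact hHMd h
    rw [hunion, Finset.card_union_of_disjoint hdisj, ← hcardLH, hkk]
  have hW_card : m = (kk + kk) + ss := by
    rw [← hcm, ← hMd_card, hss, hSdef, Finset.card_sdiff_of_subset hMdW]
    have := Finset.card_le_card hMdW
    omega
  -- the independence number equals kk + ss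
  have hαeq : a = kk + ss := by
    have hge : kk + ss ≤ a := by
      -- Lows ∪ Sing is independent
      have hdisj : Disjoint Lows Sing := by
        rw [Finset.disjoint_left]
        intro v h1 h2
        exact ((hSing_mem v).mp h2).2 (hLMd h1)
      have hsub : Lows ∪ Sing ⊆ W := by
        intro v hv
        rcases Finset.mem_union.mp hv with h | h
        · exact hMdW (hLMd h)
        · exact ((hSing_mem v).mp h).1
      have hind : IsIndepFinset G (Lows ∪ Sing) := by
        intro x hx y hy hne hadjxy
        have hxW := hsub hx
        have hyW := hsub hy
        obtain ⟨hxm, hyz⟩ := (hadj_iff x hxW y hyW).mp hadjxy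
        have hxL : x ∈ Lows := by
          rcases Finset.mem_union.mp hx with h | h
          · exact h
          · exact absurd hxm ((hSing_mem x).mp h).2
        have hyL : y ∈ Lows := by
          rcases Finset.mem_union.mp hy with h | h
          · exact h
          · exact absurd (hyz ▸ (hzMd x hxm).1) ((hSing_mem y).mp h).2
        have h1 : e x < e (z x) := (Finset.mem_filter.mp hxL).2
        have h2 : e y < e (z y) := (Finset.mem_filter.mp hyL).2
        rw [hyz, (hzMd x hxm).2] at h2
        exact absurd h1 (not_lt.mpr (le_of_lt h2))
      have := card_le_mCard hsub hind
      rwa [Finset.card_union_of_disjoint hdisj, ← hkk, ← hss, hca] at this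
    have hle : a ≤ kk + ss := by
      obtain ⟨D, hD⟩ := exists_mFam G W
      have hDm := mem_mFam.mp hD
      have hDcard : D.card = a := by rw [hDm.2.2, hca]
      have hsplit : D.card = (D.filter (fun v => v ∈ Md)).card +
          (D.filter (fun v => v ∉ Md)).card :=
        (Finset.card_filter_add_card_filter_not _).symm
      have h1 : (D.filter (fun v => v ∉ Md)).card ≤ ss := by
        apply Finset.card_le_card
        intro v hv
        rw [Finset.mem_filter] at hv
        exact (hSing_mem v).mpr ⟨hDm.1 hv.1, hv.2⟩
      have h2 : (D.filter (fun v => v ∈ Md)).card ≤ kk := by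
        rw [hkk]
        apply Finset.card_le_card_of_injOn (fun v => if e v < e (z v) then v else z v)
        · intro v hv
          simp only [Finset.mem_coe] at hv ⊢
          rw [Finset.mem_filter] at hv
          by_cases hvl : e v < e (z v)
          · rw [if_pos hvl]
            rw [hLdef, Finset.mem_filter]
            exact ⟨hv.2, hvl⟩
          · rw [if_neg hvl]
            apply hz_HL
            rw [hHdef, Finset.mem_filter]
            refine ⟨hv.2, ?_⟩
            have hne : e (z v) ≠ e v := fun h => hzne v hv.2 (e.injective h)
            rcases lt_or_gt_of_ne hne with h | h
            · exact h
            · exact absurd h hvl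
        · intro v₁ hv₁ v₂ hv₂ heq
          simp only [Finset.coe_filter, Set.mem_setOf_eq] at hv₁ hv₂
          change (if e v₁ < e (z v₁) then v₁ else z v₁) =
            (if e v₂ < e (z v₂) then v₂ else z v₂) at heq
          by_cases h₁ : e v₁ < e (z v₁)
          · by_cases h₂ : e v₂ < e (z v₂)
            · rw [if_pos h₁, if_pos h₂] at heq
              exact heq
            · rw [if_pos h₁, if_neg h₂] at heq
              exfalso
              have hadj : G.Adj v₂ v₁ := heq ▸ (hzadj v₂ hv₂.2).1
              have hne : v₂ ≠ v₁ := fun h => G.loopless.irrefl v₁ (h ▸ hadj)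
              exact hDm.2.1 hv₂.1 hv₁.1 hne hadj
          · by_cases h₂ : e v₂ < e (z v₂)
            · rw [if_neg h₁, if_pos h₂] at heq
              exfalso
              have hadj : G.Adj v₁ v₂ := heq ▸ (hzadj v₁ hv₁.2).1
              have hne : v₁ ≠ v₂ := fun h => G.loopless.irrefl v₂ (h ▸ hadj)
              exact hDm.2.1 hv₁.1 hv₂.1 hne hadj
            · rw [if_neg h₁, if_neg h₂] at heq
              have := congrArg z heq
              rwa [(hzMd v₁ hv₁.2).2, (hzMd v₂ hv₂.2).2] at this
      omega
    omega
  have hkkm : kk + a = m := by omega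
  have hkka : kk < a := by omega
  -- index functions
  set idxL : V → ℕ := fun v =>
    if h : v ∈ Lows then ((Lows.equivFin ⟨v, h⟩ : Fin Lows.card) : ℕ) else 0 with hidxL
  set idxS : V → ℕ := fun v =>
    if h : v ∈ Sing then ((Sing.equivFin ⟨v, h⟩ : Fin Sing.card) : ℕ) else 0 with hidxS
  have hidxL_lt : ∀ v ∈ Lows, idxL v < kk := by
    intro v hv
    rw [hidxL]
    simp only [dif_pos hv]
    exact (Lows.equivFin ⟨v, hv⟩).isLt
  have hidxS_lt : ∀ v ∈ Sing, idxS v < ss := by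
    intro v hv
    rw [hidxS]
    simp only [dif_pos hv]
    exact (Sing.equivFin ⟨v, hv⟩).isLt
  have hidxL_inj : ∀ v₁ ∈ Lows, ∀ v₂ ∈ Lows, idxL v₁ = idxL v₂ → v₁ = v₂ := by
    intro v₁ h₁ v₂ h₂ hid
    rw [hidxL] at hid
    simp only [dif_pos h₁, dif_pos h₂] at hid
    have := Lows.equivFin.injective (Fin.ext hid)
    exact Subtype.ext_iff.mp this
  have hidxS_inj : ∀ v₁ ∈ Sing, ∀ v₂ ∈ Sing, idxS v₁ = idxS v₂ → v₁ = v₂ := by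
    intro v₁ h₁ v₂ h₂ hid
    rw [hidxS] at hid
    simp only [dif_pos h₁, dif_pos h₂] at hid
    have := Sing.equivFin.injective (Fin.ext hid)
    exact Subtype.ext_iff.mp this
  -- label function
  set lab : V → ℕ := fun v =>
    if v ∈ Lows then idxL v else if v ∈ Highs then a + idxL (z v) else kk + idxS v with hlab
  have hS_not_L : ∀ v ∈ Sing, v ∉ Lows := fun v hv h =>
    ((hSing_mem v).mp hv).2 (hLMd h)
  have hS_not_H : ∀ v ∈ Sing, v ∉ Highs := fun v hv h =>
    ((hSing_mem v).mp hv).2 (hHMd h)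
  have hH_not_L : ∀ v ∈ Highs, v ∉ Lows := fun v hv h => hLH_disj v h hv
  have htri : ∀ v ∈ W, v ∈ Lows ∨ v ∈ Highs ∨ v ∈ Sing := by
    intro v hv
    by_cases h : v ∈ Md
    · rcases hLH_cover v h with h' | h'
      · exact Or.inl h'
      · exact Or.inr (Or.inl h')
    · exact Or.inr (Or.inr ((hSing_mem v).mpr ⟨hv, h⟩))
  have hlab_L : ∀ v ∈ Lows, lab v = idxL v := by
    intro v hv
    rw [hlab]
    simp only [if_pos hv]
  have hlab_H : ∀ v ∈ Highs, lab v = a + idxL (z v) := by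
    intro v hv
    rw [hlab]
    simp only [if_neg (hH_not_L v hv), if_pos hv]
  have hlab_S : ∀ v ∈ Sing, lab v = kk + idxS v := by
    intro v hv
    rw [hlab]
    simp only [if_neg (hS_not_L v hv), if_neg (hS_not_H v hv)]
  have hlab_lt : ∀ v ∈ W, lab v < m := by
    intro v hv
    rcases htri v hv with h | h | h
    · rw [hlab_L v h]
      have := hidxL_lt v h
      omega
    · rw [hlab_H v h]
      have := hidxL_lt (z v) (hz_HL v h)
      omega
    · rw [hlab_S v h]
      have := hidxS_lt v h
      omega
  have hmod_L : ∀ v ∈ Lows, lab v % a = idxL v := by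
    intro v hv
    rw [hlab_L v hv, Nat.mod_eq_of_lt (by have := hidxL_lt v hv; omega)]
  have hmod_H : ∀ v ∈ Highs, lab v % a = idxL (z v) := by
    intro v hv
    rw [hlab_H v hv, Nat.add_mod_left,
      Nat.mod_eq_of_lt (by have := hidxL_lt (z v) (hz_HL v hv); omega)]
  have hmod_S : ∀ v ∈ Sing, lab v % a = kk + idxS v := by
    intro v hv
    rw [hlab_S v hv, Nat.mod_eq_of_lt (by have := hidxS_lt v hv; omega)]
  -- injectivity of the label function
  have hlab_inj : ∀ v₁ ∈ W, ∀ v₂ ∈ W, lab v₁ = lab v₂ → v₁ = v₂ := by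
    intro v₁ h₁ v₂ h₂ hl
    rcases htri v₁ h₁ with c₁ | c₁ | c₁ <;> rcases htri v₂ h₂ with c₂ | c₂ | c₂
    · exact hidxL_inj v₁ c₁ v₂ c₂ (by rw [← hlab_L v₁ c₁, ← hlab_L v₂ c₂, hl])
    · exfalso
      have e₁ := hlab_L v₁ c₁
      have e₂ := hlab_H v₂ c₂
      have := hidxL_lt v₁ c₁
      omega
    · exfalso
      have e₁ := hlab_L v₁ c₁
      have e₂ := hlab_S v₂ c₂
      have := hidxL_lt v₁ c₁
      omega
    · exfalso
      have e₁ := hlab_H v₁ c₁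
      have e₂ := hlab_L v₂ c₂
      have := hidxL_lt v₂ c₂
      omega
    · have e₁ := hlab_H v₁ c₁
      have e₂ := hlab_H v₂ c₂
      have hzz : z v₁ = z v₂ :=
        hidxL_inj (z v₁) (hz_HL v₁ c₁) (z v₂) (hz_HL v₂ c₂) (by omega)
      have := congrArg z hzz
      rwa [(hzMd v₁ (hHMd c₁)).2, (hzMd v₂ (hHMd c₂)).2] at this
    · exfalso
      have e₁ := hlab_H v₁ c₁
      have e₂ := hlab_S v₂ c₂
      have := hidxS_lt v₂ c₂
      omega
    · exfalso
      have e₁ := hlab_S v₁ c₁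
      have e₂ := hlab_L v₂ c₂
      have := hidxL_lt v₂ c₂
      omega
    · exfalso
      have e₁ := hlab_S v₁ c₁
      have e₂ := hlab_H v₂ c₂
      have := hidxS_lt v₁ c₁
      omega
    · exact hidxS_inj v₁ c₁ v₂ c₂ (by
        have e₁ := hlab_S v₁ c₁
        have e₂ := hlab_S v₂ c₂
        omega)
  -- residue characterisation
  have hsame : ∀ v₁ ∈ W, ∀ v₂ ∈ W, v₁ ≠ v₂ →
      (lab v₁ % a = lab v₂ % a ↔ (v₁ ∈ Md ∧ v₂ = z v₁)) := by
    intro v₁ h₁ v₂ h₂ hne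
    rcases htri v₁ h₁ with c₁ | c₁ | c₁ <;> rcases htri v₂ h₂ with c₂ | c₂ | c₂
    · rw [hmod_L v₁ c₁, hmod_L v₂ c₂]
      constructor
      · intro h
        exact absurd (hidxL_inj v₁ c₁ v₂ c₂ h) hne
      · rintro ⟨hm₁, rfl⟩
        exact absurd (hz_LH v₁ c₁) (fun h => hLH_disj (z v₁) c₂ h)
    · rw [hmod_L v₁ c₁, hmod_H v₂ c₂]
      constructor
      · intro h
        have hv₁ : v₁ = z v₂ := hidxL_inj v₁ c₁ (z v₂) (hz_HL v₂ c₂) h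
        refine ⟨hLMd c₁, ?_⟩
        rw [hv₁, (hzMd v₂ (hHMd c₂)).2]
      · rintro ⟨hm₁, rfl⟩
        rw [(hzMd v₁ hm₁).2]
    · rw [hmod_L v₁ c₁, hmod_S v₂ c₂]
      constructor
      · intro h
        have := hidxL_lt v₁ c₁
        omega
      · rintro ⟨hm₁, rfl⟩
        exact absurd ((hzMd v₁ hm₁).1) ((hSing_mem (z v₁)).mp c₂).2
    · rw [hmod_H v₁ c₁, hmod_L v₂ c₂]
      constructor
      · intro h
        have hv₂ : z v₁ = v₂ := hidxL_inj (z v₁) (hz_HL v₁ c₁) v₂ c₂ h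
        exact ⟨hHMd c₁, hv₂.symm⟩
      · rintro ⟨hm₁, rfl⟩
        rfl
    · rw [hmod_H v₁ c₁, hmod_H v₂ c₂]
      constructor
      · intro h
        exfalso
        have hzz : z v₁ = z v₂ :=
          hidxL_inj (z v₁) (hz_HL v₁ c₁) (z v₂) (hz_HL v₂ c₂) h
        have := congrArg z hzz
        rw [(hzMd v₁ (hHMd c₁)).2, (hzMd v₂ (hHMd c₂)).2] at this
        exact hne this
      · rintro ⟨hm₁, rfl⟩
        exact (hLH_disj (z v₁) (hz_HL v₁ c₁) c₂).elim
    · rw [hmod_H v₁ c₁, hmod_S v₂ c₂]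
      constructor
      · intro h
        have := hidxL_lt (z v₁) (hz_HL v₁ c₁)
        omega
      · rintro ⟨hm₁, rfl⟩
        exact absurd ((hzMd v₁ hm₁).1) ((hSing_mem (z v₁)).mp c₂).2
    · rw [hmod_S v₁ c₁, hmod_L v₂ c₂]
      constructor
      · intro h
        have := hidxL_lt v₂ c₂
        omega
      · rintro ⟨hm₁, rfl⟩
        exact absurd hm₁ ((hSing_mem v₁).mp c₁).2
    · rw [hmod_S v₁ c₁, hmod_H v₂ c₂]
      constructor
      · intro h
        have := hidxL_lt (z v₂) (hz_HL v₂ c₂)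
        omega
      · rintro ⟨hm₁, rfl⟩
        exact absurd hm₁ ((hSing_mem v₁).mp c₁).2
    · rw [hmod_S v₁ c₁, hmod_S v₂ c₂]
      constructor
      · intro h
        exact absurd (hidxS_inj v₁ c₁ v₂ c₂ (by omega)) hne
      · rintro ⟨hm₁, rfl⟩
        exact absurd hm₁ ((hSing_mem v₁).mp c₁).2
  -- build the bijection onto `Fin m`
  have hmemW : ∀ x : (↑W : Set V), (x : V) ∈ W := fun x => Finset.mem_coe.mp x.2
  set σ : (↑W : Set V) → Fin m := fun x => ⟨lab ↑x, hlab_lt ↑x (hmemW x)⟩ with hσ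
  have hσ_inj : Function.Injective σ := by
    intro x y hxy
    rw [hσ] at hxy
    simp only [Fin.mk.injEq] at hxy
    exact Subtype.ext (hlab_inj ↑x (hmemW x) ↑y (hmemW y) hxy)
  have hcardW : Fintype.card (↑W : Set V) = m := by
    rw [Fintype.card_congr (Equiv.subtypeEquivRight (fun x => Finset.mem_coe)),
      Fintype.card_coe, hcm]
  have hσ_bij : Function.Bijective σ := by
    rw [Fintype.bijective_iff_injective_and_card]
    refine ⟨hσ_inj, ?_⟩
    rw [hcardW, Fintype.card_fin]
  refine ⟨⟨Equiv.ofBijective σ hσ_bij, ?_⟩⟩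
  intro x y
  show (Ggraph m a).Adj (σ x) (σ y) ↔ (G.induce (↑W : Set V)).Adj x y
  have hxW := hmemW x
  have hyW := hmemW y
  by_cases hxy : (x : V) = (y : V)
  · have hxy' : x = y := Subtype.ext hxy
    subst hxy'
    constructor
    · intro h
      exact absurd rfl h.1
    · intro h
      exact ((G.induce (↑W : Set V)).loopless.irrefl x h).elim
  · constructor
    · rintro ⟨hne, hmodeq⟩
      have := (hsame ↑x hxW ↑y hyW hxy).mp hmodeq
      exact (hadj_iff ↑x hxW ↑y hyW).mpr this
    · intro h
      have hadj : G.Adj ↑x ↑y := h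
      have hchar := (hadj_iff ↑x hxW ↑y hyW).mp hadj
      refine ⟨?_, (hsame ↑x hxW ↑y hyW hxy).mpr hchar⟩
      intro hcon
      rw [hσ] at hcon
      simp only [Fin.mk.injEq] at hcon
      exact hxy (hlab_inj ↑x hxW ↑y hyW hcon)
end IsoConstruction

/-- **Lemma 3.** Let `G` be a connected graph of order `n` and independence number `α` with
`α < n`. If some vertex `u` of `G` is contained in no maximum independent set of `G`, then
`♯α(G) ≤ f(n,α)`, with equality iff `G` belongs to `ℱ(n,α)`. -/
theorem maxIndepSets_le_f_of_uncovered_vertex {V : Type*} [Fintype V] (G : SimpleGraph V)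
    (n a : ℕ) (ha0 : 0 < a) (han : a < n) (hconn : G.Connected)
    (hcard : Fintype.card V = n) (hα : indepNumber G = a) (u : V)
    (hu : ∀ s : Finset V, IsIndepFinset G s → s.card = indepNumber G → u ∉ s) :
    numMaxIndep G ≤ fFun n a ∧
      (numMaxIndep G = fFun n a ↔ memFamilyF G n a) := by
  classical
  set W : Finset V := Finset.univ.erase u with hWdef
  have hαW : mCard G W = a := by rw [hWdef, mCard_erase_univ hu, hα]
  have hWcard : W.card = n - 1 := by
    rw [hWdef, Finset.card_erase_of_mem (Finset.mem_univ u), Finset.card_univ, hcard]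
  have hnum : numMaxIndep G = mCount G W := numMaxIndep_eq_mCount hu
  have hAux := auxMain G (n-1) W hWcard
  rw [hαW] at hAux
  have hle : numMaxIndep G ≤ gFun (n-1) a := hnum ▸ hAux.1
  have hlef : numMaxIndep G ≤ fFun n a := le_trans hle (Nat.le_add_right _ _)
  refine ⟨hlef, ?_⟩
  by_cases hcase : 2*a ≤ n
  · constructor
    · intro heq
      exfalso
      have ht : 1 ≤ tFun n a := tFun_pos (by omega) hcase
      have hf : fFun n a = gFun (n-1) a + tFun n a := rfl
      omega
    · intro hmem
      exfalso
      rw [memFamilyF, if_pos hcase] at hmem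
      rcases hmem with hiso | ⟨hn5, ha2', hiso⟩
      · obtain ⟨φ⟩ := hiso
        obtain ⟨s, hsind, hscard, hws⟩ := Fgraph_indep_through ha0 hcase (φ u)
        have hind' := indep_image_iso φ hsind
        have hcard' : (s.image (fun y => φ.symm y)).card = a := by
          rw [Finset.card_image_of_injective _ (φ.symm.injective)]
          exact hscard
        have hmem' : u ∈ s.image (fun y => φ.symm y) := by
          rw [Finset.mem_image]
          exact ⟨φ u, hws, by simp⟩
        exact hu _ hind' (by rw [hcard', hα]) hmem'
      · obtain ⟨φ⟩ := hiso
        subst hn5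
        subst ha2'
        obtain ⟨s, hsind, hscard, hws⟩ := C5_indep_through (φ u)
        have hind' := indep_image_iso φ hsind
        have hcard' : (s.image (fun y => φ.symm y)).card = 2 := by
          rw [Finset.card_image_of_injective _ (φ.symm.injective)]
          exact hscard
        have hmem' : u ∈ s.image (fun y => φ.symm y) := by
          rw [Finset.mem_image]
          exact ⟨φ u, hws, by simp⟩
        exact hu _ hind' (by rw [hcard', hα]) hmem'
  · push_neg at hcase
    have ha2 : 2 ≤ a := by omega
    have hf : fFun n a = 2^(n-1-a) := fFun_eq_of_lt ha2 han (by omega)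
    have hgf : gFun (n-1) a = 2^(n-1-a) := gFun_two_pow (by omega) (by omega)
    rw [memFamilyF, if_neg (not_le.mpr hcase)]
    constructor
    · intro heq
      refine ⟨hconn, hcard, hα, u, ?_⟩
      have heqW : mCount G W = gFun (n-1) a := by rw [← hnum, heq, hf, hgf]
      have hdeg := hAux.2 (by omega) heqW
      have hiso := iso_construction hαW hWcard ha0 (by omega) (by omega) hdeg
      have hset : (↑W : Set V) = ({u}ᶜ : Set V) := by
        rw [hWdef]
        ext x
        simp
      rw [hset] at hiso
      exact hiso
    · rintro ⟨_, _, _, x₀, ⟨φ⟩⟩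
      have hset : (↑(Finset.univ.erase x₀) : Set V) = ({x₀}ᶜ : Set V) := by
        ext x
        simp
      rw [← hset] at φ
      have htr := transfer_iso φ
      have hW₀card : (Finset.univ.erase x₀).card = n - 1 := by
        rw [Finset.card_erase_of_mem (Finset.mem_univ _), Finset.card_univ, hcard]
      have hmc : mCard G (Finset.univ.erase x₀) = a := by
        rw [htr.1, mCard_Ggraph ha0 (by omega)]
      have hcnt : mCount G (Finset.univ.erase x₀) = 2^(n-1-a) := by
        rw [htr.2, mCount_Ggraph ha0 (by omega) (by omega)]
      have hlow : mCount G (Finset.univ.erase x₀) ≤ numMaxIndep G := by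
        rw [numMaxIndep]
        have hsub : (↑(mFam G (Finset.univ.erase x₀)) : Set (Finset V)) ⊆
            {s : Finset V | IsIndepFinset G s ∧ s.card = indepNumber G} := by
          intro s hs
          rw [Finset.mem_coe, mem_mFam] at hs
          exact ⟨hs.2.1, by rw [hs.2.2, hmc, hα]⟩
        calc mCount G (Finset.univ.erase x₀)
            = (↑(mFam G (Finset.univ.erase x₀)) : Set (Finset V)).ncard :=
              (Set.ncard_coe_finset _).symm
          _ ≤ _ := Set.ncard_le_ncard hsub (Set.toFinite _)
      rw [hf]
      omega
end

section
/- Let n and α be positive integers with α < n. Let G be a connected graph of order n and independence number α whose vertex set is the disjoint union of the vertex sets of α cliques C_0,…,C_{α−1}, such that every edge of G that does not lie inside one of these cliques is incident with a fixed vertex x_0 ∈ C_0, and x_0 has exactly one neighbor in each of the cliques C_1,…,C_{α−1}. Then ♯α(G) ≤ f(n,α). -/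
open Finset

/-! A maximum independent set meets each of the `α` cliques in exactly one vertex. If it
contains `x₀` its other vertices avoid the neighbours of `x₀`; otherwise its vertex in `C 0` is
not `x₀`. Hence `♯α(G) ≤ (|C 0| - 1) ∏ |C i| + ∏ (|C i| - 1)`, products over `i ≠ 0`. Moving a
vertex out of `C 0` into a clique at least two smaller, or into `C 0` out of a larger clique,
does not decrease this bound, and strictly decreases `∑ |C i|² + ∑_{i ≠ 0} |C i|`. When no move
is possible all sizes are `|C 0|` or `|C 0| - 1`, and there the bound equals `f(n, α)`. -/

theorem gFun_mul_add {a q r : ℕ} (hra : r < a) :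
    gFun (a * q + r) a = q ^ (a - r) * (q + 1) ^ r := by
  have ha : 0 < a := by omega
  have hdiv : (a * q + r) / a = q := by
    rw [Nat.mul_add_div ha, Nat.div_eq_of_lt hra, add_zero]
  have hmod : (a * q + r) % a = r := by rw [Nat.mul_add_mod, Nat.mod_eq_of_lt hra]
  rcases Nat.eq_zero_or_pos r with rfl | hr
  · simp [gFun, Nat.mul_div_cancel_left q ha]
  · have hceil : (a * q + r + a - 1) / a = q + 1 := by
      rw [show a * q + r + a - 1 = a * (q + 1) + (r - 1) by rw [Nat.mul_succ]; omega,
        Nat.mul_add_div ha, Nat.div_eq_of_lt (by omega), add_zero]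
    rw [gFun, hdiv, hmod, hceil]

theorem tFun_mul_add {a q r : ℕ} (hr : 1 ≤ r) (hra : r ≤ a) :
    tFun (a * q + r) a = q ^ (r - 1) * (q - 1) ^ (a - r) := by
  have ha : 0 < a := by omega
  have hfactor : ∀ i < a, (a * q + r) / a + (if i < (a * q + r) % a then 1 else 0) - 1
      = if i < r then q else q - 1 := by
    intro i hi
    rcases hra.lt_or_eq with hra | rfl
    · rw [Nat.mul_add_div ha, Nat.div_eq_of_lt hra, Nat.mul_add_mod, Nat.mod_eq_of_lt hra]
      split_ifs <;> omega
    · rw [← Nat.mul_succ, Nat.mul_div_cancel_left _ ha, Nat.mul_mod_right]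
      simp [hi]
  rw [tFun, prod_congr rfl fun i hi => hfactor i (mem_Ico.1 hi).2,
    ← prod_Ico_consecutive _ hr hra,
    prod_congr rfl fun i hi => if_pos (mem_Ico.1 hi).2,
    prod_congr rfl fun i hi => if_neg (not_lt.2 (mem_Ico.1 hi).1),
    prod_const, prod_const, Nat.card_Ico, Nat.card_Ico]

theorem fFun_mul_add {a q r : ℕ} (hr : 1 ≤ r) (hra : r ≤ a) :
    fFun (a * q + r) a =
      q ^ (a - r + 1) * (q + 1) ^ (r - 1) + q ^ (r - 1) * (q - 1) ^ (a - r) := by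
  rw [fFun, show a * q + r - 1 = a * q + (r - 1) by omega, gFun_mul_add (by omega),
    tFun_mul_add hr hra, show a - (r - 1) = a - r + 1 by omega]

/-- For cliques of sizes `b` (the one containing `x₀`) and `m`, where `x₀` has one neighbour in
each clique of `m`: `(b - 1) * m.prod` transversals avoid `x₀`, at most `(m.map (· - 1)).prod`
contain it. -/
def transversalCount (b : ℕ) (m : Multiset ℕ) : ℕ := (b - 1) * m.prod + (m.map (· - 1)).prod

theorem transversalCount_cons_le_pred_succ {c y : ℕ} (hyc : y + 1 ≤ c) (m : Multiset ℕ) :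
    transversalCount (c + 1) (y ::ₘ m) ≤ transversalCount c ((y + 1) ::ₘ m) := by
  obtain ⟨e, rfl⟩ : ∃ e, c = y + 1 + e := ⟨c - (y + 1), by omega⟩
  simp only [transversalCount, Multiset.prod_cons, Multiset.map_cons, Nat.add_sub_cancel]
  have hpred : (y - 1) * (m.map (· - 1)).prod ≤ y * (m.map (· - 1)).prod :=
    Nat.mul_le_mul_right _ (Nat.sub_le y 1)
  have hmain : (y + 1 + e) * (y * m.prod) ≤ (y + 1 + e - 1) * ((y + 1) * m.prod) := by
    rw [show y + 1 + e - 1 = y + e by omega]; nlinarith [Nat.zero_le m.prod]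
  omega

theorem transversalCount_cons_le_succ_pred {b y : ℕ} (hb : 1 ≤ b) (hby : b ≤ y)
    (m : Multiset ℕ) :
    transversalCount b ((y + 1) ::ₘ m) ≤ transversalCount (b + 1) (y ::ₘ m) := by
  have hprod : (m.map (· - 1)).prod ≤ m.prod := by
    simpa using Multiset.prod_map_le_prod_map (s := m) (· - 1) id fun y _ => Nat.sub_le y 1
  obtain ⟨c, rfl⟩ : ∃ c, b = c + 1 := ⟨b - 1, by omega⟩
  obtain ⟨e, rfl⟩ : ∃ e, y = c + 1 + e := ⟨y - (c + 1), by omega⟩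
  simp only [transversalCount, Multiset.prod_cons, Multiset.map_cons, Nat.add_sub_cancel,
    show c + 1 + e - 1 = c + e by omega]
  nlinarith [Nat.zero_le m.prod, Nat.zero_le (m.map (· - 1)).prod]

theorem transversalCount_succ_eq_fFun {q : ℕ} {m : Multiset ℕ}
    (hm : ∀ y ∈ m, y = q ∨ y = q + 1) :
    transversalCount (q + 1) m = fFun (q + 1 + m.sum) (Multiset.card m + 1) := by
  obtain ⟨k, j, rfl⟩ : ∃ k j, m = Multiset.replicate k (q + 1) + Multiset.replicate j q := by
    refine ⟨_, _, (Multiset.filter_add_not (· = q + 1) m).symm.trans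
      (congrArg₂ (· + ·) (Multiset.eq_replicate_of_mem fun y hy => ?_)
        (Multiset.eq_replicate_of_mem fun y hy => ?_))⟩
    · exact (Multiset.mem_filter.1 hy).2
    · have := Multiset.mem_filter.1 hy
      exact (hm y this.1).resolve_right this.2
  have hn : q + 1 + (k * (q + 1) + j * q) = (k + j + 1) * q + (k + 1) := by ring
  simp only [transversalCount, Multiset.prod_add, Multiset.sum_add, Multiset.map_add,
    Multiset.prod_replicate, Multiset.sum_replicate, Multiset.map_replicate, Multiset.card_add,
    Multiset.card_replicate, smul_eq_mul, Nat.add_sub_cancel, hn]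
  rw [fFun_mul_add (by omega) (by omega),
    show k + j + 1 - (k + 1) = j by omega, Nat.add_sub_cancel]
  ring

theorem transversalCount_le_fFun {b : ℕ} (hb : 1 ≤ b) (m : Multiset ℕ) :
    transversalCount b m ≤ fFun (b + m.sum) (Multiset.card m + 1) := by
  induction hp : b ^ 2 + (m.map (· ^ 2)).sum + m.sum using Nat.strong_induction_on
    generalizing b m with
  | _ p ih =>
  by_cases hdown : ∃ y ∈ m, y + 2 ≤ b
  · obtain ⟨y, hy, hyb⟩ := hdown
    obtain ⟨c, rfl⟩ : ∃ c, b = c + 1 := ⟨b - 1, by omega⟩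
    rw [← Multiset.cons_erase hy] at hp ⊢
    set m' := m.erase y
    calc transversalCount (c + 1) (y ::ₘ m')
        ≤ transversalCount c ((y + 1) ::ₘ m') :=
          transversalCount_cons_le_pred_succ (by omega) m'
      _ ≤ fFun (c + ((y + 1) ::ₘ m').sum) (Multiset.card ((y + 1) ::ₘ m') + 1) := by
        refine ih _ ?_ (by omega) _ rfl
        subst hp
        simp only [Multiset.map_cons, Multiset.sum_cons]
        nlinarith
      _ = fFun (c + 1 + (y ::ₘ m').sum) (Multiset.card (y ::ₘ m') + 1) := by
        simp only [Multiset.sum_cons, Multiset.card_cons]; ring_nf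
  by_cases hup : ∃ y ∈ m, b + 1 ≤ y
  · obtain ⟨y, hy, hby⟩ := hup
    obtain ⟨w, rfl⟩ : ∃ w, y = w + 1 := ⟨y - 1, by omega⟩
    rw [← Multiset.cons_erase hy] at hp ⊢
    set m' := m.erase (w + 1)
    calc transversalCount b ((w + 1) ::ₘ m')
        ≤ transversalCount (b + 1) (w ::ₘ m') :=
          transversalCount_cons_le_succ_pred hb (by omega) m'
      _ ≤ fFun (b + 1 + (w ::ₘ m').sum) (Multiset.card (w ::ₘ m') + 1) := by
        refine ih _ ?_ (by omega) _ rfl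
        subst hp
        simp only [Multiset.map_cons, Multiset.sum_cons]
        nlinarith
      _ = fFun (b + ((w + 1) ::ₘ m').sum) (Multiset.card ((w + 1) ::ₘ m') + 1) := by
        simp only [Multiset.sum_cons, Multiset.card_cons]; ring_nf
  push Not at hdown hup
  obtain ⟨q, rfl⟩ : ∃ q, b = q + 1 := ⟨b - 1, by omega⟩
  exact (transversalCount_succ_eq_fFun fun y hy => by
    have := hdown y hy; have := hup y hy; omega).le

section CliqueCover

variable {V ι : Type*} [DecidableEq V] {G : SimpleGraph V} {C : ι → Finset V}

theorem IsIndepFinset.card_inter_le_one {s K : Finset V} (hs : IsIndepFinset G s)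
    (hK : G.IsClique (K : Set V)) : (s ∩ K).card ≤ 1 :=
  card_le_one.2 fun u hu v hv => by
    by_contra huv
    rw [mem_inter] at hu hv
    exact hs hu.1 hv.1 huv (hK hu.2 hv.2 huv)

theorem IsIndepFinset.card_inter_eq_one [Fintype ι] (hcover : ∀ v, ∃ i, v ∈ C i)
    (hclique : ∀ i, G.IsClique (C i : Set V)) {s : Finset V} (hs : IsIndepFinset G s)
    (hcard : s.card = Fintype.card ι) (i : ι) : (s ∩ C i).card = 1 := by
  have hle : ∀ i ∈ univ, (s ∩ C i).card ≤ 1 := fun i _ => hs.card_inter_le_one (hclique i)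
  have hcovered : s ⊆ univ.biUnion fun i => s ∩ C i := fun v hv => by
    obtain ⟨i, hi⟩ := hcover v
    exact mem_biUnion.2 ⟨i, mem_univ i, mem_inter.2 ⟨hv, hi⟩⟩
  have hsum : ∑ i, (s ∩ C i).card = ∑ _i : ι, 1 := by
    refine le_antisymm (sum_le_sum hle) ?_
    rw [sum_const, smul_eq_mul, mul_one, card_univ, ← hcard]
    exact (card_le_card hcovered).trans card_biUnion_le
  exact (sum_eq_sum_iff_of_le hle).1 hsum i (mem_univ i)

theorem mem_image_piFinset_of_inter_eq_singleton [Fintype ι] [DecidableEq ι]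
    (hcover : ∀ v, ∃ i, v ∈ C i) {D : ι → Finset V} {s : Finset V}
    (h : ∀ i, ∃ v ∈ D i, s ∩ C i = {v}) :
    s ∈ (Fintype.piFinset D).image fun f => univ.image f := by
  choose f hfD hf using h
  refine mem_image.2 ⟨f, Fintype.mem_piFinset.2 hfD, ?_⟩
  ext v
  simp only [mem_image, mem_univ, true_and]
  constructor
  · rintro ⟨i, rfl⟩
    exact (mem_inter.1 ((hf i).symm ▸ mem_singleton_self (f i))).1
  · intro hv
    obtain ⟨i, hi⟩ := hcover v
    exact ⟨i, (mem_singleton.1 (hf i ▸ mem_inter.2 ⟨hv, hi⟩)).symm⟩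

theorem numMaxIndep_le_transversalCount [Fintype V] [Fintype ι] [DecidableEq ι]
    (hcover : ∀ v, ∃ i, v ∈ C i) (hclique : ∀ i, G.IsClique (C i : Set V))
    (hα : indepNumber G = Fintype.card ι) {i₀ : ι} {x₀ : V} (hx₀ : x₀ ∈ C i₀) (z : ι → V)
    (hz : ∀ i ≠ i₀, z i ∈ C i) (hadj : ∀ i ≠ i₀, G.Adj x₀ (z i)) :
    numMaxIndep G ≤
      transversalCount (C i₀).card ((univ.erase i₀).val.map fun i => (C i).card) := by
  set D₁ := Function.update (fun i => (C i).erase (z i)) i₀ {x₀}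
  set D₂ := Function.update C i₀ ((C i₀).erase x₀)
  set transversals := fun D : ι → Finset V => (Fintype.piFinset D).image fun f => univ.image f
  have hsub : {s : Finset V | IsIndepFinset G s ∧ s.card = indepNumber G} ⊆
      ↑(transversals D₁ ∪ transversals D₂) := by
    rintro s ⟨hs, hcard⟩
    have hone := hs.card_inter_eq_one hcover hclique (hcard.trans hα)
    have hpick : ∀ i, ∃ v, v ∈ s ∧ v ∈ C i ∧ s ∩ C i = {v} := fun i => by
      obtain ⟨v, hv⟩ := card_eq_one.1 (hone i)
      exact ⟨v, (mem_inter.1 (hv ▸ mem_singleton_self v)).1,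
        (mem_inter.1 (hv ▸ mem_singleton_self v)).2, hv⟩
    rw [coe_union, Set.mem_union]
    by_cases hx : x₀ ∈ s
    · refine .inl (mem_image_piFinset_of_inter_eq_singleton hcover fun i => ?_)
      obtain ⟨v, hvs, hvC, hv⟩ := hpick i
      refine ⟨v, ?_, hv⟩
      rcases eq_or_ne i i₀ with rfl | hi
      · simp only [D₁, Function.update_self, mem_singleton]
        exact (mem_singleton.1 (hv ▸ mem_inter.2 ⟨hx, hx₀⟩)).symm
      · simp only [D₁, Function.update_of_ne hi, mem_erase]
        refine ⟨?_, hvC⟩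
        rintro rfl
        exact hs hx hvs (hadj i hi).ne (hadj i hi)
    · refine .inr (mem_image_piFinset_of_inter_eq_singleton hcover fun i => ?_)
      obtain ⟨v, hvs, hvC, hv⟩ := hpick i
      refine ⟨v, ?_, hv⟩
      rcases eq_or_ne i i₀ with rfl | hi
      · simp only [D₂, Function.update_self, mem_erase]
        exact ⟨by rintro rfl; exact hx hvs, hvC⟩
      · simpa only [D₂, Function.update_of_ne hi]
  calc numMaxIndep G ≤ (transversals D₁ ∪ transversals D₂).card :=
        (Set.ncard_le_ncard hsub (finite_toSet _)).trans (Set.ncard_coe_finset _).le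
    _ ≤ (Fintype.piFinset D₁).card + (Fintype.piFinset D₂).card :=
        (card_union_le _ _).trans (add_le_add card_image_le card_image_le)
    _ = _ := by
      have hD₁ : ∀ i ∈ univ.erase i₀, (D₁ i).card = (C i).card - 1 := fun i hi => by
        simp only [D₁, Function.update_of_ne (ne_of_mem_erase hi),
          card_erase_of_mem (hz i (ne_of_mem_erase hi))]
      have hD₂ : ∀ i ∈ univ.erase i₀, (D₂ i).card = (C i).card := fun i hi => by
        simp only [D₂, Function.update_of_ne (ne_of_mem_erase hi)]
      rw [Fintype.card_piFinset, Fintype.card_piFinset, ← mul_prod_erase univ _ (mem_univ i₀),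
        ← mul_prod_erase univ _ (mem_univ i₀), prod_congr rfl hD₁, prod_congr rfl hD₂]
      simp only [D₁, D₂, Function.update_self, card_singleton, card_erase_of_mem hx₀,
        transversalCount, Multiset.map_map, Function.comp_def, prod_map_val]
      ring

end CliqueCover

theorem maxIndepSets_le_f_of_cliqueStructure_general {V : Type*} [Fintype V] (G : SimpleGraph V)
    (n a : ℕ) (ha0 : 0 < a)
    (hcard : Fintype.card V = n) (hα : indepNumber G = a)
    (C : Fin a → Finset V)
    (hdisj : ∀ i j, i ≠ j → Disjoint (C i) (C j))
    (hcover : ∀ v : V, ∃ i, v ∈ C i)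
    (hclique : ∀ i, G.IsClique (C i : Set V))
    (x₀ : V) (hx₀ : x₀ ∈ C ⟨0, ha0⟩)
    (hone : ∀ i, i ≠ ⟨0, ha0⟩ → ∃! z, z ∈ C i ∧ G.Adj x₀ z) :
    numMaxIndep G ≤ fFun n a := by
  classical
  set i₀ : Fin a := ⟨0, ha0⟩
  have : Nonempty V := ⟨x₀⟩
  choose! z hz hadj using fun i hi => (hone i hi).exists
  set m := (univ.erase i₀).val.map fun i => (C i).card
  have hsum : (C i₀).card + m.sum = n := by
    have hunion : univ.biUnion C = univ :=
      eq_univ_of_forall fun v => mem_biUnion.2 <| (hcover v).imp fun i hi => ⟨mem_univ i, hi⟩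
    rw [sum_map_val, add_sum_erase univ (fun i => (C i).card) (mem_univ i₀),
      ← card_biUnion fun i _ j _ hij => hdisj i j hij, hunion, card_univ, hcard]
  have hm : Multiset.card m + 1 = a := by
    rw [Multiset.card_map, card_val, card_erase_of_mem (mem_univ i₀), card_univ, Fintype.card_fin]
    omega
  calc numMaxIndep G ≤ transversalCount (C i₀).card m :=
        numMaxIndep_le_transversalCount hcover hclique (hα.trans (Fintype.card_fin a).symm) hx₀ z
          hz hadj
    _ ≤ fFun ((C i₀).card + m.sum) (Multiset.card m + 1) :=
        transversalCount_le_fFun (card_pos.2 ⟨x₀, hx₀⟩) m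
    _ = fFun n a := by rw [hsum, hm]

/-- **Lemma 2 (i), inequality part.** Let `0 < α < n` and let `G` be a connected graph of
order `n` and independence number `α` whose vertex set is the disjoint union of the vertex
sets of `α` cliques `C 0, …, C (α−1)`, such that every edge not lying inside one of the
cliques is incident with a fixed vertex `x₀ ∈ C 0`, and `x₀` has exactly one neighbor in
each of the cliques `C 1, …, C (α−1)`. Then `♯α(G) ≤ f(n,α)`. -/
theorem maxIndepSets_le_f_of_cliqueStructure {V : Type*} [Fintype V] (G : SimpleGraph V)
    (n a : ℕ) (ha0 : 0 < a) (han : a < n) (hconn : G.Connected)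
    (hcard : Fintype.card V = n) (hα : indepNumber G = a)
    (C : Fin a → Finset V)
    (hdisj : ∀ i j, i ≠ j → Disjoint (C i) (C j))
    (hcover : ∀ v : V, ∃ i, v ∈ C i)
    (hclique : ∀ i, G.IsClique (C i : Set V))
    (x₀ : V) (hx₀ : x₀ ∈ C ⟨0, ha0⟩)
    (hedge : ∀ u v : V, G.Adj u v → (∃ i, u ∈ C i ∧ v ∈ C i) ∨ u = x₀ ∨ v = x₀)
    (hone : ∀ i, i ≠ ⟨0, ha0⟩ → ∃! z, z ∈ C i ∧ G.Adj x₀ z) :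
    numMaxIndep G ≤ fFun n a :=
  maxIndepSets_le_f_of_cliqueStructure_general G n a ha0 hcard hα C hdisj hcover hclique x₀ hx₀ hone
end

section
/- For all positive integers n and α with α < n and n ≥ 2α, the graph F(n,α) is connected, has independence number α, its subgraph F(n,α) − x_0 obtained by deleting the special cutvertex x_0 is isomorphic to G(n−1,α), and ♯α(F(n,α)) = f(n,α) = g(n−1,α) + (⌊n/α⌋−1)^{α−(n mod α)}·(⌈n/α⌉−1)^{(n mod α)−1}, where for α dividing n the last summand is interpreted as (n/α − 1)^{α−1}. -/
open Finset

/-!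
In `F(n,α)` the cliques `C_i` are the fibres of the residue map `v ↦ (v : Fin α)`, and every
other edge contains `x₀ = 0`. An independent set meets each fibre at most once, so
`α(F(n,α)) ≤ α`, with equality witnessed by `{α, …, 2α-1}`, and a maximum independent set is
the image of a section of the residue map. Avoiding `x₀`, such a section chooses freely in each
`C_i \ {x₀}`; containing `x₀`, it chooses in each `C_i` minus the neighbourhood of `x₀`, which
leaves `{x₀}` in `C_0` and `C_i \ {x_i}` otherwise. The latter count is `t(n,α)`; the former
is `g(n-1,α)`, because `v ↦ v - 1` maps `C_{i+1} \ {x₀}` onto the `i`-th residue class of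
`Fin (n-1)`.
-/

open Fin.NatCast

section CliquePartitionWithStar

variable {V ι : Type*} {G : SimpleGraph V} {c : V → ι}

lemma indepNumber_eq_of_isIndepFinset [Fintype V] {s : Finset V} {k : ℕ}
    (hle : ∀ t, IsIndepFinset G t → #t ≤ k) (hs : IsIndepFinset G s) (hk : #s = k) :
    indepNumber G = k :=
  IsGreatest.csSup_eq ⟨⟨s, hs, hk⟩, by rintro _ ⟨t, ht, rfl⟩; exact hle t ht⟩

lemma IsIndepFinset.injOn_of_fiber_adj (hc : ∀ u v, u ≠ v → c u = c v → G.Adj u v)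
    {s : Finset V} (hs : IsIndepFinset G s) : Set.InjOn c s := by
  intro u hu v hv huv
  by_contra hne
  exact hs hu hv hne (hc u v hne huv)

lemma IsIndepFinset.card_le_of_fiber_adj [Fintype ι]
    (hc : ∀ u v, u ≠ v → c u = c v → G.Adj u v)
    {s : Finset V} (hs : IsIndepFinset G s) : #s ≤ Fintype.card ι :=
  card_le_card_of_injOn c (fun _ _ => mem_coe.2 (mem_univ _)) (hs.injOn_of_fiber_adj hc)

lemma card_image_univ_of_leftInverse [Fintype ι] [DecidableEq V] {f : ι → V}
    (hf : Function.LeftInverse c f) :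
    #(univ.image f) = Fintype.card ι := by
  rw [card_image_of_injective _ hf.injective, card_univ]

lemma IsIndepFinset.exists_leftInverse_image_eq [Fintype ι] [DecidableEq ι] [DecidableEq V]
    (hc : ∀ u v, u ≠ v → c u = c v → G.Adj u v) {s : Finset V} (hs : IsIndepFinset G s)
    (hcard : #s = Fintype.card ι) :
    ∃ f : ι → V, Function.LeftInverse c f ∧ univ.image f = s := by
  have himage : s.image c = univ :=
    eq_univ_of_card _ (by rw [card_image_of_injOn (hs.injOn_of_fiber_adj hc), hcard])
  have hsurj (i : ι) : ∃ v ∈ s, c v = i := mem_image.1 (himage ▸ mem_univ i)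
  choose f hfs hfc using hsurj
  refine ⟨f, hfc, eq_of_subset_of_card_le (image_subset_iff.2 fun i _ => hfs i) ?_⟩
  rw [hcard, card_image_univ_of_leftInverse hfc]

def transversals [Fintype ι] [DecidableEq ι] [DecidableEq V] (t : ι → Finset V) :
    Finset (Finset V) :=
  (Fintype.piFinset t).image fun f => univ.image f

lemma card_transversals [Fintype ι] [DecidableEq ι] [DecidableEq V] (t : ι → Finset V)
    (ht : ∀ i, ∀ v ∈ t i, c v = i) : #(transversals t) = ∏ i, #(t i) := by
  rw [transversals, card_image_of_injOn, Fintype.card_piFinset]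
  intro f hf g hg hfg
  rw [mem_coe, Fintype.mem_piFinset] at hf hg
  funext i
  have hfi : f i ∈ univ.image g := by
    rw [← show univ.image f = univ.image g from hfg]
    exact mem_image_of_mem f (mem_univ i)
  obtain ⟨j, -, hj⟩ := mem_image.1 hfi
  have hji : j = i := by rw [← ht j _ (hg j), hj, ht i _ (hf i)]
  exact hji ▸ hj.symm

lemma isIndepFinset_image_of_leftInverse [Fintype ι] [DecidableEq V] (x : V)
    (hstar : ∀ u v, G.Adj u v → c u = c v ∨ u = x ∨ v = x)
    {f : ι → V} (hf : Function.LeftInverse c f) (hx : ∀ i j, f i = x → ¬ G.Adj x (f j)) :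
    IsIndepFinset G (univ.image f) := by
  simp only [IsIndepFinset, mem_image, mem_univ, true_and]
  rintro _ ⟨i, rfl⟩ _ ⟨j, rfl⟩ hne hadj
  rcases hstar _ _ hadj with h | h | h
  · exact hne (by rw [hf i, hf j] at h; rw [h])
  · exact hx i j h (h ▸ hadj)
  · exact hx j i h (h ▸ hadj.symm)

variable [Fintype ι] [DecidableEq ι] [Fintype V] [DecidableEq V] (x : V)

lemma isIndepFinset_card_eq_notMem_iff (hc : ∀ u v, u ≠ v → c u = c v → G.Adj u v)
    (hstar : ∀ u v, G.Adj u v → c u = c v ∨ u = x ∨ v = x) (s : Finset V) :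
    IsIndepFinset G s ∧ #s = Fintype.card ι ∧ x ∉ s ↔
      s ∈ transversals fun i => ({v | c v = i ∧ v ≠ x} : Finset V) := by
  simp only [transversals, mem_image, Fintype.mem_piFinset, mem_filter, mem_univ, true_and]
  constructor
  · rintro ⟨hs, hcard, hx⟩
    obtain ⟨f, hf, rfl⟩ := hs.exists_leftInverse_image_eq hc hcard
    exact ⟨f, fun i => ⟨hf i, fun h => hx (h ▸ mem_image_of_mem f (mem_univ i))⟩, rfl⟩
  · rintro ⟨f, hf, rfl⟩
    refine ⟨isIndepFinset_image_of_leftInverse x hstar (fun i => (hf i).1)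
      (fun i _ h => absurd h (hf i).2), card_image_univ_of_leftInverse fun i => (hf i).1, ?_⟩
    intro hx
    obtain ⟨i, -, hi⟩ := mem_image.1 hx
    exact (hf i).2 hi

lemma isIndepFinset_card_eq_mem_iff [DecidableRel G.Adj]
    (hc : ∀ u v, u ≠ v → c u = c v → G.Adj u v)
    (hstar : ∀ u v, G.Adj u v → c u = c v ∨ u = x ∨ v = x) (s : Finset V) :
    IsIndepFinset G s ∧ #s = Fintype.card ι ∧ x ∈ s ↔
      s ∈ transversals fun i => ({v | c v = i ∧ ¬ G.Adj x v} : Finset V) := by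
  simp only [transversals, mem_image, Fintype.mem_piFinset, mem_filter, mem_univ, true_and]
  constructor
  · rintro ⟨hs, hcard, hx⟩
    obtain ⟨f, hf, rfl⟩ := hs.exists_leftInverse_image_eq hc hcard
    refine ⟨f, fun i => ⟨hf i, fun hadj => ?_⟩, rfl⟩
    exact hs hx (mem_image_of_mem f (mem_univ i)) hadj.ne hadj
  · rintro ⟨f, hf, rfl⟩
    refine ⟨isIndepFinset_image_of_leftInverse x hstar (fun i => (hf i).1)
      (fun _ j _ => (hf j).2), card_image_univ_of_leftInverse fun i => (hf i).1,
      mem_image.2 ⟨c x, mem_univ _, ?_⟩⟩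
    by_contra hne
    exact (hf (c x)).2 (hc _ _ (Ne.symm hne) (hf (c x)).1.symm)

lemma ncard_isIndepFinset_card_eq [DecidableRel G.Adj]
    (hc : ∀ u v, u ≠ v → c u = c v → G.Adj u v)
    (hstar : ∀ u v, G.Adj u v → c u = c v ∨ u = x ∨ v = x) :
    {s : Finset V | IsIndepFinset G s ∧ #s = Fintype.card ι}.ncard =
      ∏ i, #({v | c v = i ∧ v ≠ x} : Finset V) +
        ∏ i, #({v | c v = i ∧ ¬ G.Adj x v} : Finset V) := by
  have hsplit : {s : Finset V | IsIndepFinset G s ∧ #s = Fintype.card ι} =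
      ↑(transversals (fun i => ({v | c v = i ∧ v ≠ x} : Finset V)) ∪
        transversals fun i => ({v | c v = i ∧ ¬ G.Adj x v} : Finset V)) := by
    ext s
    simp only [Set.mem_ofPred_eq, coe_union, Set.mem_union, mem_coe,
      ← isIndepFinset_card_eq_notMem_iff x hc hstar, ← isIndepFinset_card_eq_mem_iff x hc hstar]
    tauto
  have hdisj : Disjoint (transversals fun i => ({v | c v = i ∧ v ≠ x} : Finset V))
      (transversals fun i => ({v | c v = i ∧ ¬ G.Adj x v} : Finset V)) :=
    disjoint_left.2 fun s h₀ h₁ => ((isIndepFinset_card_eq_notMem_iff x hc hstar s).2 h₀).2.2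
      ((isIndepFinset_card_eq_mem_iff x hc hstar s).2 h₁).2.2
  rw [hsplit, Set.ncard_coe_finset, card_union_of_disjoint hdisj,
    card_transversals _ fun i v hv => (mem_filter.1 hv).2.1,
    card_transversals _ fun i v hv => (mem_filter.1 hv).2.1]

end CliquePartitionWithStar

lemma add_sub_one_div_of_mod_ne_zero {m a : ℕ} (ha : 0 < a) (h : m % a ≠ 0) :
    (m + a - 1) / a = m / a + 1 := by
  have hdiv := Nat.div_add_mod' m a
  have hmod := Nat.mod_lt m ha
  apply Nat.div_eq_of_lt_le <;> simp only [Nat.add_mul, Nat.one_mul] <;>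
    generalize m / a * a = t at hdiv ⊢ <;> omega

lemma tFun_eq {n a : ℕ} (ha : 0 < a) :
    tFun n a = if a ∣ n then (n / a - 1) ^ (a - 1)
      else (n / a - 1) ^ (a - n % a) * ((n + a - 1) / a - 1) ^ (n % a - 1) := by
  unfold tFun
  split_ifs with hdvd
  · rw [Nat.mod_eq_zero_of_dvd hdvd]
    simp only [Nat.not_lt_zero, if_false, Nat.add_zero, prod_const, Nat.card_Ico]
  · have hr : n % a ≠ 0 := fun h => hdvd (Nat.dvd_of_mod_eq_zero h)
    have hlow : ∏ i ∈ Ico 1 (n % a), (n / a + (if i < n % a then 1 else 0) - 1) =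
        (n / a) ^ (n % a - 1) := by
      rw [prod_congr rfl fun i hi => by rw [if_pos (mem_Ico.1 hi).2, Nat.add_sub_cancel],
        prod_const, Nat.card_Ico]
    have hhigh : ∏ i ∈ Ico (n % a) a, (n / a + (if i < n % a then 1 else 0) - 1) =
        (n / a - 1) ^ (a - n % a) := by
      rw [prod_congr rfl fun i hi => by rw [if_neg (not_lt.2 (mem_Ico.1 hi).1), Nat.add_zero],
        prod_const, Nat.card_Ico]
    rw [add_sub_one_div_of_mod_ne_zero ha hr, Nat.add_sub_cancel,
      ← prod_Ico_consecutive _ (Nat.one_le_iff_ne_zero.2 hr) (Nat.mod_lt n ha).le, hlow, hhigh,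
      mul_comm]

lemma card_filter_natCast_eq (n : ℕ) {a : ℕ} [NeZero a] (i : Fin a) :
    #{v : Fin n | ((v : ℕ) : Fin a) = i} = n / a + if (i : ℕ) < n % a then 1 else 0 := by
  rw [← Nat.mod_eq_of_lt i.isLt, ← Nat.count_modEq_card n (Nat.pos_of_neZero a),
    Nat.count_eq_card_filter_range, ← Nat.Iio_eq_range, ← Fin.map_valEmbedding_univ, filter_map,
    card_map]
  congr 1
  ext v
  simp [Fin.ext_iff, Fin.val_natCast, Nat.ModEq, Nat.mod_eq_of_lt i.isLt]

lemma prod_card_filter_natCast_eq_gFun (m a : ℕ) [NeZero a] :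
    ∏ j : Fin a, #{w : Fin m | ((w : ℕ) : Fin a) = j} = gFun m a := by
  have hcard (j : Fin a) : #{w : Fin m | ((w : ℕ) : Fin a) = j} =
      if (j : ℕ) < m % a then (m + a - 1) / a else m / a := by
    rw [card_filter_natCast_eq]
    split_ifs with hj
    · rw [add_sub_one_div_of_mod_ne_zero (Nat.pos_of_neZero a) (by omega)]
    · rfl
  have hlt : #{j : Fin a | (j : ℕ) < m % a} = m % a := by
    rw [Fin.card_filter_val_lt, min_eq_right (Nat.mod_lt m (Nat.pos_of_neZero a)).le]
  have hge : #{j : Fin a | ¬ (j : ℕ) < m % a} = a - m % a := by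
    have := card_filter_add_card_filter_not (s := univ) (fun j : Fin a => (j : ℕ) < m % a)
    rw [hlt, card_univ, Fintype.card_fin] at this
    omega
  rw [prod_congr rfl fun j _ => hcard j, prod_ite, prod_const, prod_const, hlt, hge, gFun, mul_comm]

instance (n a : ℕ) : DecidableRel (Fgraph n a).Adj := fun v w =>
  inferInstanceAs (Decidable (v ≠ w ∧
    ((v : ℕ) % a = w % a ∨ ((v : ℕ) = 0 ∧ (w : ℕ) < a) ∨
      ((w : ℕ) = 0 ∧ (v : ℕ) < a))))

section Fgraph

variable {n a : ℕ} [NeZero a]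

lemma fgraph_adj_of_natCast_eq {u v : Fin n} (hne : u ≠ v)
    (h : ((u : ℕ) : Fin a) = ((v : ℕ) : Fin a)) : (Fgraph n a).Adj u v :=
  ⟨hne, Or.inl (by simpa [Fin.ext_iff, Fin.val_natCast] using h)⟩

lemma natCast_eq_or_eq_zero_of_fgraph_adj [NeZero n] {u v : Fin n} (h : (Fgraph n a).Adj u v) :
    ((u : ℕ) : Fin a) = ((v : ℕ) : Fin a) ∨ u = 0 ∨ v = 0 := by
  rcases h.2 with h | ⟨h, -⟩ | ⟨h, -⟩
  · exact Or.inl (by simp [Fin.ext_iff, Fin.val_natCast, h])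
  · exact Or.inr (Or.inl (Fin.ext h))
  · exact Or.inr (Or.inr (Fin.ext h))

lemma fgraph_connected [NeZero n] : (Fgraph n a).Connected := by
  have hsmall (w : Fin n) (hw : (w : ℕ) < a) : (Fgraph n a).Reachable w 0 := by
    by_cases h : w = 0
    · rw [h]
    · exact SimpleGraph.Adj.reachable ⟨h, Or.inr (Or.inr ⟨Fin.val_zero n, hw⟩)⟩
  have hreach (v : Fin n) : (Fgraph n a).Reachable v 0 := by
    let w : Fin n := ⟨v % a, (Nat.mod_le _ _).trans_lt v.isLt⟩
    refine .trans ?_ (hsmall w (Nat.mod_lt _ (Nat.pos_of_neZero a)))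
    by_cases h : v = w
    · rw [h]
    · exact SimpleGraph.Adj.reachable ⟨h, Or.inl (Nat.mod_mod _ _).symm⟩
  exact ⟨fun u v => (hreach u).trans (hreach v).symm⟩

lemma indepNumber_fgraph [NeZero n] (h2a : 2 * a ≤ n) : indepNumber (Fgraph n a) = a := by
  let f : Fin a → Fin n := fun i => ⟨i + a, by omega⟩
  have hf (i : Fin a) : (((f i : Fin n) : ℕ) : Fin a) = i := by
    simp only [f, Nat.cast_add, Fin.natCast_self, add_zero, Fin.cast_val_eq_self]
  have hf0 (i : Fin a) : f i ≠ 0 := fun h => by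
    have := congrArg Fin.val h
    simp only [f, Fin.val_zero] at this
    omega
  refine indepNumber_eq_of_isIndepFinset (fun t ht => ?_)
    (isIndepFinset_image_of_leftInverse (c := fun v : Fin n => ((v : ℕ) : Fin a)) 0
      (fun _ _ => natCast_eq_or_eq_zero_of_fgraph_adj) hf fun i _ h => absurd h (hf0 i)) ?_
  · simpa using ht.card_le_of_fiber_adj fun _ _ => fgraph_adj_of_natCast_eq
  · rw [card_image_univ_of_leftInverse (c := fun v : Fin n => ((v : ℕ) : Fin a)) hf,
      Fintype.card_fin]

lemma prod_card_filter_natCast_eq_and_ne_zero (m : ℕ) :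
    ∏ i : Fin a, #{v : Fin (m + 1) | ((v : ℕ) : Fin a) = i ∧ v ≠ 0} =
      ∏ j : Fin a, #{w : Fin m | ((w : ℕ) : Fin a) = j} := by
  rw [← Equiv.prod_comp (Equiv.addRight (1 : Fin a))]
  refine prod_congr rfl fun j _ => ?_
  rw [Fin.card_filter_univ_succ]
  simp only [Fin.val_zero, ne_eq, not_true_eq_false, and_false, if_false, Fin.val_succ,
    Nat.cast_succ, Fin.succ_ne_zero, not_false_eq_true, and_true, Equiv.coe_addRight,
    add_left_inj]

lemma card_filter_natCast_eq_zero_and_not_adj_zero [NeZero n] :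
    #{v : Fin n | ((v : ℕ) : Fin a) = 0 ∧ ¬ (Fgraph n a).Adj 0 v} = 1 := by
  rw [card_eq_one]
  refine ⟨0, ext fun v => ?_⟩
  simp only [mem_filter, mem_univ, true_and, mem_singleton]
  constructor
  · rintro ⟨hv, hadj⟩
    by_contra hne
    exact hadj (fgraph_adj_of_natCast_eq (Ne.symm hne) (by rw [hv, Fin.val_zero, Nat.cast_zero]))
  · rintro rfl
    exact ⟨by rw [Fin.val_zero, Nat.cast_zero], (Fgraph n a).loopless.irrefl 0⟩

lemma fgraph_adj_zero_iff_of_natCast_eq [NeZero n] (han : a ≤ n) {i : Fin a} (hi : i ≠ 0)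
    {v : Fin n} (hv : ((v : ℕ) : Fin a) = i) :
    (Fgraph n a).Adj 0 v ↔ v = ⟨i, i.isLt.trans_le han⟩ := by
  have hmod : (v : ℕ) % a = i := by rw [← hv, Fin.val_natCast]
  have hi' : (i : ℕ) ≠ 0 := fun h => hi (Fin.ext h)
  constructor
  · rintro ⟨-, h | ⟨-, hlt⟩ | ⟨h0, -⟩⟩
    · rw [Fin.val_zero, Nat.zero_mod, hmod] at h
      exact absurd h.symm hi'
    · exact Fin.ext (by rw [← hmod, Nat.mod_eq_of_lt hlt])
    · rw [h0, Nat.zero_mod] at hmod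
      exact absurd hmod.symm hi'
  · rintro rfl
    exact ⟨fun h => hi' (congrArg Fin.val h).symm, Or.inr (Or.inl ⟨Fin.val_zero n, i.isLt⟩)⟩

lemma card_filter_natCast_eq_and_not_adj_zero [NeZero n] (han : a ≤ n) {i : Fin a}
    (hi : i ≠ 0) :
    #{v : Fin n | ((v : ℕ) : Fin a) = i ∧ ¬ (Fgraph n a).Adj 0 v} =
      #{v : Fin n | ((v : ℕ) : Fin a) = i} - 1 := by
  have hfilter : ({v : Fin n | ((v : ℕ) : Fin a) = i ∧ ¬ (Fgraph n a).Adj 0 v} : Finset _) =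
      ({v : Fin n | ((v : ℕ) : Fin a) = i} : Finset _).erase ⟨i, i.isLt.trans_le han⟩ := by
    ext v
    simp only [mem_filter, mem_erase, mem_univ, true_and]
    exact and_comm.trans (and_congr_left fun hv =>
      not_congr (fgraph_adj_zero_iff_of_natCast_eq han hi hv))
  rw [hfilter, card_erase_of_mem (by simp [Fin.cast_val_eq_self])]

lemma prod_card_filter_natCast_eq_and_not_adj_zero_eq_tFun [NeZero n] (han : a ≤ n) :
    ∏ i : Fin a, #{v : Fin n | ((v : ℕ) : Fin a) = i ∧ ¬ (Fgraph n a).Adj 0 v} =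
      tFun n a := by
  obtain ⟨b, rfl⟩ := Nat.exists_eq_add_one_of_ne_zero (NeZero.ne a)
  rw [Fin.prod_univ_succ, card_filter_natCast_eq_zero_and_not_adj_zero, one_mul, tFun,
    prod_Ico_eq_prod_range, Nat.add_sub_cancel, ← Fin.prod_univ_eq_prod_range]
  refine prod_congr rfl fun j _ => ?_
  rw [card_filter_natCast_eq_and_not_adj_zero han (Fin.succ_ne_zero j), card_filter_natCast_eq,
    Fin.val_succ, add_comm 1]

lemma numMaxIndep_fgraph (m : ℕ) (h2a : 2 * a ≤ m + 1) :
    numMaxIndep (Fgraph (m + 1) a) = fFun (m + 1) a := by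
  have hcount := ncard_isIndepFinset_card_eq (c := fun v : Fin (m + 1) => ((v : ℕ) : Fin a)) 0
    (fun _ _ => fgraph_adj_of_natCast_eq) (fun _ _ => natCast_eq_or_eq_zero_of_fgraph_adj)
  rw [Fintype.card_fin] at hcount
  rw [numMaxIndep, indepNumber_fgraph h2a, hcount, prod_card_filter_natCast_eq_and_ne_zero,
    prod_card_filter_natCast_eq_gFun,
    prod_card_filter_natCast_eq_and_not_adj_zero_eq_tFun (by omega), fFun, Nat.add_sub_cancel]

end Fgraph

lemma nonempty_fgraph_induce_compl_zero_iso (m a : ℕ) :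
    Nonempty ((Fgraph (m + 1) a).induce ({0}ᶜ : Set (Fin (m + 1))) ≃g Ggraph m a) := by
  refine ⟨(⟨((Equiv.ofInjective _ (Fin.succ_injective m)).trans
    (Equiv.setCongr (Fin.range_succ m))), fun {u v} => ?_⟩ : Ggraph m a ≃g _).symm⟩
  simp only [Fgraph, Ggraph, SimpleGraph.comap_adj, Equiv.trans_apply, Equiv.setCongr_apply,
    Equiv.ofInjective_apply, Function.Embedding.coe_subtype, Fin.val_succ, ne_eq, Fin.succ_inj,
    Nat.add_one_ne_zero, false_and, or_false]
  exact and_congr_right fun _ => (Nat.ModEq.refl 1).add_iff_right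

theorem Fgraph_connected_indepNumber_numMaxIndep_general (n a : ℕ) (ha0 : 0 < a)
    (h2a : 2 * a ≤ n) (x₀ : Fin n) (hx₀ : x₀.val = 0) :
    (Fgraph n a).Connected ∧
      indepNumber (Fgraph n a) = a ∧
      Nonempty (((Fgraph n a).induce ({x₀}ᶜ : Set (Fin n))) ≃g Ggraph (n - 1) a) ∧
      numMaxIndep (Fgraph n a) = fFun n a ∧
      fFun n a = gFun (n - 1) a +
        (if a ∣ n then (n / a - 1) ^ (a - 1)
          else (n / a - 1) ^ (a - n % a) * ((n + a - 1) / a - 1) ^ (n % a - 1)) := by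
  have : NeZero a := ⟨ha0.ne'⟩
  obtain ⟨m, rfl⟩ : ∃ m, n = m + 1 := ⟨n - 1, by omega⟩
  obtain rfl : x₀ = 0 := Fin.ext hx₀
  rw [Nat.add_sub_cancel]
  exact ⟨fgraph_connected, indepNumber_fgraph h2a, nonempty_fgraph_induce_compl_zero_iso m a,
    numMaxIndep_fgraph m h2a, by rw [fFun, tFun_eq ha0, Nat.add_sub_cancel]⟩

/-- For `0 < α < n` with `n ≥ 2α`: the graph `F(n,α)` is connected, has independence number
`α`, deleting its special cutvertex `x₀` yields a graph isomorphic to `G(n−1,α)`, and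
`♯α(F(n,α)) = f(n,α) = g(n−1,α) + (⌊n/α⌋−1)^(α−(n mod α)) (⌈n/α⌉−1)^((n mod α)−1)`, where
for `α ∣ n` the last summand is interpreted as `(n/α − 1)^(α−1)`. -/
theorem Fgraph_connected_indepNumber_numMaxIndep (n a : ℕ) (ha0 : 0 < a) (han : a < n)
    (h2a : 2 * a ≤ n) (x₀ : Fin n) (hx₀ : x₀.val = 0) :
    (Fgraph n a).Connected ∧
      indepNumber (Fgraph n a) = a ∧
      Nonempty (((Fgraph n a).induce ({x₀}ᶜ : Set (Fin n))) ≃g Ggraph (n - 1) a) ∧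
      numMaxIndep (Fgraph n a) = fFun n a ∧
      fFun n a = gFun (n - 1) a +
        (if a ∣ n then (n / a - 1) ^ (a - 1)
          else (n / a - 1) ^ (a - n % a) * ((n + a - 1) / a - 1) ^ (n % a - 1)) :=
  Fgraph_connected_indepNumber_numMaxIndep_general n a ha0 h2a x₀ hx₀
end

section
/- Let n and α be positive integers with α < n < 2α, and let G be a connected graph of order n and independence number α having a vertex x_0 such that G − x_0 is isomorphic to G(n−1,α). Then G is isomorphic to a graph that arises from F(n,α) by adding edges (possibly none) incident with the special cutvertex x_0 of F(n,α). -/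
open Finset

/-
Since `n < 2α`, the graph `G - x₀ ≅ G(n-1,α)` is a disjoint union of `α` cliques of order one
or two, and by connectivity `x₀` has a neighbour in each of them. Relabel `G - x₀` so that this
neighbour is the least vertex of its residue class, then shift every label up by one and send
`x₀` to `0`: residue classes of `G(n-1,α)` become those of `F(n,α) - 0`, and the `α` chosen
neighbours become `1, …, α`, the neighbours of the special cutvertex `0` in `F(n,α)`.
-/

theorem Ggraph_adj {m a : ℕ} {u v : Fin m} :
    (Ggraph m a).Adj u v ↔ u ≠ v ∧ u.val % a = v.val % a :=
  Iff.rfl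

theorem Fgraph_adj {n a : ℕ} {u v : Fin n} :
    (Fgraph n a).Adj u v ↔
      u ≠ v ∧ (u.val % a = v.val % a ∨ (u.val = 0 ∧ v.val < a) ∨ (v.val = 0 ∧ u.val < a)) :=
  Iff.rfl

theorem Fgraph_adj_succ_succ {m a : ℕ} (u v : Fin m) :
    (Fgraph (m + 1) a).Adj u.succ v.succ ↔ (Ggraph m a).Adj u v := by
  have hmod : (u.val + 1) % a = (v.val + 1) % a ↔ u.val % a = v.val % a :=
    ⟨Nat.ModEq.add_right_cancel' 1, Nat.ModEq.add_right 1⟩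
  simp [Fgraph_adj, Ggraph_adj, hmod]

theorem Fgraph_zero_adj_succ {m a : ℕ} (hm : m + 1 < 2 * a) (j : Fin m) :
    (Fgraph (m + 1) a).Adj 0 j.succ ↔ j.val < a := by
  have hmod : (j.val + 1) % a = 0 ↔ j.val + 1 = a := by
    refine ⟨fun h => Nat.eq_of_dvd_of_lt_two_mul (by omega) (Nat.dvd_of_mod_eq_zero h) (by omega),
      fun h => h ▸ Nat.mod_self a⟩
  simp only [Fgraph_adj, Fin.val_zero, Fin.val_succ, Nat.zero_mod, eq_comm (a := 0), hmod, true_and]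
  exact ⟨fun h => by omega, fun h => ⟨(Fin.succ_ne_zero j).symm, by omega⟩⟩

def Ggraph.autOfModEq {m a : ℕ} (σ : Equiv.Perm (Fin m)) (hσ : ∀ j, (σ j).val % a = j.val % a) :
    Ggraph m a ≃g Ggraph m a where
  toEquiv := σ
  map_rel_iff' := by simp [Ggraph_adj, hσ]

section FibreSwap

variable {α β : Type*} [DecidableEq α]

def fibreSwap (k : α → β) (p q : β → α) (j : α) : α :=
  Equiv.swap (p (k j)) (q (k j)) j

variable {k : α → β} {p q : β → α}

theorem comp_fibreSwap (hp : ∀ b, k (p b) = b) (hq : ∀ b, k (q b) = b) (j : α) :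
    k (fibreSwap k p q j) = k j := by
  unfold fibreSwap
  rw [Equiv.swap_apply_def]
  split_ifs with h₁ h₂
  · rw [hq, h₁, hp]
  · rw [hp, h₂, hq]
  · rfl

theorem fibreSwap_involutive (hp : ∀ b, k (p b) = b) (hq : ∀ b, k (q b) = b) :
    Function.Involutive (fibreSwap k p q) := fun j => by
  change Equiv.swap (p (k (fibreSwap k p q j))) (q (k (fibreSwap k p q j))) (fibreSwap k p q j) = j
  rw [comp_fibreSwap hp hq]
  exact Equiv.swap_apply_self _ _ _

theorem fibreSwap_apply_left (hp : ∀ b, k (p b) = b) (b : β) : fibreSwap k p q (p b) = q b := by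
  simp [fibreSwap, hp]

end FibreSwap

/-- In each residue class, swap the least element with a vertex whose preimage satisfies `N`. -/
theorem exists_iso_Ggraph_symm_lt_of_forall_residue {W : Type*} {H : SimpleGraph W} {m a : ℕ}
    (ha : 0 < a) (ham : a ≤ m) (ψ : H ≃g Ggraph m a) (N : W → Prop)
    (hN : ∀ r : Fin a, ∃ j : Fin m, j.val % a = r ∧ N (ψ.symm j)) :
    ∃ φ : H ≃g Ggraph m a, ∀ j : Fin m, j.val < a → N (φ.symm j) := by
  choose q hq_mod hq using hN
  let k : Fin m → Fin a := fun j => ⟨j.val % a, Nat.mod_lt _ ha⟩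
  have hk_castLE : ∀ r, k (Fin.castLE ham r) = r := fun r => Fin.ext (Nat.mod_eq_of_lt r.2)
  have hk_q : ∀ r, k (q r) = r := fun r => Fin.ext (hq_mod r)
  let σ := (fibreSwap_involutive hk_castLE hk_q).toPerm
  refine ⟨ψ.trans (Ggraph.autOfModEq σ fun j => congrArg Fin.val (comp_fibreSwap hk_castLE hk_q j)),
    fun j hj => ?_⟩
  have : σ.symm j = q ⟨j, hj⟩ := fibreSwap_apply_left hk_castLE ⟨j, hj⟩
  show N (ψ.symm (σ.symm j))
  exact this ▸ hq ⟨j, hj⟩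

/-- `T` is a nonempty union of components of `H - x`. -/
theorem SimpleGraph.Connected.exists_adj_of_induce_compl {V : Type*} {H : SimpleGraph V}
    (hH : H.Connected) {x : V} {T : Set ({x}ᶜ : Set V)}
    (hT : ∀ u v, (H.induce {x}ᶜ).Adj u v → u ∈ T → v ∈ T) (hne : T.Nonempty) :
    ∃ w ∈ T, H.Adj x w := by
  obtain ⟨u, hu⟩ := hne
  obtain ⟨p⟩ := hH.preconnected u x
  obtain ⟨d, -, ⟨w, hwT, hw⟩, hd⟩ :=
    p.exists_boundary_dart (Subtype.val '' T) ⟨u, hu, rfl⟩ (by rintro ⟨w, -, hw⟩; exact w.2 hw)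
  by_cases hx : d.snd = x
  · exact ⟨w, hwT, hw ▸ hx ▸ d.adj.symm⟩
  · exact absurd ⟨⟨d.snd, hx⟩, hT w _ (SimpleGraph.induce_adj.2 (hw ▸ d.adj)) hwT, rfl⟩ hd

theorem SimpleGraph.le_and_extra_adj_at_of_agree_off {V : Type*} {F K : SimpleGraph V} {x : V}
    (hoff : ∀ u v, u ≠ x → v ≠ x → (F.Adj u v ↔ K.Adj u v)) (hx : ∀ v, F.Adj x v → K.Adj x v) :
    F ≤ K ∧ ∀ u v, K.Adj u v → ¬ F.Adj u v → u = x ∨ v = x := by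
  refine ⟨fun u v h => ?_, fun u v hK hF => ?_⟩
  · by_cases hu : u = x
    · subst hu; exact hx v h
    by_cases hv : v = x
    · subst hv; exact (hx u h.symm).symm
    exact (hoff u v hu hv).1 h
  · by_contra! h
    exact hF ((hoff u v h.1 h.2).2 hK)

theorem iso_Fgraph_plus_edges_at_special_cutvertex_general {V : Type*}
    (G : SimpleGraph V) (n a : ℕ) (han : a < n) (hn2a : n < 2 * a)
    (hconn : G.Connected) (x₀ : V)
    (hiso : Nonempty ((G.induce ({x₀}ᶜ : Set V)) ≃g Ggraph (n - 1) a)) :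
    ∃ G' : SimpleGraph (Fin n), Fgraph n a ≤ G' ∧
      (∀ u v : Fin n, G'.Adj u v → ¬ (Fgraph n a).Adj u v → u.val = 0 ∨ v.val = 0) ∧
      Nonempty (G ≃g G') := by
  classical
  obtain ⟨m, rfl⟩ : ∃ m, n = m + 1 := ⟨n - 1, by omega⟩
  rw [Nat.add_sub_cancel] at hiso
  obtain ⟨ψ⟩ := hiso
  have nbr_in_class : ∀ r : Fin a, ∃ j : Fin m, j.val % a = r ∧ G.Adj x₀ (ψ.symm j) := by
    intro r
    obtain ⟨w, hw, hadj⟩ := hconn.exists_adj_of_induce_compl (T := {w | (ψ w).val % a = r})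
      (fun u v huv hu => (ψ.map_adj_iff.2 huv).2.symm.trans hu)
      ⟨ψ.symm (Fin.castLE (by omega) r), by simp [Nat.mod_eq_of_lt r.2]⟩
    exact ⟨ψ w, hw, by simpa using hadj⟩
  obtain ⟨φ, hφ⟩ :=
    exists_iso_Ggraph_symm_lt_of_forall_residue (by omega) (by omega) ψ (G.Adj x₀ ·) nbr_in_class
  let E : Fin (m + 1) ≃ V := (finSuccEquiv m).trans
    ((Equiv.optionCongr φ.symm.toEquiv).trans (Equiv.optionSubtypeNe x₀))
  obtain ⟨hle, hext⟩ := SimpleGraph.le_and_extra_adj_at_of_agree_off (K := G.comap E) (x := 0)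
    (fun u v hu hv => by
      obtain ⟨u, rfl⟩ := Fin.exists_succ_eq.2 hu
      obtain ⟨v, rfl⟩ := Fin.exists_succ_eq.2 hv
      rw [Fgraph_adj_succ_succ, ← φ.symm.map_adj_iff]
      rfl)
    (fun v hv => by
      obtain ⟨j, rfl⟩ := Fin.exists_succ_eq.2 hv.1.symm
      exact hφ j ((Fgraph_zero_adj_succ hn2a j).1 hv))
  exact ⟨G.comap E, hle, fun u v huv hF => (hext u v huv hF).imp (congrArg Fin.val)
    (congrArg Fin.val), ⟨(SimpleGraph.Iso.comap E G).symm⟩⟩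

/-- Let `α < n < 2α`, and let `G` be a connected graph of order `n` and independence number
`α` with a vertex `x₀` such that `G − x₀ ≅ G(n−1,α)`. Then `G` is isomorphic to a graph
that arises from `F(n,α)` by adding edges (possibly none), all incident with the special
cutvertex `x₀ = 0` of `F(n,α)`. -/
theorem iso_Fgraph_plus_edges_at_special_cutvertex {V : Type*} [Fintype V]
    (G : SimpleGraph V) (n a : ℕ) (ha0 : 0 < a) (han : a < n) (hn2a : n < 2 * a)
    (hconn : G.Connected) (hcard : Fintype.card V = n) (hα : indepNumber G = a) (x₀ : V)
    (hiso : Nonempty ((G.induce ({x₀}ᶜ : Set V)) ≃g Ggraph (n - 1) a)) :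
    ∃ G' : SimpleGraph (Fin n), Fgraph n a ≤ G' ∧
      (∀ u v : Fin n, G'.Adj u v → ¬ (Fgraph n a).Adj u v → u.val = 0 ∨ v.val = 0) ∧
      Nonempty (G ≃g G') :=
  iso_Fgraph_plus_edges_at_special_cutvertex_general G n a han hn2a hconn x₀ hiso
end

section
/- For all integers n, α, n' with α ≥ 2, n' ≥ 1, and n − n' − 2 ≥ α − 1, the inequality g(n − n' − 2, α − 1) + n'·f(n − n' − 1, α − 1) ≤ f(n, α) holds. -/
open Finset

lemma gFun_formula {k : ℕ} (hk : 0 < k) (q r : ℕ) (hr : r < k) :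
    gFun (k * q + r) k = q ^ (k - r) * (q + 1) ^ r := by
  have hdiv : (k * q + r) / k = q := by
    rw [Nat.mul_add_div hk, Nat.div_eq_of_lt hr, add_zero]
  have hmod : (k * q + r) % k = r := by
    rw [Nat.mul_add_mod, Nat.mod_eq_of_lt hr]
  unfold gFun
  rw [hdiv, hmod]
  rcases Nat.eq_zero_or_pos r with h0 | h0
  · subst h0; simp
  · have hceil : (k * q + r + k - 1) / k = q + 1 := by
      have : k * q + r + k - 1 = k * (q + 1) + (r - 1) := by ring_nf; omega
      rw [this, Nat.mul_add_div hk, Nat.div_eq_of_lt (by omega)]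
    rw [hceil]

lemma gFun_eq_zero {n k : ℕ} (hk : 0 < k) (h : n < k) : gFun n k = 0 := by
  have h2 := gFun_formula hk 0 n h
  rw [Nat.mul_zero, Nat.zero_add] at h2
  rw [h2, Nat.zero_pow (show 0 < k - n by omega), zero_mul]

lemma gFun_zero_zero : gFun 0 0 = 1 := by decide

lemma gFun_ratio {j : ℕ} (hj : 0 < j) (M : ℕ) :
    (M / j) * gFun (M + 1) j = (M / j + 1) * gFun M j := by
  obtain ⟨q, r, hr, hM⟩ : ∃ q r, r < j ∧ M = j * q + r :=
    ⟨M / j, M % j, Nat.mod_lt _ hj, (Nat.div_add_mod M j).symm⟩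
  subst hM
  have hdiv : (j * q + r) / j = q := by
    rw [Nat.mul_add_div hj, Nat.div_eq_of_lt hr, add_zero]
  rw [hdiv, gFun_formula hj q r hr]
  rcases Nat.lt_or_ge (r + 1) j with h1 | h1
  · -- M+1 = j*q + (r+1)
    have e : j * q + r + 1 = j * q + (r + 1) := by ring
    rw [e, gFun_formula hj q (r + 1) h1]
    have e2 : j - r = (j - (r + 1)) + 1 := by omega
    rw [e2, pow_succ, pow_succ]
    ring
  · -- r + 1 = j, M+1 = j*(q+1)
    have hrj : r = j - 1 := by omega
    have e : j * q + r + 1 = j * (q + 1) + 0 := by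
      have : j * (q + 1) = j * q + j := by ring
      omega
    rw [e, gFun_formula hj (q + 1) 0 hj]
    have e2 : j - r = 1 := by omega
    have e3 : j = r + 1 := by omega
    have e4 : j - 0 = r + 1 := by omega
    rw [e2, e4]
    ring

lemma gFun_mono_succ {k : ℕ} (hk : 0 < k) (M : ℕ) : gFun M k ≤ gFun (M + 1) k := by
  rcases Nat.lt_or_ge M k with h | h
  · rw [gFun_eq_zero hk h]; exact Nat.zero_le _
  · have hq : 0 < M / k := Nat.div_pos h hk
    have := gFun_ratio hk M
    have h2 : (M / k) * gFun M k ≤ (M / k) * gFun (M + 1) k := by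
      rw [this]; exact Nat.mul_le_mul_right _ (by omega)
    exact Nat.le_of_mul_le_mul_left h2 hq

lemma gFun_mono_s13 {k : ℕ} (hk : 0 < k) {M N : ℕ} (h : M ≤ N) : gFun M k ≤ gFun N k := by
  induction N with
  | zero => simp_all
  | succ n ih =>
    rcases Nat.lt_or_ge M (n + 1) with h' | h'
    · exact le_trans (ih (by omega)) (gFun_mono_succ hk n)
    · have : M = n + 1 := by omega
      subst this; exact le_refl _

/-- ceil division -/
lemma gFun_peak {k : ℕ} (hk : 0 < k) (n : ℕ) :
    gFun n k = ((n + k - 1) / k) * gFun (n - (n + k - 1) / k) (k - 1) := by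
  obtain ⟨q, r, hr, hn⟩ : ∃ q r, r < k ∧ n = k * q + r :=
    ⟨n / k, n % k, Nat.mod_lt _ hk, (Nat.div_add_mod n k).symm⟩
  subst hn
  rcases Nat.eq_zero_or_pos r with h0 | h0
  · subst h0
    have hceil : (k * q + 0 + k - 1) / k = q := by
      have e : k * q + 0 + k - 1 = k * q + (k - 1) := by omega
      rw [e, Nat.mul_add_div hk, Nat.div_eq_of_lt (by omega), add_zero]
    rw [hceil, gFun_formula hk q 0 hk]
    rcases Nat.eq_zero_or_pos (k - 1) with hk1 | hk1
    · -- k = 1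
      have : k = 1 := by omega
      subst this
      simp [gFun_zero_zero]
    · have e : k * q + 0 - q = (k - 1) * q + 0 := by
        cases k with
        | zero => omega
        | succ m =>
          have h5 : (m + 1) * q = m * q + q := by ring
          simp only [Nat.succ_sub_one]
          omega
      rw [e, gFun_formula hk1 q 0 hk1]
      have e2 : k - 0 = (k - 1 - 0) + 1 := by omega
      rw [e2, pow_succ]
      simp [mul_comm]
  · have hk2 : 2 ≤ k := by omega
    have hceil : (k * q + r + k - 1) / k = q + 1 := by
      have e : k * q + r + k - 1 = k * (q + 1) + (r - 1) := by
        have : k * (q + 1) = k * q + k := by ring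
        omega
      rw [e, Nat.mul_add_div hk, Nat.div_eq_of_lt (by omega)]
    rw [hceil, gFun_formula hk q r hr]
    have hk1 : 0 < k - 1 := by omega
    have e : k * q + r - (q + 1) = (k - 1) * q + (r - 1) := by
      cases k with
      | zero => omega
      | succ m =>
        have : (m + 1) * q = m * q + q := by ring
        simp only [Nat.succ_sub_one]
        omega
    rw [e, gFun_formula hk1 q (r - 1) (by omega)]
    have e2 : k - 1 - (r - 1) = k - r := by omega
    have e3 : r = (r - 1) + 1 := by omega
    rw [e2]
    calc q ^ (k - r) * (q + 1) ^ r = q ^ (k-r) * (q+1)^((r-1)+1) := by rw [← e3]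
    _ = (q + 1) * (q ^ (k - r) * (q + 1) ^ (r - 1)) := by rw [pow_succ]; ring

lemma gFun_zero_right_s13 {m : ℕ} (hm : 0 < m) : gFun m 0 = 0 := by
  simp [gFun, Nat.zero_pow (show 0 < m from hm)]

lemma ceil_mul_ge {k : ℕ} (hk : 0 < k) (n : ℕ) : n ≤ ((n + k - 1) / k) * k := by
  have h1 := Nat.div_add_mod (n + k - 1) k
  have h2 : (n + k - 1) % k < k := Nat.mod_lt _ hk
  have h3 : k * ((n + k - 1) / k) = ((n + k - 1) / k) * k := mul_comm _ _
  omega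

lemma stepUp {k x n : ℕ} (hk : 2 ≤ k) (h : x * k + 1 ≤ n) :
    x * gFun (n - x) (k - 1) ≤ (x + 1) * gFun (n - x - 1) (k - 1) := by
  have hj : 0 < k - 1 := by omega
  set j := k - 1 with hjdef
  have hxk : x * j + x = x * k := by
    cases k with
    | zero => omega
    | succ m => simp only [hjdef, Nat.succ_sub_one]; ring
  have hxn : x + 1 ≤ n := by nlinarith
  set M := n - x - 1 with hM
  have hM1 : n - x = M + 1 := by omega
  have hxq : x ≤ M / j := (Nat.le_div_iff_mul_le hj).mpr (by omega)
  rcases Nat.eq_zero_or_pos (M / j) with h0 | h0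
  · have : x = 0 := by omega
    subst this; simp
  · have hr := gFun_ratio hj M
    rw [hM1]
    have key : (M / j) * (x * gFun (M + 1) j) ≤ (M / j) * ((x + 1) * gFun M j) := by
      calc (M / j) * (x * gFun (M + 1) j) = x * ((M / j) * gFun (M + 1) j) := by ring
      _ = x * ((M / j + 1) * gFun M j) := by rw [hr]
      _ = (x * (M / j + 1)) * gFun M j := by ring
      _ ≤ ((x + 1) * (M / j)) * gFun M j := by
          apply Nat.mul_le_mul_right
          nlinarith
      _ = (M / j) * ((x + 1) * gFun M j) := by ring
    exact Nat.le_of_mul_le_mul_left key h0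

lemma stepDown {k y n : ℕ} (hk : 2 ≤ k) (hy1 : n ≤ y * k) (hy2 : y + 1 ≤ n) :
    (y + 1) * gFun (n - y - 1) (k - 1) ≤ y * gFun (n - y) (k - 1) := by
  have hj : 0 < k - 1 := by omega
  set j := k - 1 with hjdef
  have hyk : y * j + y = y * k := by
    cases k with
    | zero => omega
    | succ m => simp only [hjdef, Nat.succ_sub_one]; ring
  set M := n - y - 1 with hM
  have hM1 : n - y = M + 1 := by omega
  have e2 : (y + 1) * j = y * j + j := by ring
  have hlt : M < (y + 1) * j := by omega
  have hq : M / j ≤ y := by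
    have := (Nat.div_lt_iff_lt_mul hj).mpr hlt
    omega
  rcases Nat.eq_zero_or_pos (M / j) with h0 | h0
  · have hMj : M < j := by
      rcases Nat.lt_or_ge M j with h | h
      · exact h
      · exact absurd (Nat.div_pos h hj) (by omega)
    rw [gFun_eq_zero hj hMj]
    simp
  · have hr := gFun_ratio hj M
    rw [hM1]
    have key : (M / j) * ((y + 1) * gFun M j) ≤ (M / j) * (y * gFun (M + 1) j) := by
      calc (M / j) * ((y + 1) * gFun M j) = ((y + 1) * (M / j)) * gFun M j := by ring
      _ ≤ (y * (M / j + 1)) * gFun M j := by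
          apply Nat.mul_le_mul_right
          nlinarith
      _ = y * ((M / j + 1) * gFun M j) := by ring
      _ = y * ((M / j) * gFun (M + 1) j) := by rw [hr]
      _ = (M / j) * (y * gFun (M + 1) j) := by ring
    exact Nat.le_of_mul_le_mul_left key h0

lemma keyLemma {k x n : ℕ} (hk : 0 < k) (hx : x ≤ n) :
    x * gFun (n - x) (k - 1) ≤ gFun n k := by
  rcases Nat.lt_or_ge k 2 with hk1 | hk2
  · -- k = 1
    have : k = 1 := by omega
    subst this
    simp only [Nat.sub_self]
    rcases Nat.eq_or_lt_of_le hx with he | hlt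
    · subst he; rw [Nat.sub_self, gFun_zero_zero, gFun_one, mul_one]
    · rw [gFun_zero_right_s13 (by omega), mul_zero]
      exact Nat.zero_le _
  · have hk : 0 < k := by omega
    set c := (n + k - 1) / k with hc
    rcases le_or_gt x c with hxc | hcx
    · -- phase A : induction on d = c - x
      obtain ⟨d, hd⟩ : ∃ d, x + d = c := ⟨c - x, by omega⟩
      clear hxc
      induction d generalizing x with
      | zero =>
        have hxe : x = c := by omega
        subst hxe
        rw [gFun_peak hk n]
      | succ d ih =>
        have hn1 : 0 < n := by
          rcases Nat.eq_zero_or_pos n with h0 | h0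
          · exfalso
            have : c = 0 := by
              rw [hc, h0, Nat.zero_add, Nat.div_eq_of_lt (by omega)]
            omega
          · exact h0
        have hstep : x * k + 1 ≤ n := by
          have hxc : x + 1 ≤ c := by omega
          have h2 : (x + 1) * k ≤ n + k - 1 := (Nat.le_div_iff_mul_le hk).mp (hc ▸ hxc)
          have h3 : (x + 1) * k = x * k + k := by ring
          omega
        have hxn : x + 1 ≤ n := by
          have : x ≤ x * k := Nat.le_mul_of_pos_right x hk
          omega
        calc x * gFun (n - x) (k - 1) ≤ (x + 1) * gFun (n - x - 1) (k - 1) :=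
              stepUp hk2 hstep
        _ = (x + 1) * gFun (n - (x + 1)) (k - 1) := by rw [Nat.sub_sub]
        _ ≤ gFun n k := ih hxn (by omega)
    · -- phase B : induction on e = x - c
      obtain ⟨e, he⟩ : ∃ e, c + e = x := ⟨x - c, by omega⟩
      induction e generalizing x with
      | zero =>
        have hxe : x = c := by omega
        subst hxe
        rw [gFun_peak hk n]
      | succ e ih =>
        have hy1 : n ≤ (c + e) * k := by
          have h1 : n ≤ c * k := ceil_mul_ge hk n
          have h2 : c * k ≤ (c + e) * k := Nat.mul_le_mul_right k (by omega)
          omega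
        have hy2 : (c + e) + 1 ≤ n := by omega
        have hstep := stepDown hk2 hy1 hy2
        have hrw : x = c + e + 1 := by omega
        subst hrw
        calc (c + e + 1) * gFun (n - (c + e + 1)) (k - 1)
            = (c + e + 1) * gFun (n - (c + e) - 1) (k - 1) := by rw [Nat.sub_sub]
        _ ≤ (c + e) * gFun (n - (c + e)) (k - 1) := hstep
        _ ≤ gFun n k := by
            rcases Nat.eq_zero_or_pos e with h0 | h0
            · subst h0
              rw [Nat.add_zero, gFun_peak hk n]
            · exact ih (by omega) (by omega) rfl

lemma tFun_formula_zero {b : ℕ} (hb : 0 < b) (q : ℕ) :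
    tFun (b * q) b = (q - 1) ^ (b - 1) := by
  unfold tFun
  have hdiv : (b * q) / b = q := Nat.mul_div_cancel_left q hb
  have hmod : (b * q) % b = 0 := Nat.mul_mod_right b q
  rw [hdiv, hmod]
  have hcongr : ∀ i ∈ Finset.Ico 1 b, (q + (if i < 0 then 1 else 0)) - 1 = q - 1 := by
    intro i _; simp
  rw [Finset.prod_congr rfl hcongr, Finset.prod_const, Nat.card_Ico]

lemma tFun_formula_pos {b q r : ℕ} (hb : 0 < b) (hr : 0 < r) (hrb : r < b) :
    tFun (b * q + r) b = q ^ (r - 1) * (q - 1) ^ (b - r) := by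
  unfold tFun
  have hdiv : (b * q + r) / b = q := by
    rw [Nat.mul_add_div hb, Nat.div_eq_of_lt hrb, add_zero]
  have hmod : (b * q + r) % b = r := by
    rw [Nat.mul_add_mod, Nat.mod_eq_of_lt hrb]
  rw [hdiv, hmod]
  rw [← Finset.prod_Ico_consecutive _ (by omega : 1 ≤ r) (by omega : r ≤ b)]
  have hc1 : ∀ i ∈ Finset.Ico 1 r, (q + (if i < r then 1 else 0)) - 1 = q := by
    intro i hi
    rw [Finset.mem_Ico] at hi
    simp [hi.2]
  have hc2 : ∀ i ∈ Finset.Ico r b, (q + (if i < r then 1 else 0)) - 1 = q - 1 := by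
    intro i hi
    rw [Finset.mem_Ico] at hi
    simp [show ¬ i < r by omega]
  rw [Finset.prod_congr rfl hc1, Finset.prod_congr rfl hc2,
    Finset.prod_const, Finset.prod_const, Nat.card_Ico, Nat.card_Ico]

lemma ceil_bound {b M : ℕ} (hb : 0 < b) (hM : b ≤ M) :
    (M + b - 1) / b + (b - 1) ≤ M := by
  obtain ⟨q, r, hr, hMe⟩ : ∃ q r, r < b ∧ M = b * q + r :=
    ⟨M / b, M % b, Nat.mod_lt _ hb, (Nat.div_add_mod M b).symm⟩
  subst hMe
  have hq : 1 ≤ q := by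
    rcases Nat.eq_zero_or_pos q with h0 | h0
    · subst h0; omega
    · exact h0
  rcases Nat.eq_zero_or_pos r with h0 | h0
  · subst h0
    have hceil : (b * q + 0 + b - 1) / b = q := by
      have e : b * q + 0 + b - 1 = b * q + (b - 1) := by omega
      rw [e, Nat.mul_add_div hb, Nat.div_eq_of_lt (by omega), add_zero]
    rw [hceil]
    have e1 : (b - 1) * (q - 1) + (b - 1) + (q - 1) + 1 = b * q := by
      cases b with
      | zero => omega
      | succ b' =>
        cases q with
        | zero => omega
        | succ q' => simp only [Nat.succ_sub_one]; ring
    omega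
  · have hceil : (b * q + r + b - 1) / b = q + 1 := by
      have e : b * q + r + b - 1 = b * (q + 1) + (r - 1) := by
        have : b * (q + 1) = b * q + b := by ring
        omega
      rw [e, Nat.mul_add_div hb, Nat.div_eq_of_lt (by omega)]
    rw [hceil]
    have e1 : (b - 1) * (q - 1) + (b - 1) + (q - 1) + 1 = b * q := by
      cases b with
      | zero => omega
      | succ b' =>
        cases q with
        | zero => omega
        | succ q' => simp only [Nat.succ_sub_one]; ring
    omega

lemma t_eq_g {b M : ℕ} (hb : 0 < b) (hM : b ≤ M) :
    tFun M b = gFun (M - (M + b - 1) / b - (b - 1)) (b - 1) := by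
  obtain ⟨q, r, hr, hMe⟩ : ∃ q r, r < b ∧ M = b * q + r :=
    ⟨M / b, M % b, Nat.mod_lt _ hb, (Nat.div_add_mod M b).symm⟩
  subst hMe
  have hq : 1 ≤ q := by
    rcases Nat.eq_zero_or_pos q with h0 | h0
    · subst h0; omega
    · exact h0
  rcases Nat.eq_zero_or_pos r with h0 | h0
  · subst h0
    simp only [Nat.add_zero]
    have hceil : (b * q + b - 1) / b = q := by
      have e : b * q + b - 1 = b * q + (b - 1) := by omega
      rw [e, Nat.mul_add_div hb, Nat.div_eq_of_lt (by omega), add_zero]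
    rw [hceil, tFun_formula_zero hb q]
    rcases Nat.lt_or_ge b 2 with hb1 | hb2
    · have : b = 1 := by omega
      subst this
      simp [gFun_zero_zero]
    · have hS : b * q - q - (b - 1) = (b - 1) * (q - 1) + 0 := by
        have e1 : (b - 1) * (q - 1) + (b - 1) + (q - 1) + 1 = b * q := by
          cases b with
          | zero => omega
          | succ b' =>
            cases q with
            | zero => omega
            | succ q' => simp only [Nat.succ_sub_one]; ring
        omega
      rw [hS, gFun_formula (by omega : 0 < b - 1) (q - 1) 0 (by omega)]
      simp
  · have hb2 : 2 ≤ b := by omega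
    have hceil : (b * q + r + b - 1) / b = q + 1 := by
      have e : b * q + r + b - 1 = b * (q + 1) + (r - 1) := by
        have : b * (q + 1) = b * q + b := by ring
        omega
      rw [e, Nat.mul_add_div hb, Nat.div_eq_of_lt (by omega)]
    rw [hceil, tFun_formula_pos hb h0 hr]
    have hS : b * q + r - (q + 1) - (b - 1) = (b - 1) * (q - 1) + (r - 1) := by
      have e1 : (b - 1) * (q - 1) + (b - 1) + (q - 1) + 1 = b * q := by
        cases b with
        | zero => omega
        | succ b' =>
          cases q with
          | zero => omega
          | succ q' => simp only [Nat.succ_sub_one]; ring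
      omega
    rw [hS, gFun_formula (by omega : 0 < b - 1) (q - 1) (r - 1) (by omega)]
    have e2 : q - 1 + 1 = q := by omega
    have e3 : b - 1 - (r - 1) = b - r := by omega
    rw [e2, e3, mul_comm]

lemma ceil_le {b M x : ℕ} (hb : 0 < b) (hx : x ≤ (M + b - 1) / b) :
    (M + x + (b + 1) - 1) / (b + 1) ≤ (M + b - 1) / b := by
  set c := (M + b - 1) / b with hc
  have h1 : M ≤ c * b := ceil_mul_ge hb M
  have h2 : M + x + (b + 1) - 1 = M + x + b := by omega
  rw [h2]
  have h3 : M + x + b ≤ (b + 1) * c + b := by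
    have : c * b + c = (b + 1) * c := by ring
    omega
  calc (M + x + b) / (b + 1) ≤ ((b + 1) * c + b) / (b + 1) :=
        Nat.div_le_div_right h3
  _ = c := by rw [Nat.mul_add_div (by omega), Nat.div_eq_of_lt (by omega), add_zero]

lemma directCase {b M x : ℕ} (hb : 0 < b) (hM : b + 1 ≤ M) (hx2 : 2 ≤ x)
    (hxc : x ≤ (M + b - 1) / b) :
    gFun (M - 1) b * x + tFun M b * (x - 1) ≤ fFun (M + x) (b + 1) := by
  have hpart1 : gFun (M - 1) b * x ≤ gFun (M + x - 1) (b + 1) := by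
    have h := keyLemma (k := b + 1) (x := x) (n := M + x - 1) (by omega) (by omega)
    have e1 : M + x - 1 - x = M - 1 := by omega
    have e2 : b + 1 - 1 = b := by omega
    rw [e1, e2] at h
    rw [mul_comm]
    exact h
  have hpart2 : tFun M b * (x - 1) ≤ tFun (M + x) (b + 1) := by
    set c := (M + b - 1) / b with hc
    set cN := (M + x + (b + 1) - 1) / (b + 1) with hcN
    have hcb : c + (b - 1) ≤ M := ceil_bound hb (by omega)
    have hcNc : cN ≤ c := ceil_le hb hxc
    have hL : tFun M b = gFun (M - c - (b - 1)) (b - 1) := t_eq_g hb (by omega)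
    have hR : tFun (M + x) (b + 1) = gFun (M + x - cN - b) b := by
      have h := t_eq_g (b := b + 1) (M := M + x) (by omega) (by omega)
      have e : b + 1 - 1 = b := by omega
      rw [e] at h
      exact h
    rw [hL, hR]
    have hkey := keyLemma (k := b) (x := x - 1) (n := M - c - (b - 1) + (x - 1)) hb
      (by omega)
    have e1 : M - c - (b - 1) + (x - 1) - (x - 1) = M - c - (b - 1) := by omega
    rw [e1] at hkey
    calc gFun (M - c - (b - 1)) (b - 1) * (x - 1)
        = (x - 1) * gFun (M - c - (b - 1)) (b - 1) := mul_comm _ _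
    _ ≤ gFun (M - c - (b - 1) + (x - 1)) b := hkey
    _ ≤ gFun (M + x - cN - b) b := by
        apply gFun_mono_s13 hb
        omega
  have hf : fFun (M + x) (b + 1) = gFun (M + x - 1) (b + 1) + tFun (M + x) (b + 1) := rfl
  omega

lemma stepMain {b M x : ℕ} (hb : 0 < b) (hM : b + 1 ≤ M)
    (hxc : (M + b - 1) / b + 1 ≤ x) :
    gFun (M - 1) b * x + tFun M b * (x - 1) ≤
      gFun M b * (x - 1) + tFun (M + 1) b * (x - 2) := by
  obtain ⟨q, r, hr, hMe⟩ : ∃ q r, r < b ∧ M = b * q + r :=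
    ⟨M / b, M % b, Nat.mod_lt _ hb, (Nat.div_add_mod M b).symm⟩
  subst hMe
  have hq : 1 ≤ q := by
    rcases Nat.eq_zero_or_pos q with h0 | h0
    · subst h0; omega
    · exact h0
  rcases Nat.eq_zero_or_pos r with h0 | h0
  · -- r = 0 case
    subst h0
    simp only [Nat.add_zero] at *
    have hq2 : 2 ≤ q := by
      rcases Nat.lt_or_ge q 2 with h | h
      · exfalso
        have : q = 1 := by omega
        subst this
        omega
      · exact h
    have hceil : (b * q + b - 1) / b = q := by
      have e : b * q + b - 1 = b * q + (b - 1) := by omega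
      rw [e, Nat.mul_add_div hb, Nat.div_eq_of_lt (by omega), add_zero]
    rw [hceil] at hxc
    -- values
    have hgM : gFun (b * q) b = q * q ^ (b - 1) := by
      have h := gFun_formula hb q 0 hb
      rw [Nat.add_zero] at h
      rw [h, pow_zero, mul_one]
      have e : b - 0 = (b - 1) + 1 := by omega
      rw [e, pow_succ]
      ring
    have hgM1 : gFun (b * q - 1) b = (q - 1) * q ^ (b - 1) := by
      have e : b * q - 1 = b * (q - 1) + (b - 1) := by
        have : b * (q - 1) + b = b * q := by
          cases q with
          | zero => omega
          | succ q' => simp only [Nat.succ_sub_one]; ring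
        omega
      rw [e, gFun_formula hb (q - 1) (b - 1) (by omega)]
      have e2 : b - (b - 1) = 1 := by omega
      have e3 : q - 1 + 1 = q := by omega
      rw [e2, e3, pow_one]
    have htM : tFun (b * q) b = (q - 1) ^ (b - 1) := tFun_formula_zero hb q
    have htM1 : tFun (b * q + 1) b = (q - 1) ^ (b - 1) := by
      rcases Nat.lt_or_ge b 2 with hb1 | hb2
      · have : b = 1 := by omega
        subst this
        simp [tFun]
      · have h := tFun_formula_pos (q := q) (r := 1) hb (by omega) (by omega)
        rw [h]
        simp
    rw [hgM, hgM1, htM, htM1]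
    -- arithmetic: (q-1)*B*x + T*(x-1) ≤ q*B*(x-1) + T*(x-2), x ≥ q+1, q ≥ 2
    set B := q ^ (b - 1) with hB
    set T := (q - 1) ^ (b - 1) with hT
    have hTB : T ≤ B := Nat.pow_le_pow_left (by omega) _
    obtain ⟨s, hs⟩ : ∃ s, x = q + 1 + s := ⟨x - q - 1, by omega⟩
    subst hs
    obtain ⟨v, hv⟩ : ∃ v, q = v + 2 := ⟨q - 2, by omega⟩
    subst hv
    have e1 : v + 2 + 1 + s - 1 = v + 2 + s := by omega
    have e2 : v + 2 + 1 + s - 2 = v + 1 + s := by omega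
    have e3 : v + 2 - 1 = v + 1 := by omega
    rw [e1, e2, e3]
    nlinarith [hTB]
  · -- r ≥ 1 case
    have hb2 : 2 ≤ b := by omega
    have hceil : (b * q + r + b - 1) / b = q + 1 := by
      have e : b * q + r + b - 1 = b * (q + 1) + (r - 1) := by
        have : b * (q + 1) = b * q + b := by ring
        omega
      rw [e, Nat.mul_add_div hb, Nat.div_eq_of_lt (by omega)]
    rw [hceil] at hxc
    set A := q ^ (b - r) * (q + 1) ^ (r - 1) with hA
    have hgM : gFun (b * q + r) b = (q + 1) * A := by
      rw [gFun_formula hb q r hr, hA]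
      have e : r = (r - 1) + 1 := by omega
      calc q ^ (b - r) * (q + 1) ^ r = q ^ (b - r) * (q + 1) ^ ((r - 1) + 1) := by rw [← e]
      _ = (q + 1) * (q ^ (b - r) * (q + 1) ^ (r - 1)) := by rw [pow_succ]; ring
    have hgM1 : gFun (b * q + r - 1) b = q * A := by
      have e : b * q + r - 1 = b * q + (r - 1) := by omega
      rw [e, gFun_formula hb q (r - 1) (by omega), hA]
      have e2 : b - (r - 1) = (b - r) + 1 := by omega
      rw [e2, pow_succ]
      ring
    have htM : tFun (b * q + r) b = q ^ (r - 1) * (q - 1) ^ (b - r) :=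
      tFun_formula_pos hb h0 hr
    have htM1 : tFun (b * q + r + 1) b = q ^ r * (q - 1) ^ (b - r - 1) := by
      rcases Nat.lt_or_ge (r + 1) b with h1 | h1
      · have e : b * q + r + 1 = b * q + (r + 1) := by omega
        rw [e, tFun_formula_pos hb (by omega) h1]
        have e2 : r + 1 - 1 = r := by omega
        have e3 : b - (r + 1) = b - r - 1 := by omega
        rw [e2, e3]
      · have hrb : r = b - 1 := by omega
        have e : b * q + r + 1 = b * (q + 1) := by
          have : b * (q + 1) = b * q + b := by ring
          omega
        rw [e, tFun_formula_zero hb (q + 1)]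
        have e2 : q + 1 - 1 = q := by omega
        have e3 : b - r - 1 = 0 := by omega
        have e4 : r = b - 1 := hrb
        rw [e2, e3, pow_zero, mul_one, ← e4]
    rw [hgM, hgM1, htM, htM1]
    set t1 := q ^ (r - 1) * (q - 1) ^ (b - r) with ht1
    set t2 := q ^ r * (q - 1) ^ (b - r - 1) with ht2
    have ht12 : t1 ≤ t2 := by
      have e1 : (q - 1) ^ (b - r) = (q - 1) ^ (b - r - 1) * (q - 1) := by
        rw [← pow_succ]
        congr 1
        omega
      have e2 : q ^ (r - 1) * q = q ^ r := by
        rw [← pow_succ]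
        congr 1
        omega
      calc t1 = q ^ (r - 1) * ((q - 1) ^ (b - r - 1) * (q - 1)) := by rw [ht1, e1]
      _ ≤ q ^ (r - 1) * ((q - 1) ^ (b - r - 1) * q) := by
            apply Nat.mul_le_mul_left
            apply Nat.mul_le_mul_left
            omega
      _ = (q ^ (r - 1) * q) * (q - 1) ^ (b - r - 1) := by ring
      _ = t2 := by rw [e2, ht2]
    have ht2A : t2 ≤ A := by
      have h1 : t2 ≤ q ^ r * q ^ (b - r - 1) :=
        Nat.mul_le_mul_left _ (Nat.pow_le_pow_left (by omega) _)
      have h2 : q ^ r * q ^ (b - r - 1) = q ^ (b - 1) := by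
        rw [← pow_add]
        congr 1
        omega
      have h3 : q ^ (b - r) * q ^ (r - 1) = q ^ (b - 1) := by
        rw [← pow_add]
        congr 1
        omega
      have h4 : q ^ (b - 1) ≤ A := by
        rw [hA, ← h3]
        exact Nat.mul_le_mul_left _ (Nat.pow_le_pow_left (by omega) _)
      exact le_trans (h2 ▸ h1) h4
    obtain ⟨s, hs⟩ : ∃ s, x = q + 2 + s := ⟨x - q - 2, by omega⟩
    subst hs
    have e1 : q + 2 + s - 1 = q + 1 + s := by omega
    have e2 : q + 2 + s - 2 = q + s := by omega
    rw [e1, e2]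
    calc q * A * (q + 2 + s) + t1 * (q + 1 + s)
        ≤ q * A * (q + 2 + s) + t2 * (q + 1 + s) := by
          have := Nat.mul_le_mul_right (q + 1 + s) ht12
          omega
    _ = q * A * (q + 2 + s) + t2 * (q + s) + t2 := by ring
    _ ≤ q * A * (q + 2 + s) + t2 * (q + s) + A * (s + 1) := by
          have h5 : A ≤ A * (s + 1) := Nat.le_mul_of_pos_right A (by omega)
          omega
    _ = (q + 1) * A * (q + 1 + s) + t2 * (q + s) := by ring

lemma mainAux (b : ℕ) (hb : 0 < b) : ∀ x M, b + 1 ≤ M → 2 ≤ x →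
    gFun (M - 1) b * x + tFun M b * (x - 1) ≤ fFun (M + x) (b + 1) := by
  intro x
  induction x with
  | zero => intro M _ h2; omega
  | succ x ih =>
    intro M hM hx2
    rcases le_or_gt (x + 1) ((M + b - 1) / b) with hxc | hcx
    · exact directCase hb hM hx2 hxc
    · have hc2 : 2 ≤ (M + b - 1) / b := by
        have h2b : 2 * b ≤ M + b - 1 := by omega
        exact (Nat.le_div_iff_mul_le hb).mpr h2b
      have hx3 : 2 ≤ x := by omega
      have hstep := stepMain hb hM (by omega : (M + b - 1) / b + 1 ≤ x + 1)
      have hih := ih (M + 1) (by omega) hx3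
      have e1 : M + 1 - 1 = M := by omega
      have e2 : M + 1 + x = M + (x + 1) := by omega
      have e3 : x + 1 - 1 = x := by omega
      have e4 : x + 1 - 2 = x - 1 := by omega
      rw [e1, e2] at hih
      rw [e3, e4] at hstep
      rw [e3]
      omega

/-- For all integers `n, α, n'` with `α ≥ 2`, `n' ≥ 1`, and `n − n' − 2 ≥ α − 1`, we have
`g(n − n' − 2, α − 1) + n'·f(n − n' − 1, α − 1) ≤ f(n, α)`. -/
theorem g_add_mul_f_le_f (n a n' : ℕ) (ha : 2 ≤ a) (hn' : 1 ≤ n')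
    (h : a - 1 ≤ n - n' - 2) :
    gFun (n - n' - 2) (a - 1) + n' * fFun (n - n' - 1) (a - 1) ≤ fFun n a := by
  set b := a - 1 with hbdef
  have hb : 0 < b := by omega
  set m := n - n' - 2 with hm
  have hm1 : n - n' - 1 = m + 1 := by omega
  have key := mainAux b hb (n' + 1) (m + 1) (by omega) (by omega)
  have e1 : m + 1 - 1 = m := by omega
  have e2 : n' + 1 - 1 = n' := by omega
  have e3 : m + 1 + (n' + 1) = n := by omega
  have e4 : b + 1 = a := by omega
  rw [e1, e2, e3, e4] at key
  rw [hm1]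
  have hf : fFun (m + 1) b = gFun m b + tFun (m + 1) b := by
    unfold fFun
    rw [e1]
  rw [hf]
  have hlin : gFun m b + n' * (gFun m b + tFun (m + 1) b)
      = gFun m b * (n' + 1) + tFun (m + 1) b * n' := by ring
  omega
end
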